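/- arXiv:1808.09705 — 5 statements merged into one kernel-verified Lean document; each statement's English description precedes it below -/
import Mathlib

section
/- Let s > 2. Then the subgroup H = ⟨u, ρ0, ρ2⟩ of G is core-free and has index 2s in G. -/
private def reps8 {G : Type*} [Group G] (a b : G) : Fin 8 → G
  | 0 => 1 | 1 => a | 2 => b | 3 => a*b | 4 => b*a | 5 => a*b*a | 6 => b*a*b | 7 => a*b*a*b

private def kk4 {G : Type*} [Group G] (a b : G) : Fin 4 → G
  | 0 => 1 | 1 => b | 2 => a*b*a | 3 => a*b*a*b

private def sig1 : Fin 8 → Fin 8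
  | 0 => 1 | 1 => 0 | 2 => 3 | 3 => 2 | 4 => 5 | 5 => 4 | 6 => 7 | 7 => 6

private def sig2 : Fin 8 → Fin 8
  | 0 => 2 | 1 => 4 | 2 => 0 | 3 => 6 | 4 => 1 | 5 => 7 | 6 => 3 | 7 => 5

private def sig5 : Fin 8 → Fin 8
  | 0 => 5 | 1 => 3 | 2 => 7 | 3 => 1 | 4 => 6 | 5 => 0 | 6 => 4 | 7 => 2

private def mk48 : Fin 4 → Fin 8
  | 0 => 0 | 1 => 2 | 2 => 5 | 3 => 7

private def tau2 : Fin 4 → Fin 4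
  | 0 => 1 | 1 => 0 | 2 => 3 | 3 => 2

private def tau5 : Fin 4 → Fin 4
  | 0 => 2 | 1 => 3 | 2 => 0 | 3 => 1

private def tfun {G : Type*} [Group G] (s : ℕ) (u v : G) (r8 : Fin 8 → G)
    (p : ZMod s × ZMod s × Fin 8) : G :=
  u ^ ((p.1.val : ℤ)) * (v ^ ((p.2.1.val : ℤ)) * r8 p.2.2)

private lemma zpow_zmod_val {G : Type*} [Group G] {s : ℕ} [NeZero s] {x : G}
    (hx : x ^ s = 1) (i : ℤ) : x ^ i = x ^ ((((i : ZMod s)).val : ℤ)) := by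
  have h1 : ((((i : ZMod s)).val : ℤ) : ZMod s) = (i : ZMod s) := by
    rw [Int.cast_natCast, ZMod.natCast_val, ZMod.cast_id]
  have h2 : (s:ℤ) ∣ (i - (((i : ZMod s)).val : ℤ)) := by
    rw [← ZMod.intCast_zmod_eq_zero_iff_dvd, Int.cast_sub, h1, sub_self]
  obtain ⟨k, hk⟩ := h2
  have hi : i = (((i : ZMod s)).val : ℤ) + s * k := by linarith
  calc x ^ i = x ^ ((((i : ZMod s)).val : ℤ) + s * k) := by rw [← hi]
    _ = x ^ ((((i : ZMod s)).val : ℤ)) := by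
        have hxs : x ^ (s:ℤ) = 1 := by rw [zpow_natCast, hx]
        rw [zpow_add, zpow_mul, hxs, one_zpow, mul_one]

private lemma zpow_eq_of_zmod_eq {G : Type*} [Group G] {s : ℕ} [NeZero s] {x : G}
    (hx : x ^ s = 1) {i j : ℤ} (h : (i : ZMod s) = (j : ZMod s)) : x ^ i = x ^ j := by
  rw [zpow_zmod_val hx i, zpow_zmod_val hx j, h]

theorem stmt8 (s : ℕ) (hs : 2 < s)
    (G : Type*) [Group G] [Finite G] (ρ0 ρ1 ρ2 : G)
    (hgen : Subgroup.closure {ρ0, ρ1, ρ2} = ⊤)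
    (hr0 : ρ0 ^ 2 = 1) (hr1 : ρ1 ^ 2 = 1) (hr2 : ρ2 ^ 2 = 1)
    (h01 : (ρ0 * ρ1) ^ 4 = 1) (h12 : (ρ1 * ρ2) ^ 4 = 1) (h02 : (ρ0 * ρ2) ^ 2 = 1)
    (hmap : (ρ0 * ρ1 * ρ2 * ρ1) ^ s = 1)
    (hG : Nat.card G = 8 * s ^ 2)
    (u v : G) (hu : u = ρ0 * ρ1 * ρ2 * ρ1) (hv : v = ρ1 * u * ρ1)
    : (Subgroup.closure {u, ρ0, ρ2}).normalCore = ⊥ ∧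
      (Subgroup.closure {u, ρ0, ρ2}).index = 2 * s := by
  haveI : NeZero s := ⟨by omega⟩
  -- involutions
  have i0 : ρ0 * ρ0 = 1 := by rw [← sq]; exact hr0
  have i1 : ρ1 * ρ1 = 1 := by rw [← sq]; exact hr1
  have i2 : ρ2 * ρ2 = 1 := by rw [← sq]; exact hr2
  have n0 : ρ0⁻¹ = ρ0 := inv_eq_of_mul_eq_one_right i0
  have n1 : ρ1⁻¹ = ρ1 := inv_eq_of_mul_eq_one_right i1
  have n2 : ρ2⁻¹ = ρ2 := inv_eq_of_mul_eq_one_right i2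
  have m0 : ∀ x : G, ρ0 * (ρ0 * x) = x := fun x => by rw [← mul_assoc, i0, one_mul]
  have m1 : ∀ x : G, ρ1 * (ρ1 * x) = x := fun x => by rw [← mul_assoc, i1, one_mul]
  have m2 : ∀ x : G, ρ2 * (ρ2 * x) = x := fun x => by rw [← mul_assoc, i2, one_mul]
  -- ρ0 and ρ2 commute
  have c02 : ρ2 * ρ0 = ρ0 * ρ2 := by
    have h : ρ0 * ρ2 * (ρ0 * ρ2) = 1 := by rw [← sq]; exact h02
    calc ρ2 * ρ0 = (ρ0 * ρ2)⁻¹ := by rw [mul_inv_rev, n0, n2]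
      _ = ρ0 * ρ2 := by rw [inv_eq_of_mul_eq_one_right h]
  have w02 : ∀ x : G, ρ2 * (ρ0 * x) = ρ0 * (ρ2 * x) := fun x => by
    rw [← mul_assoc, c02, mul_assoc]
  -- dihedral square identities
  have hsq12 : ρ2 * ρ1 * ρ2 * ρ1 = ρ1 * ρ2 * ρ1 * ρ2 := by
    have h : ρ1 * ρ2 * ρ1 * ρ2 * (ρ1 * ρ2 * ρ1 * ρ2) = 1 := by
      have := h12
      calc ρ1 * ρ2 * ρ1 * ρ2 * (ρ1 * ρ2 * ρ1 * ρ2) = (ρ1 * ρ2) ^ 4 := by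
            simp [pow_succ, mul_assoc]
        _ = 1 := h12
    calc ρ2 * ρ1 * ρ2 * ρ1 = (ρ1 * ρ2 * ρ1 * ρ2)⁻¹ := by
          simp [mul_inv_rev, n1, n2, mul_assoc]
      _ = ρ1 * ρ2 * ρ1 * ρ2 := by rw [inv_eq_of_mul_eq_one_right h]
  have hsq01 : ρ1 * ρ0 * ρ1 * ρ0 = ρ0 * ρ1 * ρ0 * ρ1 := by
    have h : ρ0 * ρ1 * ρ0 * ρ1 * (ρ0 * ρ1 * ρ0 * ρ1) = 1 := by
      calc ρ0 * ρ1 * ρ0 * ρ1 * (ρ0 * ρ1 * ρ0 * ρ1) = (ρ0 * ρ1) ^ 4 := by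
            simp [pow_succ, mul_assoc]
        _ = 1 := h01
    calc ρ1 * ρ0 * ρ1 * ρ0 = (ρ0 * ρ1 * ρ0 * ρ1)⁻¹ := by
          simp [mul_inv_rev, n1, n0, mul_assoc]
      _ = ρ0 * ρ1 * ρ0 * ρ1 := by rw [inv_eq_of_mul_eq_one_right h]
  have w12 : ∀ x : G, ρ2 * (ρ1 * (ρ2 * (ρ1 * x))) = ρ1 * (ρ2 * (ρ1 * (ρ2 * x))) := fun x => by
    simp only [← mul_assoc]; rw [hsq12]
  have w01 : ∀ x : G, ρ1 * (ρ0 * (ρ1 * (ρ0 * x))) = ρ0 * (ρ1 * (ρ0 * (ρ1 * x))) := fun x => by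
    simp only [← mul_assoc]; rw [hsq01]
  have e12 : ρ2 * (ρ1 * (ρ2 * ρ1)) = ρ1 * (ρ2 * (ρ1 * ρ2)) := by
    simp only [← mul_assoc]; rw [hsq12]
  have e01 : ρ1 * (ρ0 * (ρ1 * ρ0)) = ρ0 * (ρ1 * (ρ0 * ρ1)) := by
    simp only [← mul_assoc]; rw [hsq01]
  -- u, v words
  have hu4 : u = ρ0 * (ρ1 * (ρ2 * ρ1)) := by rw [hu]; simp [mul_assoc]
  have hui : u⁻¹ = ρ1 * (ρ2 * (ρ1 * ρ0)) := by
    rw [hu4]; simp [mul_inv_rev, n0, n1, n2, mul_assoc]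
  have hv4 : v = ρ1 * (ρ0 * (ρ1 * ρ2)) := by rw [hv, hu]; simp [mul_assoc, i1]
  have hvi : v⁻¹ = ρ2 * (ρ1 * (ρ0 * ρ1)) := by
    rw [hv4]; simp [mul_inv_rev, n0, n1, n2, mul_assoc]
  -- conjugation relations
  have s1u : ρ1 * u = v * ρ1 := by rw [hv]; simp [mul_assoc, i1]
  have s1v : ρ1 * v = u * ρ1 := by rw [hv]; simp [mul_assoc, i1, m1]
  have s2u : ρ2 * u = u * ρ2 := by rw [hu4]; simp [mul_assoc, w02, e12, c02]
  have s2v : ρ2 * v = v⁻¹ * ρ2 := by rw [hvi, hv4]; simp [mul_assoc]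
  have s0u : ρ0 * u = u⁻¹ * ρ0 := by rw [hui, hu4]; simp [mul_assoc, m0, i0]
  have s0v : ρ0 * v = v * ρ0 := by
    rw [hv4]; simp only [← mul_assoc]; rw [← hsq01]
    rw [mul_assoc (ρ1*ρ0*ρ1) ρ0 ρ2, ← c02, ← mul_assoc]
  have cuv : u * v = v * u := by
    rw [hu4, hv4]
    simp only [mul_assoc]
    simp [w02, w12, w01, m0, m1, m2, i0, i1, i2, c02, e12, e01, mul_assoc]
  -- orders
  have hus : u ^ s = 1 := by rw [hu]; exact hmap
  have hvs : v ^ s = 1 := by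
    have : v = ρ1 * u * ρ1⁻¹ := by rw [n1]; exact hv
    rw [this, conj_pow, hus, mul_one, mul_inv_cancel]
  -- zpow movement lemmas
  have S1u : SemiconjBy ρ1 u v := s1u
  have S1v : SemiconjBy ρ1 v u := s1v
  have S2u : SemiconjBy ρ2 u u := s2u
  have S2v : SemiconjBy ρ2 v v⁻¹ := s2v
  have S0u : SemiconjBy ρ0 u u⁻¹ := s0u
  have S0v : SemiconjBy ρ0 v v := s0v
  have Cuv : Commute u v := cuv
  have p1u : ∀ (i : ℤ) (x : G), ρ1 * (u ^ i * x) = v ^ i * (ρ1 * x) := fun i x => by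
    rw [← mul_assoc, (S1u.zpow_right i).eq, mul_assoc]
  have p1v : ∀ (i : ℤ) (x : G), ρ1 * (v ^ i * x) = u ^ i * (ρ1 * x) := fun i x => by
    rw [← mul_assoc, (S1v.zpow_right i).eq, mul_assoc]
  have p2u : ∀ (i : ℤ) (x : G), ρ2 * (u ^ i * x) = u ^ i * (ρ2 * x) := fun i x => by
    rw [← mul_assoc, (S2u.zpow_right i).eq, mul_assoc]
  have p2v : ∀ (i : ℤ) (x : G), ρ2 * (v ^ i * x) = v ^ (-i) * (ρ2 * x) := fun i x => by
    rw [← mul_assoc, (S2v.zpow_right i).eq, inv_zpow, ← zpow_neg,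
      mul_assoc]
  have p0u : ∀ (i : ℤ) (x : G), ρ0 * (u ^ i * x) = u ^ (-i) * (ρ0 * x) := fun i x => by
    rw [← mul_assoc, (S0u.zpow_right i).eq, inv_zpow, ← zpow_neg,
      mul_assoc]
  have p0v : ∀ (i : ℤ) (x : G), ρ0 * (v ^ i * x) = v ^ i * (ρ0 * x) := fun i x => by
    rw [← mul_assoc, (S0v.zpow_right i).eq, mul_assoc]
  have pvu : ∀ (i j : ℤ) (x : G), v ^ j * (u ^ i * x) = u ^ i * (v ^ j * x) := fun i j x => by
    rw [← mul_assoc, ((Cuv.symm).zpow_zpow j i).eq, mul_assoc]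
  have puu : ∀ (i j : ℤ) (x : G), u ^ i * (u ^ j * x) = u ^ (i + j) * x := fun i j x => by
    rw [← mul_assoc, ← zpow_add]
  have pvv : ∀ (i j : ℤ) (x : G), v ^ i * (v ^ j * x) = v ^ (i + j) * x := fun i j x => by
    rw [← mul_assoc, ← zpow_add]
  -- tables
  have T1 : ∀ r : Fin 8, ρ1 * reps8 ρ1 ρ2 r = reps8 ρ1 ρ2 (sig1 r) := by
    intro r; fin_cases r <;>
      simp [reps8, sig1, sig2, sig5, mul_assoc, m1, m2, i1, i2, w12, e12]
  have T2 : ∀ r : Fin 8, ρ2 * reps8 ρ1 ρ2 r = reps8 ρ1 ρ2 (sig2 r) := by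
    intro r; fin_cases r <;>
      simp [reps8, sig1, sig2, sig5, mul_assoc, m1, m2, i1, i2, w12, e12]
  have T0 : ∀ r : Fin 8, ρ0 * reps8 ρ1 ρ2 r = u * reps8 ρ1 ρ2 (sig5 r) := by
    have e : ρ0 = u * (ρ1 * (ρ2 * ρ1)) := by
      rw [hu4]; simp [mul_assoc, m1, m2, i1, i2]
    intro r; rw [e, mul_assoc]; congr 1; fin_cases r <;>
      simp [reps8, sig1, sig2, sig5, mul_assoc, m1, m2, i1, i2, w12, e12]
  have pvu1 : ∀ (j : ℤ) (x : G), v ^ j * (u * x) = u * (v ^ j * x) := fun j x => by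
    have h := pvu 1 j x; simpa using h
  have pu1 : ∀ (i : ℤ) (x : G), u ^ i * (u * x) = u ^ (i + 1) * x := fun i x => by
    have h := puu i 1 x; simpa using h
  have hstep : ∀ x ∈ ({ρ0, ρ1, ρ2} : Set G), ∀ (i j : ℤ) (r : Fin 8),
      ∃ (i' j' : ℤ) (r' : Fin 8), x * (u ^ i * (v ^ j * reps8 ρ1 ρ2 r)) = u ^ i' * (v ^ j' * reps8 ρ1 ρ2 r') := by
    rintro x (rfl | rfl | rfl) i j r
    · exact ⟨-i + 1, j, sig5 r, by rw [p0u, p0v, T0, pvu1, pu1]⟩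
    · exact ⟨j, i, sig1 r, by rw [p1u, p1v, T1, pvu]⟩
    · exact ⟨i, -j, sig2 r, by rw [p2u, p2v, T2]⟩
  have hsurj : ∀ x : G, ∃ (i j : ℤ) (r : Fin 8), x = u ^ i * (v ^ j * reps8 ρ1 ρ2 r) := by
    intro x
    have hx : x ∈ Subgroup.closure ({ρ0, ρ1, ρ2} : Set G) := by rw [hgen]; trivial
    induction hx using Subgroup.closure_induction_left with
    | one => exact ⟨0, 0, 0, by simp [reps8]⟩
    | mul_left z hz y hy ih =>
      obtain ⟨i, j, r, hy'⟩ := ih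
      obtain ⟨i', j', r', he⟩ := hstep z hz i j r
      exact ⟨i', j', r', by rw [hy', he]⟩
    | inv_mul_cancel z hz y hy ih =>
      have hzi : z⁻¹ = z := by
        rcases hz with rfl | rfl | rfl
        · exact n0
        · exact n1
        · exact n2
      obtain ⟨i, j, r, hy'⟩ := ih
      obtain ⟨i', j', r', he⟩ := hstep z hz i j r
      exact ⟨i', j', r', by rw [hzi, hy', he]⟩
  have hFsurj : Function.Surjective (tfun s u v (reps8 ρ1 ρ2)) := by
    intro x
    obtain ⟨i, j, r, hx⟩ := hsurj x
    refine ⟨((i : ZMod s), (j : ZMod s), r), ?_⟩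
    rw [hx]; simp only [tfun]
    rw [zpow_zmod_val hus i, zpow_zmod_val hvs j]
  have hcard8 : Nat.card (ZMod s × ZMod s × Fin 8) = Nat.card G := by
    rw [hG, Nat.card_prod, Nat.card_prod, Nat.card_zmod,
      Nat.card_eq_fintype_card, Fintype.card_fin]
    ring
  have hFbij : Function.Bijective (tfun s u v (reps8 ρ1 ρ2)) :=
    (Nat.bijective_iff_surjective_and_card _).mpr ⟨hFsurj, hcard8⟩
  have hD : ∀ (i j i' j' : ℤ) (r r' : Fin 8),
      u ^ i * (v ^ j * reps8 ρ1 ρ2 r) = u ^ i' * (v ^ j' * reps8 ρ1 ρ2 r') →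
      (i : ZMod s) = (i' : ZMod s) ∧ (j : ZMod s) = (j' : ZMod s) ∧ r = r' := by
    intro i j i' j' r r' h
    have h2 : tfun s u v (reps8 ρ1 ρ2) ((i : ZMod s), (j : ZMod s), r)
        = tfun s u v (reps8 ρ1 ρ2) ((i' : ZMod s), (j' : ZMod s), r') := by
      simp only [tfun]
      rw [← zpow_zmod_val hus i, ← zpow_zmod_val hvs j, ← zpow_zmod_val hus i',
        ← zpow_zmod_val hvs j']
      exact h
    have h3 := hFbij.injective h2
    simp only [Prod.mk.injEq] at h3
    exact h3
  -- the subgroup H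
  set H := Subgroup.closure ({u, ρ0, ρ2} : Set G) with hH
  have hu_mem : u ∈ H := Subgroup.subset_closure (by simp)
  have hρ0_mem : ρ0 ∈ H := Subgroup.subset_closure (by simp)
  have hρ2_mem : ρ2 ∈ H := Subgroup.subset_closure (by simp)
  have hkr : ∀ c : Fin 4, kk4 ρ1 ρ2 c = reps8 ρ1 ρ2 (mk48 c) := by
    intro c; fin_cases c <;> rfl
  have hρ0u : ρ0 = u * (ρ1 * (ρ2 * ρ1)) := by
    rw [hu4]; simp [mul_assoc, m1, m2, i1, i2]
  have e2 : ρ1 * ρ2 * ρ1 = u⁻¹ * ρ0 := by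
    rw [hui]; simp [mul_assoc, m0, i0]
  have e3 : ρ1 * ρ2 * ρ1 * ρ2 = u⁻¹ * ρ0 * ρ2 := by rw [e2]
  have hkmem : ∀ c : Fin 4, kk4 ρ1 ρ2 c ∈ H := by
    intro c; fin_cases c
    · exact one_mem _
    · exact hρ2_mem
    · show ρ1 * ρ2 * ρ1 ∈ H
      rw [e2]; exact mul_mem (inv_mem hu_mem) hρ0_mem
    · show ρ1 * ρ2 * ρ1 * ρ2 ∈ H
      rw [e3]; exact mul_mem (mul_mem (inv_mem hu_mem) hρ0_mem) hρ2_mem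
  have K2 : ∀ c : Fin 4, ρ2 * kk4 ρ1 ρ2 c = kk4 ρ1 ρ2 (tau2 c) := by
    intro c; fin_cases c <;>
      simp [kk4, tau2, mul_assoc, m1, m2, i1, i2, w12, e12]
  have K5 : ∀ c : Fin 4, (ρ1 * (ρ2 * ρ1)) * kk4 ρ1 ρ2 c = kk4 ρ1 ρ2 (tau5 c) := by
    intro c; fin_cases c <;>
      simp [kk4, tau5, mul_assoc, m1, m2, i1, i2, w12, e12]
  have K0 : ∀ c : Fin 4, ρ0 * kk4 ρ1 ρ2 c = u * kk4 ρ1 ρ2 (tau5 c) := by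
    intro c; rw [hρ0u, mul_assoc, K5]
  have pu1l : ∀ (i : ℤ) (x : G), u * (u ^ i * x) = u ^ (1 + i) * x := fun i x => by
    have h := puu 1 i x; simpa using h
  have pum1l : ∀ (i : ℤ) (x : G), u⁻¹ * (u ^ i * x) = u ^ (-1 + i) * x := fun i x => by
    have h := puu (-1) i x; simpa using h
  have hHstep : ∀ x ∈ ({u, ρ0, ρ2} : Set G), ∀ (i : ℤ) (c : Fin 4),
      ∃ (i' : ℤ) (c' : Fin 4), x * (u ^ i * kk4 ρ1 ρ2 c) = u ^ i' * kk4 ρ1 ρ2 c' := by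
    rintro x (rfl | rfl | rfl) i c
    · exact ⟨1 + i, c, by rw [pu1l]⟩
    · exact ⟨-i + 1, tau5 c, by rw [p0u, K0, pu1]⟩
    · exact ⟨i, tau2 c, by rw [p2u, K2]⟩
  have hHform : ∀ x ∈ H, ∃ (i : ℤ) (c : Fin 4), x = u ^ i * kk4 ρ1 ρ2 c := by
    intro x hx
    rw [hH] at hx
    induction hx using Subgroup.closure_induction_left with
    | one => exact ⟨0, 0, by simp [kk4]⟩
    | mul_left z hz y hy ih =>
      obtain ⟨i, c, hy'⟩ := ih
      obtain ⟨i', c', he⟩ := hHstep z hz i c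
      exact ⟨i', c', by rw [hy', he]⟩
    | inv_mul_cancel z hz y hy ih =>
      obtain ⟨i, c, hy'⟩ := ih
      rcases hz with rfl | rfl | rfl
      · exact ⟨-1 + i, c, by rw [hy', pum1l]⟩
      · obtain ⟨i', c', he⟩ := hHstep z (by simp) i c
        exact ⟨i', c', by rw [n0, hy', he]⟩
      · obtain ⟨i', c', he⟩ := hHstep z (by simp) i c
        exact ⟨i', c', by rw [n2, hy', he]⟩
  -- cardinality of H
  have hmkinj : ∀ c c' : Fin 4, mk48 c = mk48 c' → c = c' := by decide
  have hφbij : Function.Bijective (fun p : ZMod s × Fin 4 =>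
      (⟨u ^ (p.1.val : ℤ) * kk4 ρ1 ρ2 p.2,
        mul_mem (zpow_mem hu_mem _) (hkmem p.2)⟩ : H)) := by
    constructor
    · intro p q h
      have h' : u ^ (p.1.val : ℤ) * kk4 ρ1 ρ2 p.2 = u ^ (q.1.val : ℤ) * kk4 ρ1 ρ2 q.2 :=
        Subtype.ext_iff.mp h
      rw [hkr, hkr] at h'
      have h'' : u ^ (p.1.val : ℤ) * (v ^ (0:ℤ) * reps8 ρ1 ρ2 (mk48 p.2))
          = u ^ (q.1.val : ℤ) * (v ^ (0:ℤ) * reps8 ρ1 ρ2 (mk48 q.2)) := by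
        simpa using h'
      obtain ⟨ha, _, hc⟩ := hD _ _ _ _ _ _ h''
      have ha' : p.1 = q.1 := by
        rwa [Int.cast_natCast, Int.cast_natCast, ZMod.natCast_val, ZMod.natCast_val,
          ZMod.cast_id, ZMod.cast_id] at ha
      exact Prod.ext ha' (hmkinj _ _ hc)
    · rintro ⟨x, hx⟩
      obtain ⟨i, c, hxe⟩ := hHform x hx
      refine ⟨((i : ZMod s), c), Subtype.ext ?_⟩
      show u ^ (((i : ZMod s)).val : ℤ) * kk4 ρ1 ρ2 c = x
      rw [← zpow_zmod_val hus i, hxe]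
  have hcardH : Nat.card H = s * 4 := by
    rw [← Nat.card_eq_of_bijective _ hφbij, Nat.card_prod, Nat.card_zmod,
      Nat.card_eq_fintype_card, Fintype.card_fin]
  have hindex : H.index = 2 * s := by
    have hm := Subgroup.card_mul_index H
    rw [hcardH, hG] at hm
    have h4 : 0 < s * 4 := by omega
    refine Nat.eq_of_mul_eq_mul_left h4 ?_
    rw [hm]; ring
  have hvpart : ∀ (a b : ℤ) (r : Fin 8),
      u ^ a * (v ^ b * reps8 ρ1 ρ2 r) ∈ H → (b : ZMod s) = 0 := by
    intro a b r hmem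
    obtain ⟨i, c, he⟩ := hHform _ hmem
    rw [hkr] at he
    have he' : u ^ a * (v ^ b * reps8 ρ1 ρ2 r)
        = u ^ i * (v ^ (0:ℤ) * reps8 ρ1 ρ2 (mk48 c)) := by simpa using he
    obtain ⟨_, hb, _⟩ := hD _ _ _ _ _ _ he'
    simpa using hb
  -- contradiction helpers
  have hv2 : ∀ b : ℤ, v ^ b ∈ H → (b : ZMod s) = 0 := by
    intro b hb
    refine hvpart 0 b 0 ?_
    rw [show u ^ (0:ℤ) * (v ^ b * reps8 ρ1 ρ2 0) = v ^ b from by simp [reps8]]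
    exact hb
  have hs2 : ((2:ℤ) : ZMod s) = 0 → False := by
    intro h
    rw [ZMod.intCast_zmod_eq_zero_iff_dvd] at h
    have := Int.le_of_dvd (by norm_num) h
    omega
  have hNn : (H.normalCore).Normal := Subgroup.normalCore_normal H
  have i7 : (ρ1*ρ2*ρ1*ρ2) * (ρ1*ρ2*ρ1*ρ2) = 1 := by
    simp [mul_assoc, w12, m1, m2, i1, i2, e12]
  have n7 : (ρ1*ρ2*ρ1*ρ2)⁻¹ = ρ1*ρ2*ρ1*ρ2 := inv_eq_of_mul_eq_one_right i7
  -- semiconj of r7 with v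
  have S7v : SemiconjBy (ρ1*ρ2*ρ1*ρ2) v v⁻¹ := by
    have A : SemiconjBy ρ2 v v⁻¹ := S2v
    have B : SemiconjBy ρ1 v⁻¹ u⁻¹ := S1v.inv_right
    have C : SemiconjBy ρ2 u⁻¹ u⁻¹ := S2u.inv_right
    have D : SemiconjBy ρ1 u⁻¹ v⁻¹ := S1u.inv_right
    have E : SemiconjBy (ρ1*ρ2) v u⁻¹ := B.mul_left A
    have F : SemiconjBy (ρ1*ρ2) u⁻¹ v⁻¹ := D.mul_left C
    have h := (F.mul_left E).eq
    show (ρ1*ρ2*ρ1*ρ2) * v = v⁻¹ * (ρ1*ρ2*ρ1*ρ2)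
    simp only [mul_assoc] at h ⊢
    exact h
  have r7vinv : (ρ1*ρ2*ρ1*ρ2) * v⁻¹ = v * (ρ1*ρ2*ρ1*ρ2) := by
    have h := S7v.inv_right.eq
    rwa [inv_inv] at h
  -- ρ2 is not in the normal core
  have hρ2core : ρ2 ∈ H.normalCore → False := by
    intro h2N
    have conj2 : v * ρ2 * v⁻¹ ∈ H.normalCore := hNn.conj_mem _ h2N v
    have helt : (v * ρ2 * v⁻¹) * ρ2 ∈ H := Subgroup.normalCore_le H (mul_mem conj2 h2N)
    have hρ2vinv : ρ2 * v⁻¹ = v * ρ2 := by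
      have h := S2v.inv_right.eq
      rwa [inv_inv] at h
    have heq : (v * ρ2 * v⁻¹) * ρ2 = v ^ (2:ℤ) := by
      rw [mul_assoc v ρ2 v⁻¹, hρ2vinv]
      rw [show v * (v * ρ2) * ρ2 = v * (v * (ρ2 * ρ2)) from by simp [mul_assoc], i2, mul_one]
      rw [show (2:ℤ) = 1 + 1 from rfl, zpow_add, zpow_one]
    rw [heq] at helt
    exact hs2 (hv2 2 helt)
  constructor
  · -- normal core is trivial
    rw [Subgroup.eq_bot_iff_forall]
    intro x hxN
    have hxH : x ∈ H := Subgroup.normalCore_le H hxN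
    obtain ⟨i, c, hxe⟩ := hHform x hxH
    have conj1 : ρ1 * x * ρ1⁻¹ ∈ H := Subgroup.normalCore_le H (hNn.conj_mem x hxN ρ1)
    fin_cases c
    · -- x = u^i
      have heq : ρ1 * x * ρ1⁻¹ = u ^ (0:ℤ) * (v ^ i * reps8 ρ1 ρ2 0) := by
        rw [hxe, n1]
        show ρ1 * (u ^ i * 1) * ρ1 = _
        simp [reps8, mul_assoc, p1u, i1]
      rw [heq] at conj1
      have hi0 : (i : ZMod s) = 0 := by simpa using hvpart 0 i 0 conj1
      have hu0 : u ^ i = u ^ (0:ℤ) := zpow_eq_of_zmod_eq hus (by simpa using hi0)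
      rw [hxe]
      show u ^ i * 1 = 1
      rw [hu0]; simp
    · -- x = u^i * ρ2
      have heq : ρ1 * x * ρ1⁻¹ = u ^ (0:ℤ) * (v ^ i * reps8 ρ1 ρ2 5) := by
        rw [hxe, n1]
        show ρ1 * (u ^ i * ρ2) * ρ1 = _
        simp [reps8, mul_assoc, p1u, i1]
      rw [heq] at conj1
      have hi0 : (i : ZMod s) = 0 := by simpa using hvpart 0 i 5 conj1
      have hu0 : u ^ i = u ^ (0:ℤ) := zpow_eq_of_zmod_eq hus (by simpa using hi0)
      have hx2 : x = ρ2 := by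
        rw [hxe]
        show u ^ i * ρ2 = ρ2
        rw [hu0]; simp
      exact (hρ2core (hx2 ▸ hxN)).elim
    · -- x = u^i * (ρ1*ρ2*ρ1)
      have heq : ρ1 * x * ρ1⁻¹ = u ^ (0:ℤ) * (v ^ i * reps8 ρ1 ρ2 2) := by
        rw [hxe, n1]
        show ρ1 * (u ^ i * (ρ1*ρ2*ρ1)) * ρ1 = _
        simp [reps8, mul_assoc, p1u, m1, m2, i1, i2]
      rw [heq] at conj1
      have hi0 : (i : ZMod s) = 0 := by simpa using hvpart 0 i 2 conj1
      have hu0 : u ^ i = u ^ (0:ℤ) := zpow_eq_of_zmod_eq hus (by simpa using hi0)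
      have hx2 : x = ρ1*ρ2*ρ1 := by
        rw [hxe]
        show u ^ i * (ρ1*ρ2*ρ1) = ρ1*ρ2*ρ1
        rw [hu0]; simp
      -- then ρ2 = ρ1 * x * ρ1⁻¹ is in the core
      have hconjN : ρ1 * x * ρ1⁻¹ ∈ H.normalCore := hNn.conj_mem x hxN ρ1
      have hc2 : ρ1 * x * ρ1⁻¹ = ρ2 := by
        rw [hx2, n1]; simp [mul_assoc, m1, m2, i1, i2]
      rw [hc2] at hconjN
      exact (hρ2core hconjN).elim
    · -- x = u^i * (ρ1*ρ2*ρ1*ρ2)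
      have A1 : ρ1 * x * ρ1⁻¹ = v ^ i * (ρ1*ρ2*ρ1*ρ2) := by
        rw [hxe, n1]
        show ρ1 * (u ^ i * (ρ1*ρ2*ρ1*ρ2)) * ρ1 = _
        simp [mul_assoc, p1u, m1, m2, i1, i2, e12, w12]
      have A2 : x⁻¹ = (ρ1*ρ2*ρ1*ρ2) * u ^ (-i) := by
        rw [hxe]
        show (u ^ i * (ρ1*ρ2*ρ1*ρ2))⁻¹ = _
        rw [mul_inv_rev, n7, zpow_neg]
      have heltH : (ρ1 * x * ρ1⁻¹) * x⁻¹ ∈ H :=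
        Subgroup.normalCore_le H (mul_mem (hNn.conj_mem x hxN ρ1) (inv_mem hxN))
      have A3 : (ρ1 * x * ρ1⁻¹) * x⁻¹ = u ^ (-i) * (v ^ i * reps8 ρ1 ρ2 0) := by
        rw [A1, A2]
        have hr : (v ^ i * (ρ1*ρ2*ρ1*ρ2)) * ((ρ1*ρ2*ρ1*ρ2) * u ^ (-i))
            = v ^ i * u ^ (-i) := by
          rw [mul_assoc (v ^ i) (ρ1*ρ2*ρ1*ρ2) ((ρ1*ρ2*ρ1*ρ2) * u ^ (-i)),
            ← mul_assoc (ρ1*ρ2*ρ1*ρ2) (ρ1*ρ2*ρ1*ρ2) (u ^ (-i)), i7, one_mul]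
        rw [hr, ((Cuv.symm).zpow_zpow i (-i)).eq]
        simp [reps8]
      rw [A3] at heltH
      have hi0 : (i : ZMod s) = 0 := by simpa using hvpart (-i) i 0 heltH
      have hu0 : u ^ i = u ^ (0:ℤ) := zpow_eq_of_zmod_eq hus (by simpa using hi0)
      have hx2 : x = ρ1*ρ2*ρ1*ρ2 := by
        rw [hxe]
        show u ^ i * (ρ1*ρ2*ρ1*ρ2) = ρ1*ρ2*ρ1*ρ2
        rw [hu0]; simp
      -- conjugate by v and contradict
      have hxN' : (ρ1*ρ2*ρ1*ρ2) ∈ H.normalCore := hx2 ▸ hxN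
      have conj2 : v * (ρ1*ρ2*ρ1*ρ2) * v⁻¹ ∈ H.normalCore := hNn.conj_mem _ hxN' v
      have helt : (v * (ρ1*ρ2*ρ1*ρ2) * v⁻¹) * (ρ1*ρ2*ρ1*ρ2) ∈ H :=
        Subgroup.normalCore_le H (mul_mem conj2 hxN')
      have heq2 : (v * (ρ1*ρ2*ρ1*ρ2) * v⁻¹) * (ρ1*ρ2*ρ1*ρ2) = v ^ (2:ℤ) := by
        rw [mul_assoc v (ρ1*ρ2*ρ1*ρ2) v⁻¹, r7vinv]
        rw [mul_assoc v (v * (ρ1*ρ2*ρ1*ρ2)) (ρ1*ρ2*ρ1*ρ2),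
          mul_assoc v (ρ1*ρ2*ρ1*ρ2) (ρ1*ρ2*ρ1*ρ2), i7, mul_one]
        rw [show (2:ℤ) = 1 + 1 from rfl, zpow_add, zpow_one]
      rw [heq2] at helt
      exact (hs2 (hv2 2 helt)).elim
  · exact hindex
end

section
/- Let s > 1 and suppose G acts faithfully and transitively on a finite set X of size n. If the translation subgroup T = ⟨g, h⟩ has exactly two orbits on X, then n = 2s². -/
set_option linter.unusedVariables false

theorem word_gh {G : Type*} [Group G] {a b c : G} (ra : ∀ x : G, a * (a * x) = x) (rb : ∀ x : G, b * (b * x) = x) (rc : ∀ x : G, c * (c * x) = x) (rac : ∀ x : G, a * (c * x) = c * (a * x)) (rabab : ∀ x : G, a * (b * (a * (b * x))) = b * (a * (b * (a * x)))) (rbcbc : ∀ x : G, b * (c * (b * (c * x))) = c * (b * (c * (b * x)))) :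
    (a * (b * (c * (a * (b * (c * (a * (a * (b * (c * (a * (b * (c * (a * (1)))))))))))))) : G) = a * (a * (b * (c * (a * (b * (c * (a * (a * (b * (c * (a * (b * (c * (1)))))))))))))) := by
  conv_lhs => rw [ra (b * (c * (a * (b * (c * (a * (1))))))), ← rac (1), rbcbc (a * (b * (a * (c * (1))))), rac (b * (c * (b * (a * (b * (a * (c * (1)))))))), ← rabab (c * (1)), ← rac (b * (a * (b * (c * (1))))), rc (a * (b * (a * (c * (b * (a * (b * (c * (1))))))))), ← rabab (c * (b * (a * (b * (c * (1)))))), ← rc (b * (c * (b * (a * (b * (c * (1))))))), ← rbcbc (a * (b * (c * (1)))), rac (b * (c * (b * (c * (a * (b * (c * (1)))))))), ← ra (b * (c * (a * (b * (c * (1))))))]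

theorem word_t1g {G : Type*} [Group G] {a b c : G} (ra : ∀ x : G, a * (a * x) = x) (rb : ∀ x : G, b * (b * x) = x) (rc : ∀ x : G, c * (c * x) = x) (rac : ∀ x : G, a * (c * x) = c * (a * x)) (rabab : ∀ x : G, a * (b * (a * (b * x))) = b * (a * (b * (a * x)))) (rbcbc : ∀ x : G, b * (c * (b * (c * x))) = c * (b * (c * (b * x)))) :
    (a * (b * (c * (b * (a * (b * (c * (a * (b * (c * (1)))))))))) : G) = a * (b * (c * (a * (b * (c * (a * (b * (c * (b * (1)))))))))) := by
  conv_lhs => rw [← rac (b * (c * (1))), ← rabab (c * (b * (c * (1)))), rbcbc (1), rac (b * (c * (b * (1))))]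

theorem word_t1h {G : Type*} [Group G] {a b c : G} (ra : ∀ x : G, a * (a * x) = x) (rb : ∀ x : G, b * (b * x) = x) (rc : ∀ x : G, c * (c * x) = x) (rac : ∀ x : G, a * (c * x) = c * (a * x)) (rabab : ∀ x : G, a * (b * (a * (b * x))) = b * (a * (b * (a * x)))) (rbcbc : ∀ x : G, b * (c * (b * (c * x))) = c * (b * (c * (b * x)))) :
    (a * (b * (c * (b * (a * (a * (b * (c * (a * (b * (c * (a * (1)))))))))))) : G) = a * (a * (b * (c * (a * (b * (c * (a * (a * (b * (c * (b * (1)))))))))))) := by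
  conv_lhs => rw [ra (b * (c * (a * (b * (c * (a * (1))))))), rb (c * (a * (b * (c * (a * (1)))))), rc (a * (b * (c * (a * (1))))), ← rac (1), ← rabab (c * (1)), ← rc (b * (c * (1))), ← rb (1), ← rbcbc (b * (1)), rac (b * (c * (b * (c * (b * (1)))))), ← ra (b * (c * (b * (1))))]

theorem word_t1sq {G : Type*} [Group G] {a b c : G} (ra : ∀ x : G, a * (a * x) = x) (rb : ∀ x : G, b * (b * x) = x) (rc : ∀ x : G, c * (c * x) = x) (rac : ∀ x : G, a * (c * x) = c * (a * x)) (rabab : ∀ x : G, a * (b * (a * (b * x))) = b * (a * (b * (a * x)))) (rbcbc : ∀ x : G, b * (c * (b * (c * x))) = c * (b * (c * (b * x)))) :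
    (a * (b * (c * (b * (a * (b * (c * (b * (1)))))))) : G) = a * (b * (c * (a * (b * (c * (a * (c * (b * (a * (c * (b * (a * (a * (1)))))))))))))) := by
  conv_lhs => rw [← ra (b * (a * (b * (c * (b * (1)))))), ← ra (1), rabab (c * (b * (a * (a * (1))))), ← rc (a * (b * (a * (c * (b * (a * (a * (1)))))))), ← rac (b * (a * (c * (b * (a * (a * (1)))))))]

theorem word_bt1b {G : Type*} [Group G] {a b c : G} (ra : ∀ x : G, a * (a * x) = x) (rb : ∀ x : G, b * (b * x) = x) (rc : ∀ x : G, c * (c * x) = x) (rac : ∀ x : G, a * (c * x) = c * (a * x)) (rabab : ∀ x : G, a * (b * (a * (b * x))) = b * (a * (b * (a * x)))) (rbcbc : ∀ x : G, b * (c * (b * (c * x))) = c * (b * (c * (b * x)))) :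
    (b * (a * (b * (c * (b * (b * (1)))))) : G) = a * (b * (c * (a * (b * (c * (b * (c * (b * (a * (1)))))))))) := by
  conv_lhs => rw [← ra (b * (a * (b * (c * (b * (b * (1))))))), rabab (c * (b * (b * (1)))), ← rc (b * (a * (c * (b * (b * (1)))))), rac (b * (b * (1))), ← rb (a * (b * (b * (1)))), ← rbcbc (b * (a * (b * (b * (1))))), rac (b * (c * (b * (c * (b * (a * (b * (b * (1))))))))), rb (1)]

theorem word_ct1c {G : Type*} [Group G] {a b c : G} (ra : ∀ x : G, a * (a * x) = x) (rb : ∀ x : G, b * (b * x) = x) (rc : ∀ x : G, c * (c * x) = x) (rac : ∀ x : G, a * (c * x) = c * (a * x)) (rabab : ∀ x : G, a * (b * (a * (b * x))) = b * (a * (b * (a * x)))) (rbcbc : ∀ x : G, b * (c * (b * (c * x))) = c * (b * (c * (b * x)))) :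
    (c * (a * (b * (c * (b * (c * (1)))))) : G) = a * (b * (c * (b * (1)))) := by
  conv_lhs => rw [← rac (b * (c * (b * (c * (1))))), rbcbc (1), rc (b * (c * (b * (1))))]

theorem word_at1a {G : Type*} [Group G] {a b c : G} (ra : ∀ x : G, a * (a * x) = x) (rb : ∀ x : G, b * (b * x) = x) (rc : ∀ x : G, c * (c * x) = x) (rac : ∀ x : G, a * (c * x) = c * (a * x)) (rabab : ∀ x : G, a * (b * (a * (b * x))) = b * (a * (b * (a * x)))) (rbcbc : ∀ x : G, b * (c * (b * (c * x))) = c * (b * (c * (b * x)))) :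
    (a * (a * (b * (c * (b * (a * (1)))))) : G) = b * (c * (b * (a * (1)))) := by
  conv_lhs => rw [ra (b * (c * (b * (a * (1)))))]

theorem word_bgb {G : Type*} [Group G] {a b c : G} (ra : ∀ x : G, a * (a * x) = x) (rb : ∀ x : G, b * (b * x) = x) (rc : ∀ x : G, c * (c * x) = x) (rac : ∀ x : G, a * (c * x) = c * (a * x)) (rabab : ∀ x : G, a * (b * (a * (b * x))) = b * (a * (b * (a * x)))) (rbcbc : ∀ x : G, b * (c * (b * (c * x))) = c * (b * (c * (b * x)))) :
    (b * (a * (b * (c * (a * (b * (c * (b * (1)))))))) : G) = a * (b * (c * (a * (b * (c * (1)))))) := by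
  conv_lhs => rw [← rac (b * (c * (b * (1)))), ← rabab (c * (b * (c * (b * (1))))), rbcbc (b * (1)), rac (b * (c * (b * (b * (1))))), rb (1)]

theorem word_bhb {G : Type*} [Group G] {a b c : G} (ra : ∀ x : G, a * (a * x) = x) (rb : ∀ x : G, b * (b * x) = x) (rc : ∀ x : G, c * (c * x) = x) (rac : ∀ x : G, a * (c * x) = c * (a * x)) (rabab : ∀ x : G, a * (b * (a * (b * x))) = b * (a * (b * (a * x)))) (rbcbc : ∀ x : G, b * (c * (b * (c * x))) = c * (b * (c * (b * x)))) :
    (b * (a * (a * (b * (c * (a * (b * (c * (a * (b * (1)))))))))) : G) = a * (c * (b * (a * (c * (b * (a * (a * (1)))))))) := by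
  conv_lhs => rw [ra (b * (c * (a * (b * (c * (a * (b * (1)))))))), ← ra (1), rb (c * (a * (b * (c * (a * (b * (a * (a * (1))))))))), ← rac (b * (a * (a * (1)))), ← rac (b * (a * (c * (b * (a * (a * (1)))))))]

theorem word_cgc {G : Type*} [Group G] {a b c : G} (ra : ∀ x : G, a * (a * x) = x) (rb : ∀ x : G, b * (b * x) = x) (rc : ∀ x : G, c * (c * x) = x) (rac : ∀ x : G, a * (c * x) = c * (a * x)) (rabab : ∀ x : G, a * (b * (a * (b * x))) = b * (a * (b * (a * x)))) (rbcbc : ∀ x : G, b * (c * (b * (c * x))) = c * (b * (c * (b * x)))) :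
    (c * (a * (b * (c * (a * (b * (c * (c * (1)))))))) : G) = a * (c * (b * (a * (c * (b * (a * (a * (1)))))))) := by
  conv_lhs => rw [← rac (b * (c * (a * (b * (c * (c * (1))))))), ← rac (b * (c * (c * (1)))), rc (1), ← ra (1)]

theorem word_chc {G : Type*} [Group G] {a b c : G} (ra : ∀ x : G, a * (a * x) = x) (rb : ∀ x : G, b * (b * x) = x) (rc : ∀ x : G, c * (c * x) = x) (rac : ∀ x : G, a * (c * x) = c * (a * x)) (rabab : ∀ x : G, a * (b * (a * (b * x))) = b * (a * (b * (a * x)))) (rbcbc : ∀ x : G, b * (c * (b * (c * x))) = c * (b * (c * (b * x)))) :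
    (c * (a * (a * (b * (c * (a * (b * (c * (a * (c * (1)))))))))) : G) = c * (b * (a * (c * (b * (a * (1)))))) := by
  conv_lhs => rw [rac (1), ← rac (b * (c * (c * (a * (1))))), rc (a * (1)), ra (b * (a * (c * (b * (a * (1))))))]

theorem word_aw0 {G : Type*} [Group G] {a b c : G} (ra : ∀ x : G, a * (a * x) = x) (rb : ∀ x : G, b * (b * x) = x) (rc : ∀ x : G, c * (c * x) = x) (rac : ∀ x : G, a * (c * x) = c * (a * x)) (rabab : ∀ x : G, a * (b * (a * (b * x))) = b * (a * (b * (a * x)))) (rbcbc : ∀ x : G, b * (c * (b * (c * x))) = c * (b * (c * (b * x)))) :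
    (a * (1) : G) = a * (b * (c * (b * (b * (c * (b * (1))))))) := by
  conv_lhs => rw [← rb (1), ← rc (b * (1)), ← rb (c * (b * (1)))]

theorem word_bw0 {G : Type*} [Group G] {a b c : G} (ra : ∀ x : G, a * (a * x) = x) (rb : ∀ x : G, b * (b * x) = x) (rc : ∀ x : G, c * (c * x) = x) (rac : ∀ x : G, a * (c * x) = c * (a * x)) (rabab : ∀ x : G, a * (b * (a * (b * x))) = b * (a * (b * (a * x)))) (rbcbc : ∀ x : G, b * (c * (b * (c * x))) = c * (b * (c * (b * x)))) :
    (b * (1) : G) = b * (1) := by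
  rfl

theorem word_cw0 {G : Type*} [Group G] {a b c : G} (ra : ∀ x : G, a * (a * x) = x) (rb : ∀ x : G, b * (b * x) = x) (rc : ∀ x : G, c * (c * x) = x) (rac : ∀ x : G, a * (c * x) = c * (a * x)) (rabab : ∀ x : G, a * (b * (a * (b * x))) = b * (a * (b * (a * x)))) (rbcbc : ∀ x : G, b * (c * (b * (c * x))) = c * (b * (c * (b * x)))) :
    (c * (1) : G) = c * (1) := by
  rfl

theorem word_aw1 {G : Type*} [Group G] {a b c : G} (ra : ∀ x : G, a * (a * x) = x) (rb : ∀ x : G, b * (b * x) = x) (rc : ∀ x : G, c * (c * x) = x) (rac : ∀ x : G, a * (c * x) = c * (a * x)) (rabab : ∀ x : G, a * (b * (a * (b * x))) = b * (a * (b * (a * x)))) (rbcbc : ∀ x : G, b * (c * (b * (c * x))) = c * (b * (c * (b * x)))) :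
    (a * (b * (1)) : G) = a * (b * (c * (b * (b * (c * (1)))))) := by
  conv_lhs => rw [← rc (1), ← rb (c * (1))]

theorem word_bw1 {G : Type*} [Group G] {a b c : G} (ra : ∀ x : G, a * (a * x) = x) (rb : ∀ x : G, b * (b * x) = x) (rc : ∀ x : G, c * (c * x) = x) (rac : ∀ x : G, a * (c * x) = c * (a * x)) (rabab : ∀ x : G, a * (b * (a * (b * x))) = b * (a * (b * (a * x)))) (rbcbc : ∀ x : G, b * (c * (b * (c * x))) = c * (b * (c * (b * x)))) :
    (b * (b * (1)) : G) = 1 := by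
  conv_lhs => rw [rb (1)]

theorem word_cw1 {G : Type*} [Group G] {a b c : G} (ra : ∀ x : G, a * (a * x) = x) (rb : ∀ x : G, b * (b * x) = x) (rc : ∀ x : G, c * (c * x) = x) (rac : ∀ x : G, a * (c * x) = c * (a * x)) (rabab : ∀ x : G, a * (b * (a * (b * x))) = b * (a * (b * (a * x)))) (rbcbc : ∀ x : G, b * (c * (b * (c * x))) = c * (b * (c * (b * x)))) :
    (c * (b * (1)) : G) = c * (b * (1)) := by
  rfl

theorem word_aw2 {G : Type*} [Group G] {a b c : G} (ra : ∀ x : G, a * (a * x) = x) (rb : ∀ x : G, b * (b * x) = x) (rc : ∀ x : G, c * (c * x) = x) (rac : ∀ x : G, a * (c * x) = c * (a * x)) (rabab : ∀ x : G, a * (b * (a * (b * x))) = b * (a * (b * (a * x)))) (rbcbc : ∀ x : G, b * (c * (b * (c * x))) = c * (b * (c * (b * x)))) :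
    (a * (c * (1)) : G) = a * (b * (c * (b * (b * (c * (b * (c * (1)))))))) := by
  conv_lhs => rw [← rb (c * (1)), ← rc (b * (c * (1))), ← rb (c * (b * (c * (1))))]

theorem word_bw2 {G : Type*} [Group G] {a b c : G} (ra : ∀ x : G, a * (a * x) = x) (rb : ∀ x : G, b * (b * x) = x) (rc : ∀ x : G, c * (c * x) = x) (rac : ∀ x : G, a * (c * x) = c * (a * x)) (rabab : ∀ x : G, a * (b * (a * (b * x))) = b * (a * (b * (a * x)))) (rbcbc : ∀ x : G, b * (c * (b * (c * x))) = c * (b * (c * (b * x)))) :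
    (b * (c * (1)) : G) = b * (c * (1)) := by
  rfl

theorem word_cw2 {G : Type*} [Group G] {a b c : G} (ra : ∀ x : G, a * (a * x) = x) (rb : ∀ x : G, b * (b * x) = x) (rc : ∀ x : G, c * (c * x) = x) (rac : ∀ x : G, a * (c * x) = c * (a * x)) (rabab : ∀ x : G, a * (b * (a * (b * x))) = b * (a * (b * (a * x)))) (rbcbc : ∀ x : G, b * (c * (b * (c * x))) = c * (b * (c * (b * x)))) :
    (c * (c * (1)) : G) = 1 := by
  conv_lhs => rw [rc (1)]

theorem word_aw3 {G : Type*} [Group G] {a b c : G} (ra : ∀ x : G, a * (a * x) = x) (rb : ∀ x : G, b * (b * x) = x) (rc : ∀ x : G, c * (c * x) = x) (rac : ∀ x : G, a * (c * x) = c * (a * x)) (rabab : ∀ x : G, a * (b * (a * (b * x))) = b * (a * (b * (a * x)))) (rbcbc : ∀ x : G, b * (c * (b * (c * x))) = c * (b * (c * (b * x)))) :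
    (a * (b * (c * (1))) : G) = a * (b * (c * (b * (b * (1))))) := by
  conv_lhs => rw [← rb (1)]

theorem word_bw3 {G : Type*} [Group G] {a b c : G} (ra : ∀ x : G, a * (a * x) = x) (rb : ∀ x : G, b * (b * x) = x) (rc : ∀ x : G, c * (c * x) = x) (rac : ∀ x : G, a * (c * x) = c * (a * x)) (rabab : ∀ x : G, a * (b * (a * (b * x))) = b * (a * (b * (a * x)))) (rbcbc : ∀ x : G, b * (c * (b * (c * x))) = c * (b * (c * (b * x)))) :
    (b * (b * (c * (1))) : G) = c * (1) := by
  conv_lhs => rw [rb (c * (1))]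

theorem word_cw3 {G : Type*} [Group G] {a b c : G} (ra : ∀ x : G, a * (a * x) = x) (rb : ∀ x : G, b * (b * x) = x) (rc : ∀ x : G, c * (c * x) = x) (rac : ∀ x : G, a * (c * x) = c * (a * x)) (rabab : ∀ x : G, a * (b * (a * (b * x))) = b * (a * (b * (a * x)))) (rbcbc : ∀ x : G, b * (c * (b * (c * x))) = c * (b * (c * (b * x)))) :
    (c * (b * (c * (1))) : G) = c * (b * (c * (1))) := by
  rfl

theorem word_aw4 {G : Type*} [Group G] {a b c : G} (ra : ∀ x : G, a * (a * x) = x) (rb : ∀ x : G, b * (b * x) = x) (rc : ∀ x : G, c * (c * x) = x) (rac : ∀ x : G, a * (c * x) = c * (a * x)) (rabab : ∀ x : G, a * (b * (a * (b * x))) = b * (a * (b * (a * x)))) (rbcbc : ∀ x : G, b * (c * (b * (c * x))) = c * (b * (c * (b * x)))) :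
    (a * (c * (b * (1))) : G) = a * (b * (c * (b * (c * (b * (c * (1))))))) := by
  conv_lhs => rw [← rb (c * (b * (1))), ← rc (b * (c * (b * (1)))), ← rbcbc (1)]

theorem word_bw4 {G : Type*} [Group G] {a b c : G} (ra : ∀ x : G, a * (a * x) = x) (rb : ∀ x : G, b * (b * x) = x) (rc : ∀ x : G, c * (c * x) = x) (rac : ∀ x : G, a * (c * x) = c * (a * x)) (rabab : ∀ x : G, a * (b * (a * (b * x))) = b * (a * (b * (a * x)))) (rbcbc : ∀ x : G, b * (c * (b * (c * x))) = c * (b * (c * (b * x)))) :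
    (b * (c * (b * (1))) : G) = b * (c * (b * (1))) := by
  rfl

theorem word_cw4 {G : Type*} [Group G] {a b c : G} (ra : ∀ x : G, a * (a * x) = x) (rb : ∀ x : G, b * (b * x) = x) (rc : ∀ x : G, c * (c * x) = x) (rac : ∀ x : G, a * (c * x) = c * (a * x)) (rabab : ∀ x : G, a * (b * (a * (b * x))) = b * (a * (b * (a * x)))) (rbcbc : ∀ x : G, b * (c * (b * (c * x))) = c * (b * (c * (b * x)))) :
    (c * (c * (b * (1))) : G) = b * (1) := by
  conv_lhs => rw [rc (b * (1))]

theorem word_aw5 {G : Type*} [Group G] {a b c : G} (ra : ∀ x : G, a * (a * x) = x) (rb : ∀ x : G, b * (b * x) = x) (rc : ∀ x : G, c * (c * x) = x) (rac : ∀ x : G, a * (c * x) = c * (a * x)) (rabab : ∀ x : G, a * (b * (a * (b * x))) = b * (a * (b * (a * x)))) (rbcbc : ∀ x : G, b * (c * (b * (c * x))) = c * (b * (c * (b * x)))) :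
    (a * (b * (c * (b * (1)))) : G) = a * (b * (c * (b * (1)))) := by
  rfl

theorem word_bw5 {G : Type*} [Group G] {a b c : G} (ra : ∀ x : G, a * (a * x) = x) (rb : ∀ x : G, b * (b * x) = x) (rc : ∀ x : G, c * (c * x) = x) (rac : ∀ x : G, a * (c * x) = c * (a * x)) (rabab : ∀ x : G, a * (b * (a * (b * x))) = b * (a * (b * (a * x)))) (rbcbc : ∀ x : G, b * (c * (b * (c * x))) = c * (b * (c * (b * x)))) :
    (b * (b * (c * (b * (1)))) : G) = c * (b * (1)) := by
  conv_lhs => rw [rb (c * (b * (1)))]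

theorem word_cw5 {G : Type*} [Group G] {a b c : G} (ra : ∀ x : G, a * (a * x) = x) (rb : ∀ x : G, b * (b * x) = x) (rc : ∀ x : G, c * (c * x) = x) (rac : ∀ x : G, a * (c * x) = c * (a * x)) (rabab : ∀ x : G, a * (b * (a * (b * x))) = b * (a * (b * (a * x)))) (rbcbc : ∀ x : G, b * (c * (b * (c * x))) = c * (b * (c * (b * x)))) :
    (c * (b * (c * (b * (1)))) : G) = b * (c * (b * (c * (1)))) := by
  conv_lhs => rw [← rbcbc (1)]

theorem word_aw6 {G : Type*} [Group G] {a b c : G} (ra : ∀ x : G, a * (a * x) = x) (rb : ∀ x : G, b * (b * x) = x) (rc : ∀ x : G, c * (c * x) = x) (rac : ∀ x : G, a * (c * x) = c * (a * x)) (rabab : ∀ x : G, a * (b * (a * (b * x))) = b * (a * (b * (a * x)))) (rbcbc : ∀ x : G, b * (c * (b * (c * x))) = c * (b * (c * (b * x)))) :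
    (a * (c * (b * (c * (1)))) : G) = a * (b * (c * (b * (c * (b * (1)))))) := by
  conv_lhs => rw [← rb (1), ← rbcbc (b * (1))]

theorem word_bw6 {G : Type*} [Group G] {a b c : G} (ra : ∀ x : G, a * (a * x) = x) (rb : ∀ x : G, b * (b * x) = x) (rc : ∀ x : G, c * (c * x) = x) (rac : ∀ x : G, a * (c * x) = c * (a * x)) (rabab : ∀ x : G, a * (b * (a * (b * x))) = b * (a * (b * (a * x)))) (rbcbc : ∀ x : G, b * (c * (b * (c * x))) = c * (b * (c * (b * x)))) :
    (b * (c * (b * (c * (1)))) : G) = b * (c * (b * (c * (1)))) := by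
  rfl

theorem word_cw6 {G : Type*} [Group G] {a b c : G} (ra : ∀ x : G, a * (a * x) = x) (rb : ∀ x : G, b * (b * x) = x) (rc : ∀ x : G, c * (c * x) = x) (rac : ∀ x : G, a * (c * x) = c * (a * x)) (rabab : ∀ x : G, a * (b * (a * (b * x))) = b * (a * (b * (a * x)))) (rbcbc : ∀ x : G, b * (c * (b * (c * x))) = c * (b * (c * (b * x)))) :
    (c * (c * (b * (c * (1)))) : G) = b * (c * (1)) := by
  conv_lhs => rw [rc (b * (c * (1)))]

theorem word_aw7 {G : Type*} [Group G] {a b c : G} (ra : ∀ x : G, a * (a * x) = x) (rb : ∀ x : G, b * (b * x) = x) (rc : ∀ x : G, c * (c * x) = x) (rac : ∀ x : G, a * (c * x) = c * (a * x)) (rabab : ∀ x : G, a * (b * (a * (b * x))) = b * (a * (b * (a * x)))) (rbcbc : ∀ x : G, b * (c * (b * (c * x))) = c * (b * (c * (b * x)))) :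
    (a * (b * (c * (b * (c * (1))))) : G) = a * (b * (c * (b * (c * (1))))) := by
  rfl

theorem word_bw7 {G : Type*} [Group G] {a b c : G} (ra : ∀ x : G, a * (a * x) = x) (rb : ∀ x : G, b * (b * x) = x) (rc : ∀ x : G, c * (c * x) = x) (rac : ∀ x : G, a * (c * x) = c * (a * x)) (rabab : ∀ x : G, a * (b * (a * (b * x))) = b * (a * (b * (a * x)))) (rbcbc : ∀ x : G, b * (c * (b * (c * x))) = c * (b * (c * (b * x)))) :
    (b * (b * (c * (b * (c * (1))))) : G) = c * (b * (c * (1))) := by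
  conv_lhs => rw [rb (c * (b * (c * (1))))]

theorem word_cw7 {G : Type*} [Group G] {a b c : G} (ra : ∀ x : G, a * (a * x) = x) (rb : ∀ x : G, b * (b * x) = x) (rc : ∀ x : G, c * (c * x) = x) (rac : ∀ x : G, a * (c * x) = c * (a * x)) (rabab : ∀ x : G, a * (b * (a * (b * x))) = b * (a * (b * (a * x)))) (rbcbc : ∀ x : G, b * (c * (b * (c * x))) = c * (b * (c * (b * x)))) :
    (c * (b * (c * (b * (c * (1))))) : G) = b * (c * (b * (1))) := by
  conv_lhs => rw [rbcbc (1), rc (b * (c * (b * (1))))]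
private theorem conjpow {G : Type*} [Group G] (u x : G) (huu : u * u = 1) :
    ∀ n : ℕ, u * x ^ n * u = (u * x * u) ^ n := by
  intro n
  induction n with
  | zero => simpa using huu
  | succ k ih =>
    rw [pow_succ, pow_succ, ← ih]
    have hu1 : u * (u * (x ^ k)) = x ^ k := by rw [← mul_assoc, huu, one_mul]
    calc u * (x ^ k * x) * u = (u * x ^ k * u) * (u * (x * u)) := by
          rw [show (u * x ^ k * u) * (u * (x * u)) = u * (x ^ k * ((u*u) * (x * u))) from by group,
            huu, one_mul]; group
    _ = u * x ^ k * u * (u * x * u) := by group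
private def wv8 {G : Type*} [Group G] (x1 x2 : G) : Fin 8 → G := fun k =>
  match k.val with
  | 0 => 1
  | 1 => x1
  | 2 => x2
  | 3 => x1*x2
  | 4 => x2*x1
  | 5 => x1*x2*x1
  | 6 => x2*x1*x2
  | _ => x1*x2*x1*x2

example {G : Type*} [Group G] (x1 x2 : G) : wv8 x1 x2 5 = x1*x2*x1 := rfl
set_option maxHeartbeats 2000000 in
theorem stmt10 (s : ℕ) (hs : 1 < s)
    (G : Type*) [Group G] [Finite G] (ρ0 ρ1 ρ2 : G)
    (hgen : Subgroup.closure {ρ0, ρ1, ρ2} = ⊤)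
    (hr0 : ρ0 ^ 2 = 1) (hr1 : ρ1 ^ 2 = 1) (hr2 : ρ2 ^ 2 = 1)
    (h01 : (ρ0 * ρ1) ^ 4 = 1) (h12 : (ρ1 * ρ2) ^ 4 = 1) (h02 : (ρ0 * ρ2) ^ 2 = 1)
    (hmap : (ρ0 * ρ1 * ρ2) ^ (2 * s) = 1)
    (hG : Nat.card G = 16 * s ^ 2)
    (g h : G) (hgdef : g = (ρ0 * ρ1 * ρ2) ^ 2) (hhdef : h = ρ0 * g * ρ0)
    (T : Subgroup G) (hT : T = Subgroup.closure {g, h})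
    (X : Type*) [Finite X] [MulAction G X]
    (hfaith : ∀ a : G, (∀ x : X, a • x = x) → a = 1)
    (htrans : ∀ x y : X, ∃ a : G, a • x = y)
    (n : ℕ) (hn : Nat.card X = n)
    (horb : Nat.card (MulAction.orbitRel.Quotient T X) = 2) :
    n = 2 * s ^ 2 := by
  have s0 : 0 < s := lt_trans Nat.zero_lt_one hs
  -- square relations
  have sq0 : ρ0 * ρ0 = 1 := by rw [← pow_two]; exact hr0
  have sq1 : ρ1 * ρ1 = 1 := by rw [← pow_two]; exact hr1
  have sq2 : ρ2 * ρ2 = 1 := by rw [← pow_two]; exact hr2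
  have inv0 : ρ0⁻¹ = ρ0 := by rw [inv_eq_iff_mul_eq_one]; exact sq0
  have inv1 : ρ1⁻¹ = ρ1 := by rw [inv_eq_iff_mul_eq_one]; exact sq1
  have inv2 : ρ2⁻¹ = ρ2 := by rw [inv_eq_iff_mul_eq_one]; exact sq2
  have ra : ∀ x : G, ρ0 * (ρ0 * x) = x := fun x => by rw [← mul_assoc, sq0, one_mul]
  have rb : ∀ x : G, ρ1 * (ρ1 * x) = x := fun x => by rw [← mul_assoc, sq1, one_mul]
  have rc : ∀ x : G, ρ2 * (ρ2 * x) = x := fun x => by rw [← mul_assoc, sq2, one_mul]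
  have e02 : ρ0 * ρ2 = ρ2 * ρ0 := by
    have h' : (ρ0 * ρ2) * (ρ0 * ρ2) = 1 := by rw [← pow_two]; exact h02
    have := eq_inv_of_mul_eq_one_left h'
    rw [this, mul_inv_rev, inv0, inv2]
  have rac : ∀ x : G, ρ0 * (ρ2 * x) = ρ2 * (ρ0 * x) := fun x => by
    rw [← mul_assoc, e02, mul_assoc]
  have e01 : (ρ0 * ρ1) * (ρ0 * ρ1) = (ρ1 * ρ0) * (ρ1 * ρ0) := by
    have i1 : ((ρ0 * ρ1) ^ 2) * ((ρ0 * ρ1) ^ 2) = 1 := by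
      rw [← pow_add]; norm_num; exact h01
    have e2a := eq_inv_of_mul_eq_one_left i1
    have : (ρ0 * ρ1) ^ 2 = ((ρ0 * ρ1)⁻¹) ^ 2 := by rw [e2a, inv_pow]
    rw [mul_inv_rev, inv0, inv1] at this
    rw [← pow_two, ← pow_two (ρ1 * ρ0)]; exact this
  have rabab : ∀ x : G, ρ0 * (ρ1 * (ρ0 * (ρ1 * x))) = ρ1 * (ρ0 * (ρ1 * (ρ0 * x))) := by
    intro x
    calc ρ0 * (ρ1 * (ρ0 * (ρ1 * x))) = ((ρ0 * ρ1) * (ρ0 * ρ1)) * x := by group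
    _ = ((ρ1 * ρ0) * (ρ1 * ρ0)) * x := by rw [e01]
    _ = ρ1 * (ρ0 * (ρ1 * (ρ0 * x))) := by group
  have e12 : (ρ1 * ρ2) * (ρ1 * ρ2) = (ρ2 * ρ1) * (ρ2 * ρ1) := by
    have i1 : ((ρ1 * ρ2) ^ 2) * ((ρ1 * ρ2) ^ 2) = 1 := by
      rw [← pow_add]; norm_num; exact h12
    have e2a := eq_inv_of_mul_eq_one_left i1
    have : (ρ1 * ρ2) ^ 2 = ((ρ1 * ρ2)⁻¹) ^ 2 := by rw [e2a, inv_pow]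
    rw [mul_inv_rev, inv1, inv2] at this
    rw [← pow_two, ← pow_two (ρ2 * ρ1)]; exact this
  have rbcbc : ∀ x : G, ρ1 * (ρ2 * (ρ1 * (ρ2 * x))) = ρ2 * (ρ1 * (ρ2 * (ρ1 * x))) := by
    intro x
    calc ρ1 * (ρ2 * (ρ1 * (ρ2 * x))) = ((ρ1 * ρ2) * (ρ1 * ρ2)) * x := by group
    _ = ((ρ2 * ρ1) * (ρ2 * ρ1)) * x := by rw [e12]
    _ = ρ2 * (ρ1 * (ρ2 * (ρ1 * x))) := by group
  set t1 : G := ρ0 * (ρ1 * (ρ2 * (ρ1 * 1))) with ht1def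
  have egh : g * h = h * g := by
    have W := word_gh ra rb rc rac rabab rbcbc
    simp only [hgdef, hhdef, ht1def, pow_two, mul_assoc, one_mul, mul_one, mul_inv_rev, inv_one, inv0, inv1, inv2] at W ⊢
    try exact W
  have et1g : t1 * g = g * t1 := by
    have W := word_t1g ra rb rc rac rabab rbcbc
    simp only [hgdef, hhdef, ht1def, pow_two, mul_assoc, one_mul, mul_one, mul_inv_rev, inv_one, inv0, inv1, inv2] at W ⊢
    try exact W
  have et1h : t1 * h = h * t1 := by
    have W := word_t1h ra rb rc rac rabab rbcbc
    simp only [hgdef, hhdef, ht1def, pow_two, mul_assoc, one_mul, mul_one, mul_inv_rev, inv_one, inv0, inv1, inv2] at W ⊢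
    try exact W
  have et1sq : t1 * t1 = g * h⁻¹ := by
    have W := word_t1sq ra rb rc rac rabab rbcbc
    simp only [hgdef, hhdef, ht1def, pow_two, mul_assoc, one_mul, mul_one, mul_inv_rev, inv_one, inv0, inv1, inv2] at W ⊢
    try exact W
  have ebt1b : ρ1 * t1 * ρ1 = g * t1⁻¹ := by
    have W := word_bt1b ra rb rc rac rabab rbcbc
    simp only [hgdef, hhdef, ht1def, pow_two, mul_assoc, one_mul, mul_one, mul_inv_rev, inv_one, inv0, inv1, inv2] at W ⊢
    try exact W
  have ect1c : ρ2 * t1 * ρ2 = t1 := by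
    have W := word_ct1c ra rb rc rac rabab rbcbc
    simp only [hgdef, hhdef, ht1def, pow_two, mul_assoc, one_mul, mul_one, mul_inv_rev, inv_one, inv0, inv1, inv2] at W ⊢
    try exact W
  have eat1a : ρ0 * t1 * ρ0 = t1⁻¹ := by
    have W := word_at1a ra rb rc rac rabab rbcbc
    simp only [hgdef, hhdef, ht1def, pow_two, mul_assoc, one_mul, mul_one, mul_inv_rev, inv_one, inv0, inv1, inv2] at W ⊢
    try exact W
  have ebgb : ρ1 * g * ρ1 = g := by
    have W := word_bgb ra rb rc rac rabab rbcbc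
    simp only [hgdef, hhdef, ht1def, pow_two, mul_assoc, one_mul, mul_one, mul_inv_rev, inv_one, inv0, inv1, inv2] at W ⊢
    try exact W
  have ebhb : ρ1 * h * ρ1 = h⁻¹ := by
    have W := word_bhb ra rb rc rac rabab rbcbc
    simp only [hgdef, hhdef, ht1def, pow_two, mul_assoc, one_mul, mul_one, mul_inv_rev, inv_one, inv0, inv1, inv2] at W ⊢
    try exact W
  have ecgc : ρ2 * g * ρ2 = h⁻¹ := by
    have W := word_cgc ra rb rc rac rabab rbcbc
    simp only [hgdef, hhdef, ht1def, pow_two, mul_assoc, one_mul, mul_one, mul_inv_rev, inv_one, inv0, inv1, inv2] at W ⊢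
    try exact W
  have echc : ρ2 * h * ρ2 = g⁻¹ := by
    have W := word_chc ra rb rc rac rabab rbcbc
    simp only [hgdef, hhdef, ht1def, pow_two, mul_assoc, one_mul, mul_one, mul_inv_rev, inv_one, inv0, inv1, inv2] at W ⊢
    try exact W
  have eaw0 : ρ0 * ((1:G)) = t1 * (ρ1*ρ2*ρ1) := by
    have W := word_aw0 ra rb rc rac rabab rbcbc
    simp only [hgdef, hhdef, ht1def, pow_two, mul_assoc, one_mul, mul_one, mul_inv_rev, inv_one, inv0, inv1, inv2] at W ⊢
    try exact W
  have eaw1 : ρ0 * (ρ1) = t1 * (ρ1*ρ2) := by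
    have W := word_aw1 ra rb rc rac rabab rbcbc
    simp only [hgdef, hhdef, ht1def, pow_two, mul_assoc, one_mul, mul_one, mul_inv_rev, inv_one, inv0, inv1, inv2] at W ⊢
    try exact W
  have eaw2 : ρ0 * (ρ2) = t1 * (ρ1*ρ2*ρ1*ρ2) := by
    have W := word_aw2 ra rb rc rac rabab rbcbc
    simp only [hgdef, hhdef, ht1def, pow_two, mul_assoc, one_mul, mul_one, mul_inv_rev, inv_one, inv0, inv1, inv2] at W ⊢
    try exact W
  have eaw3 : ρ0 * (ρ1*ρ2) = t1 * (ρ1) := by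
    have W := word_aw3 ra rb rc rac rabab rbcbc
    simp only [hgdef, hhdef, ht1def, pow_two, mul_assoc, one_mul, mul_one, mul_inv_rev, inv_one, inv0, inv1, inv2] at W ⊢
    try exact W
  have eaw4 : ρ0 * (ρ2*ρ1) = t1 * (ρ2*ρ1*ρ2) := by
    have W := word_aw4 ra rb rc rac rabab rbcbc
    simp only [hgdef, hhdef, ht1def, pow_two, mul_assoc, one_mul, mul_one, mul_inv_rev, inv_one, inv0, inv1, inv2] at W ⊢
    try exact W
  have eaw5 : ρ0 * (ρ1*ρ2*ρ1) = t1 * ((1:G)) := by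
    have W := word_aw5 ra rb rc rac rabab rbcbc
    simp only [hgdef, hhdef, ht1def, pow_two, mul_assoc, one_mul, mul_one, mul_inv_rev, inv_one, inv0, inv1, inv2] at W ⊢
    try exact W
  have eaw6 : ρ0 * (ρ2*ρ1*ρ2) = t1 * (ρ2*ρ1) := by
    have W := word_aw6 ra rb rc rac rabab rbcbc
    simp only [hgdef, hhdef, ht1def, pow_two, mul_assoc, one_mul, mul_one, mul_inv_rev, inv_one, inv0, inv1, inv2] at W ⊢
    try exact W
  have eaw7 : ρ0 * (ρ1*ρ2*ρ1*ρ2) = t1 * (ρ2) := by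
    have W := word_aw7 ra rb rc rac rabab rbcbc
    simp only [hgdef, hhdef, ht1def, pow_two, mul_assoc, one_mul, mul_one, mul_inv_rev, inv_one, inv0, inv1, inv2] at W ⊢
    try exact W
  have ebw0 : ρ1 * ((1:G)) = (ρ1) := by
    have W := word_bw0 ra rb rc rac rabab rbcbc
    simp only [hgdef, hhdef, ht1def, pow_two, mul_assoc, one_mul, mul_one, mul_inv_rev, inv_one, inv0, inv1, inv2] at W ⊢
    try exact W
  have ecw0 : ρ2 * ((1:G)) = (ρ2) := by
    have W := word_cw0 ra rb rc rac rabab rbcbc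
    simp only [hgdef, hhdef, ht1def, pow_two, mul_assoc, one_mul, mul_one, mul_inv_rev, inv_one, inv0, inv1, inv2] at W ⊢
    try exact W
  have ebw1 : ρ1 * (ρ1) = ((1:G)) := by
    have W := word_bw1 ra rb rc rac rabab rbcbc
    simp only [hgdef, hhdef, ht1def, pow_two, mul_assoc, one_mul, mul_one, mul_inv_rev, inv_one, inv0, inv1, inv2] at W ⊢
    try exact W
  have ecw1 : ρ2 * (ρ1) = (ρ2*ρ1) := by
    have W := word_cw1 ra rb rc rac rabab rbcbc
    simp only [hgdef, hhdef, ht1def, pow_two, mul_assoc, one_mul, mul_one, mul_inv_rev, inv_one, inv0, inv1, inv2] at W ⊢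
    try exact W
  have ebw2 : ρ1 * (ρ2) = (ρ1*ρ2) := by
    have W := word_bw2 ra rb rc rac rabab rbcbc
    simp only [hgdef, hhdef, ht1def, pow_two, mul_assoc, one_mul, mul_one, mul_inv_rev, inv_one, inv0, inv1, inv2] at W ⊢
    try exact W
  have ecw2 : ρ2 * (ρ2) = ((1:G)) := by
    have W := word_cw2 ra rb rc rac rabab rbcbc
    simp only [hgdef, hhdef, ht1def, pow_two, mul_assoc, one_mul, mul_one, mul_inv_rev, inv_one, inv0, inv1, inv2] at W ⊢
    try exact W
  have ebw3 : ρ1 * (ρ1*ρ2) = (ρ2) := by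
    have W := word_bw3 ra rb rc rac rabab rbcbc
    simp only [hgdef, hhdef, ht1def, pow_two, mul_assoc, one_mul, mul_one, mul_inv_rev, inv_one, inv0, inv1, inv2] at W ⊢
    try exact W
  have ecw3 : ρ2 * (ρ1*ρ2) = (ρ2*ρ1*ρ2) := by
    have W := word_cw3 ra rb rc rac rabab rbcbc
    simp only [hgdef, hhdef, ht1def, pow_two, mul_assoc, one_mul, mul_one, mul_inv_rev, inv_one, inv0, inv1, inv2] at W ⊢
    try exact W
  have ebw4 : ρ1 * (ρ2*ρ1) = (ρ1*ρ2*ρ1) := by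
    have W := word_bw4 ra rb rc rac rabab rbcbc
    simp only [hgdef, hhdef, ht1def, pow_two, mul_assoc, one_mul, mul_one, mul_inv_rev, inv_one, inv0, inv1, inv2] at W ⊢
    try exact W
  have ecw4 : ρ2 * (ρ2*ρ1) = (ρ1) := by
    have W := word_cw4 ra rb rc rac rabab rbcbc
    simp only [hgdef, hhdef, ht1def, pow_two, mul_assoc, one_mul, mul_one, mul_inv_rev, inv_one, inv0, inv1, inv2] at W ⊢
    try exact W
  have ebw5 : ρ1 * (ρ1*ρ2*ρ1) = (ρ2*ρ1) := by
    have W := word_bw5 ra rb rc rac rabab rbcbc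
    simp only [hgdef, hhdef, ht1def, pow_two, mul_assoc, one_mul, mul_one, mul_inv_rev, inv_one, inv0, inv1, inv2] at W ⊢
    try exact W
  have ecw5 : ρ2 * (ρ1*ρ2*ρ1) = (ρ1*ρ2*ρ1*ρ2) := by
    have W := word_cw5 ra rb rc rac rabab rbcbc
    simp only [hgdef, hhdef, ht1def, pow_two, mul_assoc, one_mul, mul_one, mul_inv_rev, inv_one, inv0, inv1, inv2] at W ⊢
    try exact W
  have ebw6 : ρ1 * (ρ2*ρ1*ρ2) = (ρ1*ρ2*ρ1*ρ2) := by
    have W := word_bw6 ra rb rc rac rabab rbcbc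
    simp only [hgdef, hhdef, ht1def, pow_two, mul_assoc, one_mul, mul_one, mul_inv_rev, inv_one, inv0, inv1, inv2] at W ⊢
    try exact W
  have ecw6 : ρ2 * (ρ2*ρ1*ρ2) = (ρ1*ρ2) := by
    have W := word_cw6 ra rb rc rac rabab rbcbc
    simp only [hgdef, hhdef, ht1def, pow_two, mul_assoc, one_mul, mul_one, mul_inv_rev, inv_one, inv0, inv1, inv2] at W ⊢
    try exact W
  have ebw7 : ρ1 * (ρ1*ρ2*ρ1*ρ2) = (ρ2*ρ1*ρ2) := by
    have W := word_bw7 ra rb rc rac rabab rbcbc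
    simp only [hgdef, hhdef, ht1def, pow_two, mul_assoc, one_mul, mul_one, mul_inv_rev, inv_one, inv0, inv1, inv2] at W ⊢
    try exact W
  have ecw7 : ρ2 * (ρ1*ρ2*ρ1*ρ2) = (ρ1*ρ2*ρ1) := by
    have W := word_cw7 ra rb rc rac rabab rbcbc
    simp only [hgdef, hhdef, ht1def, pow_two, mul_assoc, one_mul, mul_one, mul_inv_rev, inv_one, inv0, inv1, inv2] at W ⊢
    try exact W
  -- membership
  have hgT : g ∈ T := by rw [hT]; exact Subgroup.subset_closure (by simp)
  have hhT : h ∈ T := by rw [hT]; exact Subgroup.subset_closure (by simp)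
  -- commutation: a fixed element commuting with g and h commutes with all of T
  have commTfun : ∀ w : G, g * w = w * g → h * w = w * h → (∀ t ∈ T, w * t = t * w) := by
    intro w hgw hhw t ht
    rw [hT] at ht
    induction ht using Subgroup.closure_induction with
    | mem x hx =>
      simp only [Set.mem_insert_iff, Set.mem_singleton_iff] at hx
      rcases hx with rfl | rfl
      · exact hgw.symm
      · exact hhw.symm
    | one => simp
    | mul x y hx hy ihx ihy => rw [← mul_assoc, ihx, mul_assoc, ihy, ← mul_assoc]
    | inv x hx ihx => exact (Commute.inv_right (ihx : Commute w x)).eq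
  have commTg : ∀ t ∈ T, g * t = t * g := commTfun g rfl egh.symm
  have commTh : ∀ t ∈ T, h * t = t * h := commTfun h egh rfl
  have commTt1 : ∀ t ∈ T, t1 * t = t * t1 := commTfun t1 et1g.symm et1h.symm
  have commTT : ∀ t ∈ T, ∀ t' ∈ T, t * t' = t' * t := by
    intro t ht t' ht'
    rw [hT] at ht
    induction ht using Subgroup.closure_induction with
    | mem x hx =>
      simp only [Set.mem_insert_iff, Set.mem_singleton_iff] at hx
      rcases hx with rfl | rfl
      · exact commTg t' ht'
      · exact commTh t' ht'
    | one => simp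
    | mul x y hx hy ihx ihy => rw [mul_assoc, ihy, ← mul_assoc, ihx, mul_assoc]
    | inv x hx ihx => exact ((Commute.inv_left (ihx : Commute x t'))).eq
  have hgs : g ^ s = 1 := by rw [hgdef, ← pow_mul]; exact hmap
  have hhs : h ^ s = 1 := by
    rw [hhdef, ← conjpow ρ0 g sq0 s, hgs, mul_one, sq0]
  have powT : ∀ t ∈ T, t ^ s = 1 := by
    intro t ht
    rw [hT] at ht
    induction ht using Subgroup.closure_induction with
    | mem x hx =>
      simp only [Set.mem_insert_iff, Set.mem_singleton_iff] at hx
      rcases hx with rfl | rfl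
      · exact hgs
      · exact hhs
    | one => exact one_pow s
    | mul x y hx hy ihx ihy =>
      have hxT : x ∈ T := by rw [hT]; exact hx
      have hyT : y ∈ T := by rw [hT]; exact hy
      have hc : Commute x y := commTT x hxT y hyT
      rw [hc.mul_pow, ihx, ihy, one_mul]
    | inv x hx ihx => rw [inv_pow, ihx, inv_one]
  have gpow_mod : ∀ m : ℕ, g ^ m = g ^ (m % s) := by
    intro m
    conv_lhs => rw [← Nat.div_add_mod m s]
    rw [pow_add, pow_mul, hgs, one_pow, one_mul]
  have hpow_mod : ∀ m : ℕ, h ^ m = h ^ (m % s) := by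
    intro m
    conv_lhs => rw [← Nat.div_add_mod m s]
    rw [pow_add, pow_mul, hhs, one_pow, one_mul]
  have cgh : Commute g h := egh
  have formT : ∀ x ∈ T, ∃ i j : ℕ, i < s ∧ j < s ∧ x = g ^ i * h ^ j := by
    intro x hx
    rw [hT] at hx
    induction hx using Subgroup.closure_induction with
    | mem x hx =>
      simp only [Set.mem_insert_iff, Set.mem_singleton_iff] at hx
      rcases hx with rfl | rfl
      · exact ⟨1, 0, hs, s0, by simp⟩
      · exact ⟨0, 1, s0, hs, by simp⟩
    | one => exact ⟨0, 0, s0, s0, by simp⟩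
    | mul x y hx hy ihx ihy =>
      obtain ⟨i, j, hi, hj, rfl⟩ := ihx
      obtain ⟨k, l, hk, hl, rfl⟩ := ihy
      refine ⟨(i + k) % s, (j + l) % s, Nat.mod_lt _ s0, Nat.mod_lt _ s0, ?_⟩
      rw [← gpow_mod, ← hpow_mod]
      have hswap := (cgh.symm.pow_pow j k).eq
      rw [show g^i*h^j*(g^k*h^l) = g^i*((h^j*g^k)*h^l) from by group, hswap,
        pow_add, pow_add]
      group
    | inv x hx ihx =>
      obtain ⟨i, j, hi, hj, rfl⟩ := ihx
      refine ⟨(s - i) % s, (s - j) % s, Nat.mod_lt _ s0, Nat.mod_lt _ s0, ?_⟩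
      rw [← gpow_mod, ← hpow_mod]
      have h1 : (g ^ i)⁻¹ = g ^ (s - i) := by
        rw [inv_eq_iff_mul_eq_one, ← pow_add, Nat.add_sub_cancel' hi.le]
        exact hgs
      have h2 : (h ^ j)⁻¹ = h ^ (s - j) := by
        rw [inv_eq_iff_mul_eq_one, ← pow_add, Nat.add_sub_cancel' hj.le]
        exact hhs
      rw [mul_inv_rev, h1, h2, (cgh.pow_pow (s-i) (s-j)).eq]
  -- conjugation by generators preserves T
  have conjTu : ∀ u : G, u * u = 1 → u * g * u ∈ T → u * h * u ∈ T →
      ∀ t ∈ T, u * t * u ∈ T := by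
    intro u huu hgu hhu t ht
    rw [hT] at ht
    induction ht using Subgroup.closure_induction with
    | mem x hx =>
      simp only [Set.mem_insert_iff, Set.mem_singleton_iff] at hx
      rcases hx with rfl | rfl
      · exact hgu
      · exact hhu
    | one =>
      have e : u * 1 * u = 1 := by rw [mul_one]; exact huu
      rw [e]; exact T.one_mem
    | mul x y hx hy ihx ihy =>
      have e : (u*x*u)*(u*y*u) = u*(x*y)*u := by
        rw [show (u*x*u)*(u*y*u) = u*(x*((u*u)*y))*u from by group, huu, one_mul]
      rw [← e]; exact mul_mem ihx ihy
    | inv x hx ihx =>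
      have hu' : u⁻¹ = u := by rw [inv_eq_iff_mul_eq_one]; exact huu
      have e : (u*x*u)⁻¹ = u*x⁻¹*u := by rw [mul_inv_rev, mul_inv_rev, hu']; group
      rw [← e]; exact inv_mem ihx
  have eaha : ρ0 * h * ρ0 = g := by
    rw [hhdef]
    calc ρ0*(ρ0*g*ρ0)*ρ0 = ((ρ0*ρ0)*g)*(ρ0*ρ0) := by group
    _ = g := by rw [sq0, one_mul, mul_one]
  have conjT0 : ∀ t ∈ T, ρ0 * t * ρ0 ∈ T :=
    conjTu ρ0 sq0 (by rw [← hhdef]; exact hhT) (by rw [eaha]; exact hgT)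
  have conjT1 : ∀ t ∈ T, ρ1 * t * ρ1 ∈ T :=
    conjTu ρ1 sq1 (by rw [ebgb]; exact hgT) (by rw [ebhb]; exact inv_mem hhT)
  have conjT2 : ∀ t ∈ T, ρ2 * t * ρ2 ∈ T :=
    conjTu ρ2 sq2 (by rw [ecgc]; exact inv_mem hhT) (by rw [echc]; exact inv_mem hgT)
  -- key identity g * t1⁻¹ = t1 * h
  have e_gt1inv : g * t1⁻¹ = t1 * h := by
    have key1 : (t1 * h) * t1 = g := by
      rw [et1h, mul_assoc, et1sq, ← mul_assoc, ← egh, mul_assoc, mul_inv_cancel, mul_one]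
    rw [← key1]; group
  -- the dihedral predicate
  set DP : G → Prop := fun d => d = 1 ∨ d = ρ1 ∨ d = ρ2 ∨ d = ρ1*ρ2 ∨ d = ρ2*ρ1 ∨
    d = ρ1*ρ2*ρ1 ∨ d = ρ2*ρ1*ρ2 ∨ d = ρ1*ρ2*ρ1*ρ2 with hDP
  have tabA : ∀ d : G, DP d → ∃ d', DP d' ∧ ρ0 * d = t1 * d' := by
    intro d hd
    simp only [hDP] at hd ⊢
    rcases hd with hd|hd|hd|hd|hd|hd|hd|hd <;> rw [hd]
    · exact ⟨ρ1*ρ2*ρ1, by tauto, eaw0⟩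
    · exact ⟨ρ1*ρ2, by tauto, eaw1⟩
    · exact ⟨ρ1*ρ2*ρ1*ρ2, by tauto, eaw2⟩
    · exact ⟨ρ1, by tauto, eaw3⟩
    · exact ⟨ρ2*ρ1*ρ2, by tauto, eaw4⟩
    · exact ⟨1, by tauto, by rw [eaw5]⟩
    · exact ⟨ρ2*ρ1, by tauto, eaw6⟩
    · exact ⟨ρ2, by tauto, eaw7⟩
  have tabB : ∀ d : G, DP d → ∃ d', DP d' ∧ ρ1 * d = d' := by
    intro d hd
    simp only [hDP] at hd ⊢
    rcases hd with hd|hd|hd|hd|hd|hd|hd|hd <;> rw [hd]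
    · exact ⟨ρ1, by tauto, by rw [mul_one]⟩
    · exact ⟨1, by tauto, sq1⟩
    · exact ⟨ρ1*ρ2, by tauto, rfl⟩
    · exact ⟨ρ2, by tauto, ebw3⟩
    · exact ⟨ρ1*ρ2*ρ1, by tauto, ebw4⟩
    · exact ⟨ρ2*ρ1, by tauto, ebw5⟩
    · exact ⟨ρ1*ρ2*ρ1*ρ2, by tauto, ebw6⟩
    · exact ⟨ρ2*ρ1*ρ2, by tauto, ebw7⟩
  have tabC : ∀ d : G, DP d → ∃ d', DP d' ∧ ρ2 * d = d' := by
    intro d hd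
    simp only [hDP] at hd ⊢
    rcases hd with hd|hd|hd|hd|hd|hd|hd|hd <;> rw [hd]
    · exact ⟨ρ2, by tauto, by rw [mul_one]⟩
    · exact ⟨ρ2*ρ1, by tauto, rfl⟩
    · exact ⟨1, by tauto, sq2⟩
    · exact ⟨ρ2*ρ1*ρ2, by tauto, ecw3⟩
    · exact ⟨ρ1, by tauto, ecw4⟩
    · exact ⟨ρ1*ρ2*ρ1*ρ2, by tauto, ecw5⟩
    · exact ⟨ρ1*ρ2, by tauto, ecw6⟩
    · exact ⟨ρ1*ρ2*ρ1, by tauto, ecw7⟩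
  -- one induction step of the covering argument
  have step : ∀ u : G, (u = ρ0 ∨ u = ρ1 ∨ u = ρ2) → ∀ y : G,
      (∃ t ∈ T, ∃ d, DP d ∧ (y = t * d ∨ y = t1 * (t * d))) →
      (∃ t ∈ T, ∃ d, DP d ∧ (u * y = t * d ∨ u * y = t1 * (t * d))) := by
    rintro u hu y ⟨t, ht, d, hd, hcase⟩
    rcases hu with hu|hu|hu <;> rw [hu]
    · obtain ⟨d', hd', had⟩ := tabA d hd
      have htT' : ρ0 * t * ρ0 ∈ T := conjT0 t ht
      rcases hcase with rfl|rfl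
      · refine ⟨ρ0*t*ρ0, htT', d', hd', Or.inr ?_⟩
        have e1 : ρ0*(t*d) = (ρ0*t*ρ0)*(ρ0*d) := by
          rw [show (ρ0*t*ρ0)*(ρ0*d) = ρ0*(t*((ρ0*ρ0)*d)) from by group, sq0, one_mul]
        rw [e1, had, ← mul_assoc, ← commTt1 _ htT', mul_assoc]
      · refine ⟨ρ0*t*ρ0, htT', d', hd', Or.inl ?_⟩
        have e1 : ρ0*(t1*(t*d)) = (ρ0*t1*ρ0)*((ρ0*t*ρ0)*(ρ0*d)) := by
          rw [show (ρ0*t1*ρ0)*((ρ0*t*ρ0)*(ρ0*d)) =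
            ρ0*(t1*((ρ0*ρ0)*(t*((ρ0*ρ0)*d)))) from by group]
          rw [sq0]; rw [one_mul, one_mul]
        rw [e1, eat1a, had, show t1⁻¹*((ρ0*t*ρ0)*(t1*d')) =
          t1⁻¹*(((ρ0*t*ρ0)*t1)*d') from by group, ← commTt1 _ htT']
        group
    · obtain ⟨d', hd', had⟩ := tabB d hd
      have htT' : ρ1 * t * ρ1 ∈ T := conjT1 t ht
      rcases hcase with rfl|rfl
      · refine ⟨ρ1*t*ρ1, htT', d', hd', Or.inl ?_⟩
        have e1 : ρ1*(t*d) = (ρ1*t*ρ1)*(ρ1*d) := by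
          rw [show (ρ1*t*ρ1)*(ρ1*d) = ρ1*(t*((ρ1*ρ1)*d)) from by group, sq1, one_mul]
        rw [e1, had]
      · refine ⟨h*(ρ1*t*ρ1), mul_mem hhT htT', d', hd', Or.inr ?_⟩
        have e1 : ρ1*(t1*(t*d)) = (ρ1*t1*ρ1)*((ρ1*t*ρ1)*(ρ1*d)) := by
          rw [show (ρ1*t1*ρ1)*((ρ1*t*ρ1)*(ρ1*d)) =
            ρ1*(t1*((ρ1*ρ1)*(t*((ρ1*ρ1)*d)))) from by group]
          rw [sq1]; rw [one_mul, one_mul]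
        rw [e1, ebt1b, had, e_gt1inv]
        group
    · obtain ⟨d', hd', had⟩ := tabC d hd
      have htT' : ρ2 * t * ρ2 ∈ T := conjT2 t ht
      rcases hcase with rfl|rfl
      · refine ⟨ρ2*t*ρ2, htT', d', hd', Or.inl ?_⟩
        have e1 : ρ2*(t*d) = (ρ2*t*ρ2)*(ρ2*d) := by
          rw [show (ρ2*t*ρ2)*(ρ2*d) = ρ2*(t*((ρ2*ρ2)*d)) from by group, sq2, one_mul]
        rw [e1, had]
      · refine ⟨ρ2*t*ρ2, htT', d', hd', Or.inr ?_⟩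
        have e1 : ρ2*(t1*(t*d)) = (ρ2*t1*ρ2)*((ρ2*t*ρ2)*(ρ2*d)) := by
          rw [show (ρ2*t1*ρ2)*((ρ2*t*ρ2)*(ρ2*d)) =
            ρ2*(t1*((ρ2*ρ2)*(t*((ρ2*ρ2)*d)))) from by group]
          rw [sq2]; rw [one_mul, one_mul]
        rw [e1, ect1c, had, mul_assoc]
  have cover : ∀ x : G, ∃ t ∈ T, ∃ d, DP d ∧ (x = t * d ∨ x = t1 * (t * d)) := by
    intro x
    have hx : x ∈ Subgroup.closure ({ρ0, ρ1, ρ2} : Set G) := by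
      rw [hgen]; exact Subgroup.mem_top x
    induction hx using Subgroup.closure_induction_left with
    | one =>
      refine ⟨1, T.one_mem, 1, by simp only [hDP]; tauto, Or.inl (by rw [mul_one])⟩
    | mul_left u hu y hy ih =>
      have hu' : u = ρ0 ∨ u = ρ1 ∨ u = ρ2 := by
        simpa only [Set.mem_insert_iff, Set.mem_singleton_iff] using hu
      exact step u hu' y ih
    | inv_mul_cancel u hu y hy ih =>
      have hu' : u = ρ0 ∨ u = ρ1 ∨ u = ρ2 := by
        simpa only [Set.mem_insert_iff, Set.mem_singleton_iff] using hu
      have hinv : u⁻¹ = u := by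
        rcases hu' with hv|hv|hv
        · rw [hv]; exact inv0
        · rw [hv]; exact inv1
        · rw [hv]; exact inv2
      rw [hinv]
      exact step u hu' y ih
  -- upper bound on card T
  have cardT_le : Nat.card T ≤ s * s := by
    have hsur : Function.Surjective
        (fun p : Fin s × Fin s =>
          (⟨g ^ (p.1 : ℕ) * h ^ (p.2 : ℕ),
            mul_mem (pow_mem hgT _) (pow_mem hhT _)⟩ : T)) := by
      rintro ⟨x, hx⟩
      obtain ⟨i, j, hi, hj, rfl⟩ := formT x hx
      exact ⟨(⟨i, hi⟩, ⟨j, hj⟩), rfl⟩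
    calc Nat.card T ≤ Nat.card (Fin s × Fin s) :=
        Nat.card_le_card_of_surjective _ hsur
    _ = s * s := by simp [Nat.card_prod]
  -- index function for the dihedral part
  have hwv : ∀ d : G, DP d → ∃ k : Fin 8, wv8 ρ1 ρ2 k = d := by
    intro d hd
    simp only [hDP] at hd
    rcases hd with hd|hd|hd|hd|hd|hd|hd|hd
    · exact ⟨0, by rw [hd]; rfl⟩
    · exact ⟨1, by rw [hd]; rfl⟩
    · exact ⟨2, by rw [hd]; rfl⟩
    · exact ⟨3, by rw [hd]; rfl⟩
    · exact ⟨4, by rw [hd]; rfl⟩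
    · exact ⟨5, by rw [hd]; rfl⟩
    · exact ⟨6, by rw [hd]; rfl⟩
    · exact ⟨7, by rw [hd]; rfl⟩
  -- 16-coset covering surjection
  have cardG_le : Nat.card G ≤ 16 * Nat.card T := by
    have hsur : Function.Surjective
        (fun q : Fin 2 × Fin 8 × T =>
          t1 ^ (q.1 : ℕ) * ((q.2.2 : G) * wv8 ρ1 ρ2 q.2.1)) := by
      intro x
      obtain ⟨t, ht, d, hd, hcase⟩ := cover x
      obtain ⟨k, hk⟩ := hwv d hd
      rcases hcase with rfl|rfl
      · refine ⟨(0, k, ⟨t, ht⟩), ?_⟩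
        show t1 ^ ((0 : Fin 2) : ℕ) * (t * wv8 ρ1 ρ2 k) = t * d
        rw [Fin.val_zero, pow_zero, one_mul, hk]
      · refine ⟨(1, k, ⟨t, ht⟩), ?_⟩
        show t1 ^ ((1 : Fin 2) : ℕ) * (t * wv8 ρ1 ρ2 k) = t1 * (t * d)
        rw [Fin.val_one, pow_one, hk]
    calc Nat.card G ≤ Nat.card (Fin 2 × Fin 8 × T) :=
        Nat.card_le_card_of_surjective _ hsur
    _ = 16 * Nat.card T := by
        rw [Nat.card_prod, Nat.card_prod]
        simp [Nat.card_eq_fintype_card]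
        ring
  have cardT_eq : Nat.card T = s * s := by
    refine le_antisymm cardT_le ?_
    have h1 : 16 * (s * s) ≤ 16 * Nat.card T := by
      calc 16 * (s * s) = 16 * s ^ 2 := by ring
      _ = Nat.card G := hG.symm
      _ ≤ 16 * Nat.card T := cardG_le
    omega
  -- the central involution z0
  set z0 : G := t1 ^ s with hz0def
  have cg_t1 : Commute g t1 := et1g.symm
  have hz0sq : z0 * z0 = 1 := by
    rw [hz0def, ← pow_add, show s + s = 2 * s from by ring, pow_mul, pow_two, et1sq]
    have c1 : Commute g h⁻¹ := cgh.inv_right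
    rw [c1.mul_pow, hgs, one_mul, inv_pow, hhs, inv_one]
  have hz0inv : z0⁻¹ = z0 := by rw [inv_eq_iff_mul_eq_one]; exact hz0sq
  have cz0a : ρ0 * z0 * ρ0 = z0 := by
    rw [hz0def, conjpow ρ0 t1 sq0 s, eat1a, inv_pow, ← hz0def, hz0inv]
  have cz0b : ρ1 * z0 * ρ1 = z0 := by
    rw [hz0def, conjpow ρ1 t1 sq1 s, ebt1b]
    have c1 : Commute g t1⁻¹ := cg_t1.inv_right
    rw [c1.mul_pow, hgs, one_mul, inv_pow, ← hz0def, hz0inv]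
  have cz0c : ρ2 * z0 * ρ2 = z0 := by
    rw [hz0def, conjpow ρ2 t1 sq2 s, ect1c]
  have hz0cen : ∀ x : G, x * z0 = z0 * x := by
    intro x
    have hx : x ∈ Subgroup.closure ({ρ0, ρ1, ρ2} : Set G) := by
      rw [hgen]; exact Subgroup.mem_top x
    induction hx using Subgroup.closure_induction with
    | mem u hu =>
      have hu' : u = ρ0 ∨ u = ρ1 ∨ u = ρ2 := by
        simpa only [Set.mem_insert_iff, Set.mem_singleton_iff] using hu
      have key : ∀ v : G, v * v = 1 → v * z0 * v = z0 → v * z0 = z0 * v := by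
        intro v hvv hvz
        have e1 : (v * z0) * v = (z0 * v) * v := by
          rw [mul_assoc z0, hvv, mul_one]; exact hvz
        exact mul_right_cancel e1
      rcases hu' with hv|hv|hv
      · rw [hv]; exact key ρ0 sq0 cz0a
      · rw [hv]; exact key ρ1 sq1 cz0b
      · rw [hv]; exact key ρ2 sq2 cz0c
    | one => rw [one_mul, mul_one]
    | mul x y hx hy ihx ihy => rw [mul_assoc, ihy, ← mul_assoc, ihx, mul_assoc]
    | inv x hx ihx => exact (Commute.inv_left (ihx : Commute x z0)).eq
  -- z0 is nontrivial
  have hz0ne : z0 ≠ 1 := by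
    intro hz1
    rcases Nat.even_or_odd s with ⟨m, hm⟩ | ⟨m, hm⟩
    · -- s = m + m (even case)
      have hm1 : 0 < m := by omega
      have hms : m < s := by omega
      have hgm_hm : g ^ m = h ^ m := by
        have e0 : z0 = (g * h⁻¹) ^ m := by
          rw [hz0def, hm, show m + m = 2 * m from by ring, pow_mul, pow_two, et1sq]
        rw [e0] at hz1
        have c1 : Commute g h⁻¹ := cgh.inv_right
        rw [c1.mul_pow, inv_pow, mul_inv_eq_one] at hz1
        exact hz1
      have formT2 : ∀ x ∈ T, ∃ i j : ℕ, i < s ∧ j < m ∧ x = g ^ i * h ^ j := by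
        intro x hx
        obtain ⟨i, j, hi, hj, rfl⟩ := formT x hx
        refine ⟨(i + m * (j / m)) % s, j % m, Nat.mod_lt _ s0, Nat.mod_lt _ hm1, ?_⟩
        rw [← gpow_mod]
        conv_lhs => rw [← Nat.div_add_mod j m]
        rw [pow_add h, pow_mul, ← hgm_hm, pow_add g, pow_mul, mul_assoc]
      have cardT_le2 : Nat.card T ≤ s * m := by
        have hsur : Function.Surjective
            (fun p : Fin s × Fin m =>
              (⟨g ^ (p.1 : ℕ) * h ^ (p.2 : ℕ),
                mul_mem (pow_mem hgT _) (pow_mem hhT _)⟩ : T)) := by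
          rintro ⟨x, hx⟩
          obtain ⟨i, j, hi, hj, rfl⟩ := formT2 x hx
          exact ⟨(⟨i, hi⟩, ⟨j, hj⟩), rfl⟩
        calc Nat.card T ≤ Nat.card (Fin s × Fin m) :=
            Nat.card_le_card_of_surjective _ hsur
        _ = s * m := by simp [Nat.card_prod]
      rw [cardT_eq] at cardT_le2
      have : s ≤ m := Nat.le_of_mul_le_mul_left cardT_le2 s0
      omega
    · -- s = 2*m + 1 (odd case)
      have ht1T : t1 ∈ T := by
        have e1 : t1 ^ s = 1 := by rw [← hz0def]; exact hz1
        have e2 : t1 * (g * h⁻¹) ^ m = 1 := by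
          calc t1 * (g * h⁻¹) ^ m = t1 * (t1 * t1) ^ m := by rw [et1sq]
          _ = t1 ^ (1 + 2 * m) := by rw [pow_add, pow_one, pow_mul, pow_two]
          _ = 1 := by rw [show 1 + 2 * m = s from by omega]; exact e1
        have e3 := eq_inv_of_mul_eq_one_left e2
        rw [← inv_pow] at e3
        rw [e3]
        exact pow_mem (inv_mem (mul_mem hgT (inv_mem hhT))) m
      have hsur8 : Function.Surjective
          (fun q : Fin 8 × T => (q.2 : G) * wv8 ρ1 ρ2 q.1) := by
        intro x
        obtain ⟨t, ht, d, hd, hcase⟩ := cover x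
        obtain ⟨k, hk⟩ := hwv d hd
        rcases hcase with rfl|rfl
        · refine ⟨(k, ⟨t, ht⟩), ?_⟩
          show t * wv8 ρ1 ρ2 k = t * d
          rw [hk]
        · refine ⟨(k, ⟨t1 * t, mul_mem ht1T ht⟩), ?_⟩
          show t1 * t * wv8 ρ1 ρ2 k = t1 * (t * d)
          rw [hk, mul_assoc]
      have hle8 : Nat.card G ≤ 8 * Nat.card T := by
        calc Nat.card G ≤ Nat.card (Fin 8 × T) :=
            Nat.card_le_card_of_surjective _ hsur8
        _ = 8 * Nat.card T := by rw [Nat.card_prod]; simp [Nat.card_eq_fintype_card]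
      rw [hG, cardT_eq] at hle8
      nlinarith
  -- orbit relation description
  have orbEq : ∀ x y : X,
      (Quotient.mk'' x : MulAction.orbitRel.Quotient T X) = Quotient.mk'' y ↔
      ∃ t ∈ T, t • y = x := by
    intro x y
    rw [Quotient.eq'']
    constructor
    · intro hr
      have hr' : x ∈ MulAction.orbit T y := hr
      obtain ⟨u, hu⟩ := MulAction.mem_orbit_iff.mp hr'
      exact ⟨(u : G), u.2, hu⟩
    · rintro ⟨t, ht, hty⟩
      show MulAction.orbitRel T X x y
      rw [MulAction.orbitRel_apply, MulAction.mem_orbit_iff]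
      exact ⟨⟨t, ht⟩, hty⟩
  -- two-element quotient
  have twoQ : ∀ p q r : MulAction.orbitRel.Quotient T X, p ≠ r → q ≠ r → p = q := by
    intro p q r hp hq
    obtain ⟨av, bv, hne, huniv⟩ := Nat.card_eq_two_iff.mp horb
    have hmem : ∀ z : MulAction.orbitRel.Quotient T X, z = av ∨ z = bv := by
      intro z
      have : z ∈ ({av, bv} : Set _) := by rw [huniv]; trivial
      simpa [Set.mem_insert_iff] using this
    rcases hmem p with h1|h1 <;> rcases hmem q with h2|h2 <;> rcases hmem r with h3|h3 <;>
      first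
        | (exact h1.trans h2.symm)
        | (exact absurd (h1.trans h3.symm) hp)
        | (exact absurd (h2.trans h3.symm) hq)
  -- key lemma: T acts with trivial stabilizers
  have key : ∀ (y : X) (u : G), u ∈ T → u • y = y → u = 1 := by
    intro y u huT hufix
    by_cases hcase : ∃ t ∈ T, t • y = t1 • y
    · exfalso
      obtain ⟨t, htT, htEq⟩ := hcase
      have hv : (t⁻¹ * t1) • y = y := by
        rw [mul_smul, ← htEq, ← mul_smul, inv_mul_cancel, one_smul]
      have c0 : Commute t1 t := commTt1 t htT
      have c1 : Commute t⁻¹ t1 := (c0.inv_right).symm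
      have hvs : (t⁻¹ * t1) ^ s = z0 := by
        rw [c1.mul_pow, inv_pow, powT t htT, inv_one, one_mul, ← hz0def]
      have hz0fix : z0 • y = y := by
        have hstab : (t⁻¹ * t1) ∈ MulAction.stabilizer G y :=
          MulAction.mem_stabilizer_iff.mpr hv
        have hps := pow_mem hstab s
        rw [hvs] at hps
        exact hps
      have hall : ∀ x : X, z0 • x = x := by
        intro x
        obtain ⟨p, hp⟩ := htrans y x
        rw [← hp, ← mul_smul, ← hz0cen p, mul_smul, hz0fix]
      exact hz0ne (hfaith z0 hall)
    · apply hfaith u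
      intro x
      by_cases hx : ∃ t ∈ T, t • y = x
      · obtain ⟨t, htT, rfl⟩ := hx
        rw [← mul_smul, commTT u huT t htT, mul_smul, hufix]
      · have h1 : (Quotient.mk'' x : MulAction.orbitRel.Quotient T X) ≠ Quotient.mk'' y := by
          intro hEq; exact hx ((orbEq x y).mp hEq)
        have h2 : (Quotient.mk'' (t1 • y) : MulAction.orbitRel.Quotient T X) ≠ Quotient.mk'' y := by
          intro hEq; exact hcase ((orbEq (t1 • y) y).mp hEq)
        have h3 := twoQ (Quotient.mk'' x) (Quotient.mk'' (t1 • y)) (Quotient.mk'' y) h1 h2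
        obtain ⟨t, htT, htx⟩ := (orbEq x (t1 • y)).mp h3
        rw [← htx, ← mul_smul, ← mul_smul]
        have e1 : u * t * t1 = t * (t1 * u) := by
          rw [commTT u huT t htT, mul_assoc, ← commTt1 u huT]
        rw [e1, mul_smul, mul_smul, hufix]
  -- stabilizers in T are trivial
  have stabT : ∀ y : X, MulAction.stabilizer T y = ⊥ := by
    intro y
    ext u
    simp only [Subgroup.mem_bot, MulAction.mem_stabilizer_iff]
    constructor
    · intro hfix
      have hco : (u : G) = 1 := key y (u : G) u.2 hfix
      exact Subtype.ext hco
    · rintro rfl; exact one_smul _ y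
  -- class equation
  have hXcard : Nat.card X = Nat.card (MulAction.orbitRel.Quotient T X) * Nat.card T := by
    have E := MulAction.selfEquivSigmaOrbitsQuotientStabilizer T X
    have E2 : (Σ ω : MulAction.orbitRel.Quotient T X, T ⧸ MulAction.stabilizer T ω.out) ≃
        (MulAction.orbitRel.Quotient T X) × T := by
      refine (Equiv.sigmaCongrRight fun ω => ?_).trans (Equiv.sigmaEquivProd _ _)
      exact (Subgroup.quotientEquivOfEq (stabT ω.out)).trans
        (QuotientGroup.quotientBot (G := T)).toEquiv
    rw [Nat.card_congr (E.trans E2), Nat.card_prod]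
  calc n = Nat.card X := hn.symm
  _ = 2 * (s * s) := by rw [hXcard, horb, cardT_eq]
  _ = 2 * s ^ 2 := by ring
end

section
/- Let s ≥ 2 and let a, b be positive integers with s = lcm(a, b). Then the subgroup H = ⟨u^a, v^b⟩ of G is core-free and has index 12ab in G. -/
/-!
The translations `u` and `v` commute, `ρ1` swaps them, `ρ2` maps them to `u` and `v⁻¹ u`, and
both have order dividing `s`; all of this is rewriting with the Coxeter relations. Hence
`T = ⟨u, v⟩` is normalised by the dihedral group `⟨ρ1, ρ2⟩` of order at most `12`, and
`G = ⟨ρ1, ρ2⟩ T` gives `|T| ≥ s²`. So `T ≅ (ℤ/s)²` with basis `u, v`, and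
`H = ⟨u^a⟩ × ⟨v^b⟩` has order `(s/a)(s/b)`, i.e. index `12ab`. An element `u^m v^n` of the
core lies in `H` and in `ρ1 H ρ1 = ⟨v^a, u^b⟩`, so `a` and `b` divide both `m` and `n`;
then so does `lcm(a, b) = s`, and the element is trivial.
-/

open Subgroup

namespace Subgroup

variable {G : Type*} [Group G]

theorem natCard_sup_le_of_le_normalizer {A B : Subgroup G} (h : A ≤ normalizer (B : Set G)) :
    Nat.card ↥(A ⊔ B) ≤ Nat.card A * Nat.card B := by
  rw [← SetLike.coe_sort_coe, coe_mul_of_left_le_normalizer_right A B h]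
  exact Set.natCard_mul_le

theorem mem_normalizer_closure_of_conj_mem [Finite G] {S : Set G} {g : G}
    (h : ∀ x ∈ S, g * x * g⁻¹ ∈ closure S) : g ∈ normalizer (closure S : Set G) :=
  mem_normalizer_fintype fun _ hn =>
    (closure_le ((closure S).comap (MulAut.conj g).toMonoidHom)).2 h hn

end Subgroup

section Involutions

variable {G : Type*} [Group G] {x y : G}

theorem inv_eq_self_of_sq_eq_one (hx : x ^ 2 = 1) : x⁻¹ = x :=
  inv_eq_iff_mul_eq_one.2 (by rwa [← pow_two])

theorem mul_inv_rev_of_sq_eq_one (hx : x ^ 2 = 1) (hy : y ^ 2 = 1) : (x * y)⁻¹ = y * x := by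
  rw [mul_inv_rev, inv_eq_self_of_sq_eq_one hx, inv_eq_self_of_sq_eq_one hy]

theorem mul_pow_eq_of_pow_two_mul_eq_one (hx : x ^ 2 = 1) (hy : y ^ 2 = 1) {k : ℕ}
    (h : (x * y) ^ (2 * k) = 1) : (x * y) ^ k = (y * x) ^ k := by
  rw [← mul_inv_rev_of_sq_eq_one hx hy, inv_pow, eq_inv_iff_mul_eq_one, ← pow_add, ← two_mul, h]

theorem mul_pow_mul_eq_of_pow_two_mul_add_one_eq_one (hx : x ^ 2 = 1) (hy : y ^ 2 = 1) {k : ℕ}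
    (h : (x * y) ^ (2 * k + 1) = 1) : (x * y) ^ k * x = (y * x) ^ k * y := by
  rw [← mul_inv_rev_of_sq_eq_one hx hy, inv_pow, eq_inv_mul_iff_mul_eq, ← mul_assoc, ← pow_add,
    ← two_mul, ← mul_inv_eq_one, inv_eq_self_of_sq_eq_one hy, mul_assoc, ← pow_succ, h]

theorem natCard_closure_pair_le_of_sq_eq_one [Finite G] (hx : x ^ 2 = 1) (hy : y ^ 2 = 1)
    {n : ℕ} (hn : 0 < n) (h : (x * y) ^ n = 1) : Nat.card (closure {x, y}) ≤ 2 * n := by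
  have hnorm : zpowers x ≤ normalizer (zpowers (x * y) : Set G) := by
    rw [zpowers_le, zpowers_eq_closure]
    refine mem_normalizer_closure_of_conj_mem fun _ hw => ?_
    rw [Set.mem_singleton_iff.1 hw, inv_eq_self_of_sq_eq_one hx,
      show x * (x * y) * x = (x * x) * (y * x) by group, ← pow_two, hx, one_mul,
      ← mul_inv_rev_of_sq_eq_one hx hy]
    exact inv_mem (subset_closure rfl)
  have hle : closure {x, y} ≤ zpowers x ⊔ zpowers (x * y) := by
    rw [closure_le, Set.insert_subset_iff, Set.singleton_subset_iff]
    refine ⟨mem_sup_left (mem_zpowers x), ?_⟩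
    have h := mul_mem (mem_sup_left (inv_mem (mem_zpowers x)) :
      x⁻¹ ∈ zpowers x ⊔ zpowers (x * y)) (mem_sup_right (mem_zpowers (x * y)))
    rwa [inv_mul_cancel_left] at h
  calc Nat.card (closure {x, y})
      ≤ Nat.card ↥(zpowers x ⊔ zpowers (x * y)) := card_le_of_le hle
    _ ≤ Nat.card (zpowers x) * Nat.card (zpowers (x * y)) := natCard_sup_le_of_le_normalizer hnorm
    _ ≤ 2 * n := by
      rw [Nat.card_zpowers, Nat.card_zpowers]
      exact Nat.mul_le_mul (orderOf_le_of_pow_eq_one two_pos hx) (orderOf_le_of_pow_eq_one hn h)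

end Involutions

namespace Commute

variable {G : Type*} [Group G] {x y : G}

def zpowersMulHom (h : Commute x y) : zpowers x × zpowers y →* G :=
  (zpowers x).subtype.noncommCoprod (zpowers y).subtype
    fun ⟨_, i, hi⟩ ⟨_, j, hj⟩ => hi ▸ hj ▸ h.zpow_zpow i j

theorem range_zpowersMulHom (h : Commute x y) : h.zpowersMulHom.range = closure {x, y} := by
  rw [zpowersMulHom, MonoidHom.noncommCoprod_range, range_subtype, range_subtype,
    zpowers_eq_closure, zpowers_eq_closure, ← Subgroup.closure_union, Set.singleton_union]

theorem injective_zpowersMulHom_iff (h : Commute x y) :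
    Function.Injective h.zpowersMulHom ↔ Disjoint (zpowers x) (zpowers y) := by
  simp [zpowersMulHom, MonoidHom.noncommCoprod_injective, range_subtype]

theorem mem_closure_pair_iff (h : Commute x y) {g : G} :
    g ∈ closure {x, y} ↔ ∃ m n : ℤ, x ^ m * y ^ n = g := by
  rw [← h.range_zpowersMulHom]
  constructor
  · rintro ⟨⟨⟨_, m, rfl⟩, ⟨_, n, rfl⟩⟩, rfl⟩
    exact ⟨m, n, rfl⟩
  · rintro ⟨m, n, rfl⟩
    exact ⟨(⟨x ^ m, m, rfl⟩, ⟨y ^ n, n, rfl⟩), rfl⟩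

theorem natCard_closure_pair_le [Finite G] (h : Commute x y) :
    Nat.card (closure {x, y}) ≤ orderOf x * orderOf y := by
  rw [← h.range_zpowersMulHom, ← Nat.card_zpowers, ← Nat.card_zpowers, ← Nat.card_prod]
  exact Nat.card_le_card_of_surjective _ h.zpowersMulHom.rangeRestrict_surjective

theorem natCard_closure_pair_eq_iff [Finite G] (h : Commute x y) :
    Nat.card (closure {x, y}) = orderOf x * orderOf y ↔ Disjoint (zpowers x) (zpowers y) := by
  rw [← h.injective_zpowersMulHom_iff, ← h.range_zpowersMulHom, ← Nat.card_zpowers,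
    ← Nat.card_zpowers, ← Nat.card_prod, ← MonoidHom.rangeRestrict_injective_iff]
  refine ⟨fun hcard => (h.zpowersMulHom.rangeRestrict_surjective.bijective_of_nat_card_le
    hcard.ge).1, fun hinj => Nat.card_congr (Equiv.ofBijective _
      ⟨hinj, h.zpowersMulHom.rangeRestrict_surjective⟩).symm⟩

theorem orderOf_eq_and_disjoint_of_sq_le_natCard [Finite G] (h : Commute x y) {s : ℕ}
    (hs : 0 < s) (hx : x ^ s = 1) (hy : y ^ s = 1) (hcard : s ^ 2 ≤ Nat.card (closure {x, y})) :
    orderOf x = s ∧ orderOf y = s ∧ Disjoint (zpowers x) (zpowers y) := by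
  have hox := orderOf_le_of_pow_eq_one hs hx
  have hoy := orderOf_le_of_pow_eq_one hs hy
  have hle := h.natCard_closure_pair_le
  have hmul : orderOf x * orderOf y ≤ s * s := Nat.mul_le_mul hox hoy
  have hx' : orderOf x = s := by nlinarith
  have hy' : orderOf y = s := by nlinarith
  exact ⟨hx', hy', h.natCard_closure_pair_eq_iff.1 (by nlinarith)⟩

end Commute

section TranslationLattice

variable {G : Type*} [Group G] {u v : G}

theorem zpow_mul_zpow_mem_closure_pow_pair_iff (huv : Commute u v)
    (hdisj : Disjoint (zpowers u) (zpowers v)) {a b : ℕ} (ha : a ∣ orderOf u)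
    (hb : b ∣ orderOf v) (m n : ℤ) :
    u ^ m * v ^ n ∈ closure {u ^ a, v ^ b} ↔ (a : ℤ) ∣ m ∧ (b : ℤ) ∣ n := by
  rw [(huv.pow_pow a b).mem_closure_pair_iff]
  constructor
  · rintro ⟨i, j, hij⟩
    simp only [← zpow_natCast, ← zpow_mul] at hij
    have hpair := Prod.ext_iff.1 <| mul_injective_of_disjoint hdisj
      (a₁ := (⟨_, zpow_mem_zpowers u (a * i)⟩, ⟨_, zpow_mem_zpowers v (b * j)⟩))
      (a₂ := (⟨_, zpow_mem_zpowers u m⟩, ⟨_, zpow_mem_zpowers v n⟩)) hij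
    have hm := (zpow_eq_zpow_iff_modEq.1 (congrArg Subtype.val hpair.1)).dvd
    have hn := (zpow_eq_zpow_iff_modEq.1 (congrArg Subtype.val hpair.2)).dvd
    exact ⟨(dvd_sub_left (dvd_mul_right _ i)).1 ((Int.natCast_dvd_natCast.2 ha).trans hm),
      (dvd_sub_left (dvd_mul_right _ j)).1 ((Int.natCast_dvd_natCast.2 hb).trans hn)⟩
  · rintro ⟨⟨i, rfl⟩, ⟨j, rfl⟩⟩
    exact ⟨i, j, by simp only [← zpow_natCast, ← zpow_mul]⟩

theorem normalCore_closure_pow_pair_eq_bot (huv : Commute u v)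
    (hdisj : Disjoint (zpowers u) (zpowers v)) {a b : ℕ} (hu : orderOf u = Nat.lcm a b)
    (hv : orderOf v = Nat.lcm a b) {σ : G} (hσu : σ * u * σ⁻¹ = v) (hσv : σ * v * σ⁻¹ = u) :
    (closure {u ^ a, v ^ b}).normalCore = ⊥ := by
  have hmem := zpow_mul_zpow_mem_closure_pow_pair_iff huv hdisj
    (hu ▸ Nat.dvd_lcm_left a b) (hv ▸ Nat.dvd_lcm_right a b)
  have hle : closure {u ^ a, v ^ b} ≤ closure {u, v} := by
    rw [closure_le, Set.insert_subset_iff, Set.singleton_subset_iff]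
    exact ⟨pow_mem (subset_closure (by simp)) a, pow_mem (subset_closure (by simp)) b⟩
  rw [eq_bot_iff_forall]
  intro g hg
  obtain ⟨m, n, rfl⟩ := huv.mem_closure_pair_iff.1 (hle (normalCore_le _ hg))
  have hσg := normalCore_le _ ((normalCore_normal _).conj_mem _ hg σ)
  rw [show σ * (u ^ m * v ^ n) * σ⁻¹ = (σ * v * σ⁻¹) ^ n * (σ * u * σ⁻¹) ^ m by
    rw [conj_zpow, conj_zpow, (huv.zpow_zpow m n).eq]; group, hσu, hσv, hmem] at hσg
  obtain ⟨ham, hbn⟩ := (hmem m n).1 (normalCore_le _ hg)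
  rw [(orderOf_dvd_iff_zpow_eq_one (x := u)).1 (hu ▸ Int.coe_lcm_dvd ham hσg.2),
    (orderOf_dvd_iff_zpow_eq_one (x := v)).1 (hv ▸ Int.coe_lcm_dvd hσg.1 hbn), mul_one]

theorem natCard_closure_pow_pair [Finite G] (huv : Commute u v)
    (hdisj : Disjoint (zpowers u) (zpowers v)) {a b : ℕ} (ha : a ≠ 0) (hb : b ≠ 0)
    (hau : a ∣ orderOf u) (hbv : b ∣ orderOf v) :
    Nat.card (closure {u ^ a, v ^ b}) = orderOf u / a * (orderOf v / b) := by
  rw [(huv.pow_pow a b).natCard_closure_pair_eq_iff.2, orderOf_pow_of_dvd ha hau,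
    orderOf_pow_of_dvd hb hbv]
  exact hdisj.mono (zpowers_le.2 (pow_mem (mem_zpowers u) a))
    (zpowers_le.2 (pow_mem (mem_zpowers v) b))

end TranslationLattice

structure Coxeter36Relations {G : Type*} [Group G] (ρ0 ρ1 ρ2 : G) : Prop where
  sq0 : ρ0 ^ 2 = 1
  sq1 : ρ1 ^ 2 = 1
  sq2 : ρ2 ^ 2 = 1
  pow01 : (ρ0 * ρ1) ^ 3 = 1
  pow12 : (ρ1 * ρ2) ^ 6 = 1
  pow02 : (ρ0 * ρ2) ^ 2 = 1

namespace Coxeter36Relations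

variable {G : Type*} [Group G] {ρ0 ρ1 ρ2 u v : G}

theorem translation_conj (hρ : Coxeter36Relations ρ0 ρ1 ρ2)
    (hu : u = ρ0 * (ρ1 * ρ2) ^ 2 * ρ1) (hv : v = (ρ0 * ρ1 * ρ2) ^ 2) :
    Commute u v ∧ ρ1 * u * ρ1⁻¹ = v ∧ ρ1 * v * ρ1⁻¹ = u ∧ ρ2 * u * ρ2⁻¹ = u ∧
      ρ2 * v * ρ2⁻¹ = v⁻¹ * u := by
  have cancel : ∀ ρ : G, ρ ^ 2 = 1 → ∀ t, ρ * (ρ * t) = t := fun ρ hρ t => by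
    rw [← mul_assoc, ← pow_two, hρ, one_mul]
  have braid01 := mul_pow_mul_eq_of_pow_two_mul_add_one_eq_one hρ.sq0 hρ.sq1 (k := 1) hρ.pow01
  have braid02 := mul_pow_eq_of_pow_two_mul_eq_one hρ.sq0 hρ.sq2 (k := 1) hρ.pow02
  have braid12 := mul_pow_eq_of_pow_two_mul_eq_one hρ.sq1 hρ.sq2 (k := 3) hρ.pow12
  -- shortlex rewriting rules for `ρ0 < ρ1 < ρ2`, right-associated with an arbitrary tail
  have r01 : ∀ t, ρ1 * (ρ0 * (ρ1 * t)) = ρ0 * (ρ1 * (ρ0 * t)) := fun t => by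
    simpa only [pow_one, mul_assoc] using congrArg (· * t) braid01.symm
  have r02 : ∀ t, ρ2 * (ρ0 * t) = ρ0 * (ρ2 * t) := fun t => by
    simpa only [pow_one, mul_assoc] using congrArg (· * t) braid02.symm
  have r12 : ∀ t, ρ2 * (ρ1 * (ρ2 * (ρ1 * (ρ2 * (ρ1 * t))))) =
      ρ1 * (ρ2 * (ρ1 * (ρ2 * (ρ1 * (ρ2 * t))))) := fun t => by
    simpa only [pow_succ, pow_zero, one_mul, mul_assoc] using congrArg (· * t) braid12.symm
  subst hu hv
  -- a trailing factor `1` gives every word a tail for the rules to match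
  refine ⟨?_, ?_, ?_, ?_, ?_⟩ <;> apply mul_right_cancel (b := (1 : G)) <;>
    simp only [pow_succ, pow_zero, one_mul, mul_inv_rev, inv_eq_self_of_sq_eq_one hρ.sq0,
      inv_eq_self_of_sq_eq_one hρ.sq1, inv_eq_self_of_sq_eq_one hρ.sq2, mul_assoc,
      cancel ρ0 hρ.sq0, cancel ρ1 hρ.sq1, cancel ρ2 hρ.sq2, r01, r02, r12]

theorem natCard_le_twelve_mul_natCard_closure [Finite G] (hρ : Coxeter36Relations ρ0 ρ1 ρ2)
    (hgen : closure {ρ0, ρ1, ρ2} = ⊤) (hu : u = ρ0 * (ρ1 * ρ2) ^ 2 * ρ1)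
    (hv : v = (ρ0 * ρ1 * ρ2) ^ 2) : Nat.card G ≤ 12 * Nat.card (closure {u, v}) := by
  obtain ⟨-, h1u, h1v, h2u, h2v⟩ := hρ.translation_conj hu hv
  have hu_mem : u ∈ closure {u, v} := subset_closure (by simp)
  have hv_mem : v ∈ closure {u, v} := subset_closure (by simp)
  have hnorm : closure {ρ1, ρ2} ≤ normalizer (closure {u, v} : Set G) := by
    rw [closure_le, Set.insert_subset_iff, Set.singleton_subset_iff]
    constructor <;> refine mem_normalizer_closure_of_conj_mem ?_ <;> rintro _ (rfl | rfl)
    · rw [h1u]; exact hv_mem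
    · rw [h1v]; exact hu_mem
    · rw [h2u]; exact hu_mem
    · rw [h2v]; exact mul_mem (inv_mem hv_mem) hu_mem
  have htop : ⊤ ≤ closure {ρ1, ρ2} ⊔ closure {u, v} := by
    have hρ0 : ρ0 = u * ((ρ1 * ρ2) ^ 2 * ρ1)⁻¹ := by rw [hu, mul_assoc ρ0, mul_inv_cancel_right]
    rw [← hgen, closure_le, Set.insert_subset_iff, Set.insert_subset_iff,
      Set.singleton_subset_iff, hρ0]
    refine ⟨mul_mem (mem_sup_right hu_mem) (mem_sup_left (inv_mem ?_)),
      mem_sup_left (subset_closure (by simp)), mem_sup_left (subset_closure (by simp))⟩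
    exact mul_mem (pow_mem (mul_mem (subset_closure (by simp)) (subset_closure (by simp))) 2)
      (subset_closure (by simp))
  calc Nat.card G = Nat.card (⊤ : Subgroup G) := card_top.symm
    _ ≤ Nat.card ↥(closure {ρ1, ρ2} ⊔ closure {u, v}) := card_le_of_le htop
    _ ≤ Nat.card (closure {ρ1, ρ2}) * Nat.card (closure {u, v}) :=
      natCard_sup_le_of_le_normalizer hnorm
    _ ≤ 12 * Nat.card (closure {u, v}) := Nat.mul_le_mul_right _
      (natCard_closure_pair_le_of_sq_eq_one hρ.sq1 hρ.sq2 (by norm_num) hρ.pow12)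

end Coxeter36Relations

theorem stmt12_general (s a b : ℕ) (ha : 0 < a) (hb : 0 < b)
    (hlcm : s = Nat.lcm a b)
    (G : Type*) [Group G] [Finite G] (ρ0 ρ1 ρ2 : G)
    (hgen : Subgroup.closure {ρ0, ρ1, ρ2} = ⊤)
    (hr0 : ρ0 ^ 2 = 1) (hr1 : ρ1 ^ 2 = 1) (hr2 : ρ2 ^ 2 = 1)
    (h01 : (ρ0 * ρ1) ^ 3 = 1) (h12 : (ρ1 * ρ2) ^ 6 = 1) (h02 : (ρ0 * ρ2) ^ 2 = 1)
    (hmap : (ρ0 * ρ1 * ρ2) ^ (2 * s) = 1)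
    (hG : Nat.card G = 12 * s ^ 2)
    (u v : G) (hu : u = ρ0 * (ρ1 * ρ2) ^ 2 * ρ1) (hv : v = (ρ0 * ρ1 * ρ2) ^ 2)
    : (Subgroup.closure {u ^ a, v ^ b}).normalCore = ⊥ ∧
      (Subgroup.closure {u ^ a, v ^ b}).index = 12 * a * b := by
  have hρ : Coxeter36Relations ρ0 ρ1 ρ2 := ⟨hr0, hr1, hr2, h01, h12, h02⟩
  obtain ⟨huv, h1u, h1v, -, -⟩ := hρ.translation_conj hu hv
  have hs : 0 < s := hlcm ▸ Nat.lcm_pos ha hb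
  have hvs : v ^ s = 1 := by rw [hv, ← pow_mul, hmap]
  have hus : u ^ s = 1 := by rw [← h1v, conj_pow, hvs, mul_one, mul_inv_cancel]
  have hT : s ^ 2 ≤ Nat.card (closure {u, v}) := Nat.le_of_mul_le_mul_left
    (hG ▸ hρ.natCard_le_twelve_mul_natCard_closure hgen hu hv) (by norm_num)
  obtain ⟨hou, hov, hdisj⟩ := huv.orderOf_eq_and_disjoint_of_sq_le_natCard hs hus hvs hT
  have has : a ∣ s := hlcm ▸ Nat.dvd_lcm_left a b
  have hbs : b ∣ s := hlcm ▸ Nat.dvd_lcm_right a b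
  refine ⟨normalCore_closure_pow_pair_eq_bot huv hdisj (hlcm ▸ hou) (hlcm ▸ hov) h1u h1v, ?_⟩
  have hcard := card_mul_index (closure {u ^ a, v ^ b})
  rw [natCard_closure_pow_pair huv hdisj ha.ne' hb.ne' (hou ▸ has) (hov ▸ hbs), hou, hov,
    hG] at hcard
  have hpos : 0 < s / a * (s / b) :=
    Nat.mul_pos (Nat.div_pos (Nat.le_of_dvd hs has) ha) (Nat.div_pos (Nat.le_of_dvd hs hbs) hb)
  refine Nat.eq_of_mul_eq_mul_left hpos (hcard.trans ?_)
  calc 12 * s ^ 2 = 12 * (s / a * a) * (s / b * b) := by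
        rw [Nat.div_mul_cancel has, Nat.div_mul_cancel hbs]; ring
    _ = s / a * (s / b) * (12 * a * b) := by ring

theorem stmt12 (s a b : ℕ) (hs : 2 ≤ s) (ha : 0 < a) (hb : 0 < b)
    (hlcm : s = Nat.lcm a b)
    (G : Type*) [Group G] [Finite G] (ρ0 ρ1 ρ2 : G)
    (hgen : Subgroup.closure {ρ0, ρ1, ρ2} = ⊤)
    (hr0 : ρ0 ^ 2 = 1) (hr1 : ρ1 ^ 2 = 1) (hr2 : ρ2 ^ 2 = 1)
    (h01 : (ρ0 * ρ1) ^ 3 = 1) (h12 : (ρ1 * ρ2) ^ 6 = 1) (h02 : (ρ0 * ρ2) ^ 2 = 1)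
    (hmap : (ρ0 * ρ1 * ρ2) ^ (2 * s) = 1)
    (hG : Nat.card G = 12 * s ^ 2)
    (u v : G) (hu : u = ρ0 * (ρ1 * ρ2) ^ 2 * ρ1) (hv : v = (ρ0 * ρ1 * ρ2) ^ 2)
    : (Subgroup.closure {u ^ a, v ^ b}).normalCore = ⊥ ∧
      (Subgroup.closure {u ^ a, v ^ b}).index = 12 * a * b :=
  stmt12_general s a b ha hb hlcm G ρ0 ρ1 ρ2 hgen hr0 hr1 hr2 h01 h12 h02 hmap hG u v hu hv
end

section
/- Let s ≥ 2 and let a, b be positive integers with s = lcm(a, b) and a·b ≠ s. Then the subgroup H = ⟨u^a, v^b, ρ0ρ2⟩ of G is core-free and has index 6ab in G. -/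
set_option maxHeartbeats 1000000 in
theorem stmt13 (s a b : ℕ) (hs : 2 ≤ s) (ha : 0 < a) (hb : 0 < b)
    (hlcm : s = Nat.lcm a b) (hab : a * b ≠ s)
    (G : Type*) [Group G] [Finite G] (ρ0 ρ1 ρ2 : G)
    (hgen : Subgroup.closure {ρ0, ρ1, ρ2} = ⊤)
    (hr0 : ρ0 ^ 2 = 1) (hr1 : ρ1 ^ 2 = 1) (hr2 : ρ2 ^ 2 = 1)
    (h01 : (ρ0 * ρ1) ^ 3 = 1) (h12 : (ρ1 * ρ2) ^ 6 = 1) (h02 : (ρ0 * ρ2) ^ 2 = 1)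
    (hmap : (ρ0 * ρ1 * ρ2) ^ (2 * s) = 1)
    (hG : Nat.card G = 12 * s ^ 2)
    (u v : G) (hu : u = ρ0 * (ρ1 * ρ2) ^ 2 * ρ1) (hv : v = (ρ0 * ρ1 * ρ2) ^ 2)
    : (Subgroup.closure {u ^ a, v ^ b, ρ0 * ρ2}).normalCore = ⊥ ∧
      (Subgroup.closure {u ^ a, v ^ b, ρ0 * ρ2}).index = 6 * a * b := by
  haveI : NeZero s := ⟨by omega⟩
  haveI : Fact (1 < s) := ⟨by omega⟩
  -- basic involution facts
  have m0 : ρ0 * ρ0 = 1 := by rw [← sq]; exact hr0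
  have m1 : ρ1 * ρ1 = 1 := by rw [← sq]; exact hr1
  have m2 : ρ2 * ρ2 = 1 := by rw [← sq]; exact hr2
  have m0' : ∀ g : G, ρ0 * (ρ0 * g) = g := fun g => by rw [← mul_assoc, m0, one_mul]
  have m1' : ∀ g : G, ρ1 * (ρ1 * g) = g := fun g => by rw [← mul_assoc, m1, one_mul]
  have m2' : ∀ g : G, ρ2 * (ρ2 * g) = g := fun g => by rw [← mul_assoc, m2, one_mul]
  have i0 : ρ0⁻¹ = ρ0 := inv_eq_of_mul_eq_one_right m0
  have i1 : ρ1⁻¹ = ρ1 := inv_eq_of_mul_eq_one_right m1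
  have i2 : ρ2⁻¹ = ρ2 := inv_eq_of_mul_eq_one_right m2
  have c02p : ρ2 * ρ0 = ρ0 * ρ2 := by
    have h : (ρ0 * ρ2) * (ρ0 * ρ2) = 1 := by rw [← sq]; exact h02
    have h2 := eq_inv_of_mul_eq_one_right h
    rw [h2, mul_inv_rev, i0, i2]
  have c02p' : ∀ g : G, ρ2 * (ρ0 * g) = ρ0 * (ρ2 * g) := fun g => by
    rw [← mul_assoc, c02p, mul_assoc]
  have braidp : ρ1 * (ρ0 * ρ1) = ρ0 * (ρ1 * ρ0) := by
    have h : (ρ0 * (ρ1 * ρ0)) * (ρ1 * (ρ0 * ρ1)) = 1 := by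
      calc (ρ0 * (ρ1 * ρ0)) * (ρ1 * (ρ0 * ρ1)) = (ρ0 * ρ1) ^ 3 := by simp only [pow_succ, pow_zero, one_mul, mul_one, mul_assoc]
        _ = 1 := h01
    have h2 := eq_inv_of_mul_eq_one_left h
    rw [h2, mul_inv_rev, mul_inv_rev, i0, i1, mul_assoc]
  have braidp' : ∀ g : G, ρ1 * (ρ0 * (ρ1 * g)) = ρ0 * (ρ1 * (ρ0 * g)) := fun g => by
    have h := congrArg (· * g) braidp
    simpa only [mul_assoc] using h
  have d3p : ρ2 * (ρ1 * (ρ2 * (ρ1 * (ρ2 * ρ1)))) = ρ1 * (ρ2 * (ρ1 * (ρ2 * (ρ1 * ρ2)))) := by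
    have h : (ρ1 * ρ2) ^ 3 * (ρ1 * ρ2) ^ 3 = 1 := by
      rw [← pow_add]; exact h12
    have h2 : ((ρ1 * ρ2) ^ 3)⁻¹ = (ρ1 * ρ2) ^ 3 := inv_eq_of_mul_eq_one_right h
    calc ρ2 * (ρ1 * (ρ2 * (ρ1 * (ρ2 * ρ1)))) = ((ρ1 * ρ2) ^ 3)⁻¹ := by
          simp only [pow_succ, pow_zero, one_mul, mul_inv_rev, i1, i2, mul_assoc]
      _ = (ρ1 * ρ2) ^ 3 := h2
      _ = ρ1 * (ρ2 * (ρ1 * (ρ2 * (ρ1 * ρ2)))) := by simp only [pow_succ, pow_zero, one_mul, mul_one, mul_assoc]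
  have d3p' : ∀ g : G, ρ2 * (ρ1 * (ρ2 * (ρ1 * (ρ2 * (ρ1 * g))))) =
      ρ1 * (ρ2 * (ρ1 * (ρ2 * (ρ1 * (ρ2 * g))))) := fun g => by
    have h := congrArg (· * g) d3p
    simpa only [mul_assoc] using h
  -- conjugation identities
  have cju1 : ρ1 * u * ρ1 = v := by rw [hu, hv]; simp only [pow_succ, pow_zero, one_mul, mul_one, mul_assoc, m0, m1, m2, m0', m1', m2', c02p, c02p', braidp, braidp', d3p, d3p']
  have cjv1 : ρ1 * v * ρ1 = u := by
    rw [← cju1, ← mul_assoc, ← mul_assoc, m1, one_mul, mul_assoc, m1, mul_one]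
  have cju2 : ρ2 * u * ρ2 = u := by rw [hu]; simp only [pow_succ, pow_zero, one_mul, mul_one, mul_assoc, m0, m1, m2, m0', m1', m2', c02p, c02p', braidp, braidp', d3p, d3p']
  have cjv2' : ρ2 * v * ρ2 * v = u := by rw [hu, hv]; simp only [pow_succ, pow_zero, one_mul, mul_one, mul_assoc, m0, m1, m2, m0', m1', m2', c02p, c02p', braidp, braidp', d3p, d3p']
  have cjv2 : ρ2 * v * ρ2 = u * v⁻¹ := by rw [eq_mul_inv_iff_mul_eq]; exact cjv2'
  have hu2 : u = (ρ0 * ρ1 * ρ2) * (ρ1 * ρ2 * ρ1) := by rw [hu]; simp only [pow_succ, pow_zero, one_mul, mul_one, mul_assoc, m0, m1, m2, m0', m1', m2', c02p, c02p', braidp, braidp', d3p, d3p']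
  have W5'' : (ρ1 * ρ2 * ρ1) * v = v * (ρ1 * ρ2 * ρ1) := by rw [hv]; simp only [pow_succ, pow_zero, one_mul, mul_one, mul_assoc, m0, m1, m2, m0', m1', m2', c02p, c02p', braidp, braidp', d3p, d3p']
  have comm : u * v = v * u := by
    rw [hu2, hv]
    calc ρ0*ρ1*ρ2 * (ρ1*ρ2*ρ1) * (ρ0*ρ1*ρ2)^2
        = ρ0*ρ1*ρ2 * ((ρ1*ρ2*ρ1) * (ρ0*ρ1*ρ2)^2) := by rw [mul_assoc]
      _ = ρ0*ρ1*ρ2 * ((ρ0*ρ1*ρ2)^2 * (ρ1*ρ2*ρ1)) := by rw [← hv, W5'', hv]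
      _ = (ρ0*ρ1*ρ2)^2 * (ρ0*ρ1*ρ2 * (ρ1*ρ2*ρ1)) := by simp only [pow_succ, pow_zero, one_mul, mul_one, mul_assoc]
  have cju0' : ρ0 * u * ρ0 * u = 1 := by rw [hu]; simp only [pow_succ, pow_zero, one_mul, mul_one, mul_assoc, m0, m1, m2, m0', m1', m2', c02p, c02p', braidp, braidp', d3p, d3p']
  have cju0 : ρ0 * u * ρ0 = u⁻¹ := eq_inv_of_mul_eq_one_left cju0'
  have cjv0' : u * (ρ0 * v * ρ0) = v := by rw [hu, hv]; simp only [pow_succ, pow_zero, one_mul, mul_one, mul_assoc, m0, m1, m2, m0', m1', m2', c02p, c02p', braidp, braidp', d3p, d3p']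
  have cjv0 : ρ0 * v * ρ0 = u⁻¹ * v := by rw [eq_inv_mul_iff_mul_eq]; exact cjv0'
  -- conjugation by r = ρ0 * ρ2
  have rr : (ρ0 * ρ2) * (ρ0 * ρ2) = 1 := by rw [← sq]; exact h02
  have ir : (ρ0 * ρ2)⁻¹ = ρ0 * ρ2 := inv_eq_of_mul_eq_one_right rr
  have cc : Commute u v := comm
  have cjur : (ρ0 * ρ2) * u * (ρ0 * ρ2) = u⁻¹ := by
    have h1 : (ρ0 * ρ2) * u * (ρ0 * ρ2) = ρ0 * (ρ2 * u * ρ2) * ρ0 := by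
      simp only [mul_assoc, c02p]
    rw [h1, cju2, cju0]
  have cjvr : (ρ0 * ρ2) * v * (ρ0 * ρ2) = v⁻¹ := by
    have h1 : (ρ0 * ρ2) * v * (ρ0 * ρ2) = ρ0 * (ρ2 * v * ρ2) * ρ0 := by
      simp only [mul_assoc, c02p]
    have h2 : ρ0 * (u * v⁻¹) * ρ0 = (ρ0 * u * ρ0) * (ρ0 * v * ρ0)⁻¹ := by
      simp only [mul_inv_rev, i0, mul_assoc, m0']
    rw [h1, cjv2, h2, cju0, cjv0, mul_inv_rev, inv_inv]
    calc u⁻¹ * (v⁻¹ * u) = u⁻¹ * (u * v⁻¹) := by rw [(cc.inv_right.symm).eq]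
      _ = v⁻¹ := inv_mul_cancel_left u v⁻¹
  -- orders
  have vs : v ^ s = 1 := by rw [hv, ← pow_mul]; exact hmap
  have us : u ^ s = 1 := by
    calc u ^ s = (ρ1 * v * ρ1⁻¹) ^ s := by rw [i1, cjv1]
      _ = ρ1 * v ^ s * ρ1⁻¹ := conj_pow
      _ = 1 := by rw [vs, mul_one, i1, m1]
  -- power bridging
  have hzpow : ∀ (n : ℕ), 0 < n → ∀ g : G, g ^ n = 1 →
      ∀ m : ℤ, g ^ m = g ^ ((m : ZMod n)).val := by
    intro n hn g hg m
    haveI : NeZero n := ⟨hn.ne'⟩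
    have h1 : ((ZMod.val (m : ZMod n) : ℤ)) = m % n := ZMod.val_intCast m
    calc g ^ m = g ^ (m % ↑n + ↑n * (m / ↑n)) := by rw [Int.emod_add_mul_ediv]
      _ = g ^ (m % ↑n) * (g ^ (n : ℤ)) ^ (m / ↑n) := by rw [zpow_add, zpow_mul]
      _ = g ^ (m % ↑n) := by rw [zpow_natCast, hg, one_zpow, mul_one]
      _ = g ^ (((m : ZMod n)).val : ℤ) := by rw [h1]
      _ = g ^ ((m : ZMod n)).val := zpow_natCast g _
  have natval : ∀ x : ZMod s, ((x.val : ℕ) : ZMod s) = x := fun x => by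
    rw [ZMod.natCast_val, ZMod.cast_id]
  -- the translation map
  obtain ⟨f, hfdef⟩ : ∃ f : ZMod s × ZMod s → G,
      ∀ p : ZMod s × ZMod s, f p = u ^ (p.1).val * v ^ (p.2).val := ⟨_, fun p => rfl⟩
  have fap : ∀ p : ZMod s × ZMod s,
      f p = u ^ (((p.1).val : ℕ) : ℤ) * v ^ (((p.2).val : ℕ) : ℤ) := by
    intro p; rw [hfdef p]; simp only [zpow_natCast]
  have fz : ∀ m n : ℤ, u ^ m * v ^ n = f ((m : ZMod s), (n : ZMod s)) := by
    intro m n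
    rw [hfdef ((m : ZMod s), (n : ZMod s))]
    rw [hzpow s (by omega) u us m, hzpow s (by omega) v vs n]
  have fzz : ∀ (m n : ℤ) (p : ZMod s × ZMod s), (m : ZMod s) = p.1 → (n : ZMod s) = p.2 →
      u ^ m * v ^ n = f p := by
    intro m n p h1 h2
    rw [fz m n, h1, h2]
  have fadd : ∀ p q : ZMod s × ZMod s, f (p + q) = f p * f q := by
    intro p q
    rw [fap p, fap q]
    have e1 : u ^ (((p.1).val : ℕ) : ℤ) * v ^ (((p.2).val : ℕ) : ℤ) *
        (u ^ (((q.1).val : ℕ) : ℤ) * v ^ (((q.2).val : ℕ) : ℤ)) =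
        u ^ ((((p.1).val : ℕ) : ℤ) + (((q.1).val : ℕ) : ℤ)) *
        v ^ ((((p.2).val : ℕ) : ℤ) + (((q.2).val : ℕ) : ℤ)) := by
      rw [zpow_add, zpow_add]
      have hcomm : v ^ (((p.2).val : ℕ) : ℤ) * u ^ (((q.1).val : ℕ) : ℤ)
          = u ^ (((q.1).val : ℕ) : ℤ) * v ^ (((p.2).val : ℕ) : ℤ) :=
        ((cc.symm).zpow_zpow _ _).eq
      simp only [mul_assoc]
      rw [← mul_assoc (v ^ (((p.2).val : ℕ) : ℤ)), hcomm, mul_assoc]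
    rw [e1]
    refine (fzz _ _ _ ?_ ?_).symm
    · push_cast [natval, Prod.fst_add]; ring
    · push_cast [natval, Prod.snd_add]; ring
  have f0 : f 0 = 1 := by
    rw [hfdef 0]
    simp only [Prod.fst_zero, Prod.snd_zero, ZMod.val_zero, pow_zero, one_mul]
  have fneg : ∀ p : ZMod s × ZMod s, f (-p) = (f p)⁻¹ := by
    intro p
    have h := fadd p (-p)
    rw [add_neg_cancel, f0] at h
    exact eq_inv_of_mul_eq_one_right h.symm
  -- conjugation action on f
  have conj2 : ∀ (g x y : G), g * (x * y) * g⁻¹ = (g * x * g⁻¹) * (g * y * g⁻¹) := by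
    intro g x y; simp only [mul_assoc, inv_mul_cancel_left]
  have fc1 : ∀ p : ZMod s × ZMod s, ρ1 * f p * ρ1 = f (p.2, p.1) := by
    intro p
    calc ρ1 * f p * ρ1
        = ρ1 * (u ^ (((p.1).val : ℕ) : ℤ) * v ^ (((p.2).val : ℕ) : ℤ)) * ρ1⁻¹ := by
          rw [fap p, i1]
      _ = (ρ1 * u ^ (((p.1).val : ℕ) : ℤ) * ρ1⁻¹) * (ρ1 * v ^ (((p.2).val : ℕ) : ℤ) * ρ1⁻¹) :=
          conj2 _ _ _
      _ = (ρ1 * u * ρ1⁻¹) ^ (((p.1).val : ℕ) : ℤ) * (ρ1 * v * ρ1⁻¹) ^ (((p.2).val : ℕ) : ℤ) := by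
          rw [conj_zpow, conj_zpow]
      _ = v ^ (((p.1).val : ℕ) : ℤ) * u ^ (((p.2).val : ℕ) : ℤ) := by rw [i1, cju1, cjv1]
      _ = u ^ (((p.2).val : ℕ) : ℤ) * v ^ (((p.1).val : ℕ) : ℤ) := (cc.symm.zpow_zpow _ _).eq
      _ = f (p.2, p.1) := fzz _ _ _ (by push_cast [natval]; rfl) (by push_cast [natval]; rfl)
  have fc2 : ∀ p : ZMod s × ZMod s, ρ2 * f p * ρ2 = f (p.1 + p.2, -p.2) := by
    intro p
    calc ρ2 * f p * ρ2
        = ρ2 * (u ^ (((p.1).val : ℕ) : ℤ) * v ^ (((p.2).val : ℕ) : ℤ)) * ρ2⁻¹ := by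
          rw [fap p, i2]
      _ = (ρ2 * u * ρ2⁻¹) ^ (((p.1).val : ℕ) : ℤ) * (ρ2 * v * ρ2⁻¹) ^ (((p.2).val : ℕ) : ℤ) := by
          rw [conj2, conj_zpow, conj_zpow]
      _ = u ^ (((p.1).val : ℕ) : ℤ) * (u * v⁻¹) ^ (((p.2).val : ℕ) : ℤ) := by rw [i2, cju2, cjv2]
      _ = u ^ (((p.1).val : ℕ) : ℤ) * (u ^ (((p.2).val : ℕ) : ℤ) * v ^ (-(((p.2).val : ℕ) : ℤ))) := by
          rw [cc.inv_right.mul_zpow, zpow_neg, inv_zpow]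
      _ = u ^ ((((p.1).val : ℕ) : ℤ) + (((p.2).val : ℕ) : ℤ)) * v ^ (-(((p.2).val : ℕ) : ℤ)) := by
          rw [zpow_add, mul_assoc]
      _ = f (p.1 + p.2, -p.2) := fzz _ _ _ (by push_cast [natval]; rfl)
          (by push_cast [natval]; rfl)
  have fcr : ∀ p : ZMod s × ZMod s, (ρ0 * ρ2) * f p * (ρ0 * ρ2) = f (-p) := by
    intro p
    calc (ρ0 * ρ2) * f p * (ρ0 * ρ2)
        = (ρ0*ρ2) * (u ^ (((p.1).val : ℕ) : ℤ) * v ^ (((p.2).val : ℕ) : ℤ)) * (ρ0*ρ2)⁻¹ := by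
          rw [fap p, ir]
      _ = ((ρ0*ρ2) * u * (ρ0*ρ2)⁻¹) ^ (((p.1).val : ℕ) : ℤ) *
          ((ρ0*ρ2) * v * (ρ0*ρ2)⁻¹) ^ (((p.2).val : ℕ) : ℤ) := by
          rw [conj2, conj_zpow, conj_zpow]
      _ = u ^ (-(((p.1).val : ℕ) : ℤ)) * v ^ (-(((p.2).val : ℕ) : ℤ)) := by
          rw [ir, cjur, cjvr, inv_zpow, inv_zpow, zpow_neg, zpow_neg]
      _ = f (-p) := fzz _ _ _ (by push_cast [natval, Prod.fst_neg]; rfl)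
          (by push_cast [natval, Prod.snd_neg]; rfl)
  -- moving generators past f
  have fcm1 : ∀ p : ZMod s × ZMod s, ρ1 * f p = f (p.2, p.1) * ρ1 := by
    intro p
    have h := congrArg (· * ρ1) (fc1 p)
    simpa only [mul_assoc, m1, mul_one] using h
  have fcm2 : ∀ p : ZMod s × ZMod s, ρ2 * f p = f (p.1 + p.2, -p.2) * ρ2 := by
    intro p
    have h := congrArg (· * ρ2) (fc2 p)
    simpa only [mul_assoc, m2, mul_one] using h
  have fcmr : ∀ p : ZMod s × ZMod s, (ρ0 * ρ2) * f p = f (-p) * (ρ0 * ρ2) := by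
    intro p
    have h := congrArg (· * (ρ0 * ρ2)) (fcr p)
    simpa only [mul_assoc, rr, mul_one] using h
  -- the rotation e
  obtain ⟨e, hedef⟩ : ∃ e : G, e = ρ1 * ρ2 := ⟨_, rfl⟩
  have e6 : e ^ 6 = 1 := by rw [hedef]; exact h12
  have ez : ∀ m : ℤ, e ^ m = e ^ ((m : ZMod 6)).val := hzpow 6 (by norm_num) e e6
  have ezn : ∀ m : ℕ, e ^ m = e ^ ((m : ZMod 6)).val := by
    intro m
    have h := ez (m : ℤ)
    rw [zpow_natCast] at h
    rw [h]; norm_cast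
  have natval6 : ∀ x : ZMod 6, ((x.val : ℕ) : ZMod 6) = x := fun x => by
    rw [ZMod.natCast_val, ZMod.cast_id]
  obtain ⟨σ, hσdef⟩ : ∃ σ : ZMod s × ZMod s → ZMod s × ZMod s,
      ∀ p : ZMod s × ZMod s, σ p = (-p.2, p.1 + p.2) := ⟨_, fun p => rfl⟩
  have fce : ∀ p : ZMod s × ZMod s, e * f p = f (σ p) * e := by
    intro p
    calc e * f p = ρ1 * (f (p.1 + p.2, -p.2) * ρ2) := by
          rw [hedef, mul_assoc, fcm2 p]
      _ = (ρ1 * f (p.1 + p.2, -p.2)) * ρ2 := by rw [mul_assoc]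
      _ = f (-p.2, p.1 + p.2) * (ρ1 * ρ2) := by rw [fcm1]; simp only [mul_assoc]
      _ = f (σ p) * e := by rw [hσdef, hedef]
  have fcek : ∀ (k : ℕ) (p : ZMod s × ZMod s), e ^ k * f p = f (σ^[k] p) * e ^ k := by
    intro k
    induction k with
    | zero => intro p; simp only [pow_zero, one_mul, Function.iterate_zero, id_eq, mul_one]
    | succ n ih =>
      intro p
      calc e ^ (n+1) * f p = e ^ n * (e * f p) := by rw [pow_succ]; simp only [mul_assoc]
        _ = e ^ n * (f (σ p) * e) := by rw [fce p]
        _ = (e ^ n * f (σ p)) * e := by rw [mul_assoc]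
        _ = f (σ^[n] (σ p)) * e ^ n * e := by rw [ih (σ p)]
        _ = f (σ^[n+1] p) * e ^ (n+1) := by
            rw [Function.iterate_succ_apply, pow_succ]; simp only [mul_assoc]
  -- coset representatives
  obtain ⟨ψ, hψf, hψt⟩ : ∃ ψ : ZMod 6 × Bool → G,
      (∀ k : ZMod 6, ψ (k, false) = e ^ k.val) ∧
      (∀ k : ZMod 6, ψ (k, true) = e ^ k.val * ρ1) :=
    ⟨fun d => e ^ (d.1).val * (cond d.2 ρ1 1), fun k => by simp, fun k => rfl⟩
  have cje : ρ1 * e * ρ1 = e⁻¹ := by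
    rw [hedef, mul_inv_rev, i1, i2]
    simp only [mul_assoc, m1']
  have cjek : ∀ k : ℕ, ρ1 * e ^ k = (e ^ k)⁻¹ * ρ1 := by
    intro k
    have h : ρ1 * e ^ k * ρ1⁻¹ = (e ^ k)⁻¹ := by
      rw [← conj_pow, i1, cje, inv_pow]
    have h2 := congrArg (· * ρ1) h
    simp only [i1, mul_assoc, m1, mul_one] at h2
    simpa only [mul_assoc] using h2
  have epowneg : ∀ x : ZMod 6, (e ^ x.val)⁻¹ = e ^ (-x).val := by
    intro x
    have harg : ((-((x.val : ℕ) : ℤ) : ℤ) : ZMod 6) = -x := by push_cast [natval6]; ring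
    rw [← zpow_natCast e x.val, ← zpow_neg, ez]
    exact congrArg (fun z : ZMod 6 => e ^ z.val) harg
  have hψ1 : ∀ (k : ZMod 6) (j : Bool), ρ1 * ψ (k, j) = ψ (-k, !j) := by
    intro k j
    cases j
    · rw [Bool.not_false, hψf, hψt, cjek, epowneg]
    · rw [Bool.not_true, hψt, hψf, ← mul_assoc, cjek, epowneg, mul_assoc, m1, mul_one]
  have hψ2 : ∀ (k : ZMod 6) (j : Bool), ρ2 * ψ (k, j) = ψ (-(k + 1), !j) := by
    have h : ∀ k : ZMod 6, ρ2 * e ^ k.val = e ^ (-(k+1)).val * ρ1 := by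
      intro k
      have h1 : ρ2 * e ^ k.val = ρ1 * e ^ (k.val + 1) := by
        rw [pow_succ', hedef]
        simp only [← mul_assoc, m1]
        simp only [one_mul]
      have harg : ((-(((k.val : ℕ) : ℤ) + 1) : ℤ) : ZMod 6) = -(k+1) := by
        push_cast [natval6]; ring
      have h2 : (e ^ (k.val + 1))⁻¹ = e ^ (-(k+1)).val := by
        rw [← zpow_natCast e (k.val + 1), ← zpow_neg, ez]
        exact congrArg (fun z : ZMod 6 => e ^ z.val) (by push_cast [natval6]; ring)
      rw [h1, cjek, h2]
    intro k j
    cases j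
    · rw [Bool.not_false, hψf, hψt, h]
    · rw [Bool.not_true, hψt, hψf, ← mul_assoc, h, mul_assoc, m1, mul_one]
  have hψe : ∀ (k : ℕ) (j : ZMod 6) (c : Bool), e ^ k * ψ (j, c) = ψ (j + k, c) := by
    intro k j c
    have h : e ^ k * e ^ j.val = e ^ (j + k).val := by
      rw [← pow_add, ezn (k + j.val)]
      exact congrArg (fun z : ZMod 6 => e ^ z.val) (by push_cast [natval6]; ring)
    cases c
    · rw [hψf, hψf, ← h]
    · rw [hψt, hψt, ← mul_assoc, ← h]
  
  -- decomposition of ρ0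
  have hsq : (e^2 * ρ1) * (e^2 * ρ1) = 1 := by
    calc (e^2 * ρ1) * (e^2 * ρ1) = e^2 * ((ρ1 * e^2) * ρ1) := by simp only [mul_assoc]
      _ = e^2 * (((e^2)⁻¹ * ρ1) * ρ1) := by rw [cjek 2]
      _ = 1 := by simp only [mul_assoc, m1, mul_one, mul_inv_cancel]
  have hρ0 : ρ0 = u * (e^2 * ρ1) := by
    have h' : e^2 * (ρ1 * (e^2 * ρ1)) = 1 := by simpa only [mul_assoc] using hsq
    rw [hu, ← hedef, mul_assoc, mul_assoc, h', mul_one]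
  have hre : ρ0 * ρ2 = u * e^3 := by
    rw [hρ0, mul_assoc, mul_assoc, ← hedef, ← pow_succ]
  have f10 : f (1, 0) = u := by
    rw [hfdef]
    simp only [ZMod.val_one, ZMod.val_zero, pow_one, pow_zero, mul_one]
  -- the covering map Φ
  obtain ⟨Φ, hΦdef⟩ : ∃ Φ : (ZMod 6 × Bool) × (ZMod s × ZMod s) → G,
      ∀ x, Φ x = f x.2 * ψ x.1 := ⟨_, fun _ => rfl⟩
  have step1 : ∀ x : (ZMod 6 × Bool) × (ZMod s × ZMod s), ∃ y, Φ y = ρ1 * Φ x := by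
    rintro ⟨⟨k, j⟩, p⟩
    refine ⟨((-k, !j), (p.2, p.1)), ?_⟩
    rw [hΦdef, hΦdef]
    calc f (((-k, !j), (p.2, p.1)).2) * ψ (((-k, !j), (p.2, p.1)).1)
        = f (p.2, p.1) * ψ (-k, !j) := rfl
      _ = f (p.2, p.1) * (ρ1 * ψ (k, j)) := by rw [hψ1]
      _ = (f (p.2, p.1) * ρ1) * ψ (k, j) := by rw [mul_assoc]
      _ = (ρ1 * f p) * ψ (k, j) := by rw [fcm1]
      _ = ρ1 * (f p * ψ (k, j)) := by rw [mul_assoc]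
  have step2 : ∀ x : (ZMod 6 × Bool) × (ZMod s × ZMod s), ∃ y, Φ y = ρ2 * Φ x := by
    rintro ⟨⟨k, j⟩, p⟩
    refine ⟨((-(k+1), !j), (p.1 + p.2, -p.2)), ?_⟩
    rw [hΦdef, hΦdef]
    calc f (p.1 + p.2, -p.2) * ψ (-(k+1), !j)
        = f (p.1 + p.2, -p.2) * (ρ2 * ψ (k, j)) := by rw [hψ2]
      _ = (f (p.1 + p.2, -p.2) * ρ2) * ψ (k, j) := by rw [mul_assoc]
      _ = (ρ2 * f p) * ψ (k, j) := by rw [fcm2]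
      _ = ρ2 * (f p * ψ (k, j)) := by rw [mul_assoc]
  have step0 : ∀ x : (ZMod 6 × Bool) × (ZMod s × ZMod s), ∃ y, Φ y = ρ0 * Φ x := by
    rintro ⟨⟨k, j⟩, p⟩
    refine ⟨((-k + (2 : ℕ), !j), (1, 0) + σ^[2] (p.2, p.1)), ?_⟩
    rw [hΦdef, hΦdef]
    calc f ((1, 0) + σ^[2] (p.2, p.1)) * ψ (-k + (2 : ℕ), !j)
        = (f (1, 0) * f (σ^[2] (p.2, p.1))) * (e ^ 2 * ψ (-k, !j)) := by
          rw [fadd, hψe 2 (-k) (!j)]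
      _ = u * ((f (σ^[2] (p.2, p.1)) * e ^ 2) * ψ (-k, !j)) := by
          rw [f10]; simp only [mul_assoc]
      _ = u * ((e ^ 2 * f (p.2, p.1)) * ψ (-k, !j)) := by rw [fcek 2]
      _ = u * (e ^ 2 * (f (p.2, p.1) * (ρ1 * ψ (k, j)))) := by
          rw [hψ1]; simp only [mul_assoc]
      _ = u * (e ^ 2 * ((f (p.2, p.1) * ρ1) * ψ (k, j))) := by simp only [mul_assoc]
      _ = u * (e ^ 2 * ((ρ1 * f p) * ψ (k, j))) := by rw [fcm1]
      _ = (u * (e ^ 2 * ρ1)) * (f p * ψ (k, j)) := by simp only [mul_assoc]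
      _ = ρ0 * (f p * ψ (k, j)) := by rw [← hρ0]
  have hΦ1 : Φ (((0 : ZMod 6), false), 0) = 1 := by
    rw [hΦdef]
    show f 0 * ψ (0, false) = 1
    rw [f0, hψf, ZMod.val_zero, pow_zero, one_mul]
  have hsur : Function.Surjective Φ := by
    intro g
    have hg : g ∈ Subgroup.closure {ρ0, ρ1, ρ2} := hgen ▸ Subgroup.mem_top g
    have hg' : g ∈ Submonoid.closure ({ρ0, ρ1, ρ2} ∪ {ρ0, ρ1, ρ2}⁻¹ : Set G) := by
      rw [← Subgroup.closure_toSubmonoid]; exact hg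
    have key : ∀ x : G, x ∈ Submonoid.closure ({ρ0, ρ1, ρ2} ∪ {ρ0, ρ1, ρ2}⁻¹ : Set G) →
        ∀ h : G, (∃ y, Φ y = h) → (∃ y, Φ y = x * h) := by
      intro x hx
      induction hx using Submonoid.closure_induction with
      | mem z hz =>
        rintro h ⟨y, rfl⟩
        have hz' : z = ρ0 ∨ z = ρ1 ∨ z = ρ2 := by
          simp only [Set.mem_union, Set.mem_insert_iff, Set.mem_singleton_iff, Set.mem_inv] at hz
          rcases hz with (hz | hz | hz) | (hz | hz | hz)
          · exact Or.inl hz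
          · exact Or.inr (Or.inl hz)
          · exact Or.inr (Or.inr hz)
          · exact Or.inl (by rw [← i0, ← hz, inv_inv])
          · exact Or.inr (Or.inl (by rw [← i1, ← hz, inv_inv]))
          · exact Or.inr (Or.inr (by rw [← i2, ← hz, inv_inv]))
        rcases hz' with rfl | rfl | rfl
        · exact step0 y
        · exact step1 y
        · exact step2 y
      | one =>
        rintro h ⟨y, rfl⟩
        exact ⟨y, (one_mul _).symm⟩
      | mul x y hx hy ihx ihy =>
        rintro h hh
        obtain ⟨y1, hy1⟩ := ihy h hh
        obtain ⟨y2, hy2⟩ := ihx _ ⟨y1, hy1⟩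
        exact ⟨y2, by rw [hy2, mul_assoc]⟩
    obtain ⟨y, hy⟩ := key g hg' 1 ⟨_, hΦ1⟩
    exact ⟨y, by rw [hy, mul_one]⟩
  have hcards : Nat.card ((ZMod 6 × Bool) × (ZMod s × ZMod s)) = Nat.card G := by
    rw [hG, Nat.card_prod, Nat.card_prod, Nat.card_prod]
    simp only [Nat.card_zmod]
    have hbool : Nat.card Bool = 2 := by simp [Nat.card_eq_fintype_card]
    rw [hbool]; ring
  have hbij : Function.Bijective Φ := (Nat.bijective_iff_surjective_and_card Φ).2 ⟨hsur, hcards⟩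
  have hΦp : ∀ p : ZMod s × ZMod s, Φ (((0 : ZMod 6), false), p) = f p := by
    intro p
    rw [hΦdef]
    show f p * ψ (0, false) = f p
    rw [hψf, ZMod.val_zero, pow_zero, mul_one]
  have finj : Function.Injective f := by
    intro p q h
    have h1 : Φ (((0 : ZMod 6), false), p) = Φ (((0 : ZMod 6), false), q) := by
      rw [hΦp, hΦp, h]
    exact congrArg Prod.snd (hbij.1 h1)
  have hr3 : ρ0 * ρ2 = Φ (((3 : ZMod 6), false), (1, 0)) := by
    have hv3 : ((3 : ZMod 6)).val = 3 := rfl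
    rw [hΦdef]
    show ρ0 * ρ2 = f (1, 0) * ψ (3, false)
    rw [f10, hψf, hv3, hre]
  have hrnf : ∀ p : ZMod s × ZMod s, f p ≠ ρ0 * ρ2 := by
    intro p hp
    have h1 : Φ (((0 : ZMod 6), false), p) = Φ (((3 : ZMod 6), false), (1, 0)) := by
      rw [hΦp, hp, hr3]
    have h2 := congrArg (fun y => y.1.1) (hbij.1 h1)
    simp only at h2
    exact absurd h2 (by decide)
  
  -- arithmetic facts
  have hadvd : a ∣ s := hlcm ▸ Nat.dvd_lcm_left a b
  have hbdvd : b ∣ s := hlcm ▸ Nat.dvd_lcm_right a b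
  obtain ⟨a', ha'⟩ := hadvd
  obtain ⟨b', hb'⟩ := hbdvd
  have ha'pos : 0 < a' := by
    rcases Nat.eq_zero_or_pos a' with h | h
    · rw [h, mul_zero] at ha'; omega
    · exact h
  have hb'pos : 0 < b' := by
    rcases Nat.eq_zero_or_pos b' with h | h
    · rw [h, mul_zero] at hb'; omega
    · exact h
  have hsdiva : s / a = a' := by rw [ha']; exact Nat.mul_div_cancel_left a' ha
  have hsdivb : s / b = b' := by rw [hb']; exact Nat.mul_div_cancel_left b' hb
  have hgpos : 0 < Nat.gcd a b := Nat.gcd_pos_of_pos_left b ha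
  have hcop : Nat.Coprime a' b' := by
    have hk : Nat.gcd a b * s = a * b := by rw [hlcm]; exact Nat.gcd_mul_lcm a b
    have e1 : Nat.gcd a b * a' = b := by
      have h := hk
      rw [ha', show Nat.gcd a b * (a * a') = a * (Nat.gcd a b * a') from by ring] at h
      exact Nat.eq_of_mul_eq_mul_left ha h
    have e2 : Nat.gcd a b * b' = a := by
      have h := hk
      rw [hb', show Nat.gcd a b * (b * b') = b * (Nat.gcd a b * b') from by ring,
        mul_comm a b] at h
      exact Nat.eq_of_mul_eq_mul_left hb h
    have e1' : a' = b / Nat.gcd a b := by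
      nth_rewrite 1 [← e1]
      rw [Nat.mul_div_cancel_left _ hgpos]
    have e2' : b' = a / Nat.gcd a b := by
      nth_rewrite 1 [← e2]
      rw [Nat.mul_div_cancel_left _ hgpos]
    rw [e1', e2']
    exact (Nat.coprime_div_gcd_div_gcd hgpos).symm
  -- the subgroup of translations in H
  have hzero : ∀ z : ZMod s, z ∈ AddSubgroup.zmultiples ((a : ℕ) : ZMod s) →
      z ∈ AddSubgroup.zmultiples ((b : ℕ) : ZMod s) → z = 0 := by
    have hkill : ∀ (c c' : ℕ), c * c' = s → ∀ z : ZMod s,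
        z ∈ AddSubgroup.zmultiples ((c : ℕ) : ZMod s) → c' • z = 0 := by
      intro c c' hc z hz
      obtain ⟨k, hk⟩ := AddSubgroup.mem_zmultiples_iff.1 hz
      rw [← hk, smul_comm]
      have h3 : c' • ((c : ℕ) : ZMod s) = ((c' * c : ℕ) : ZMod s) := by
        rw [nsmul_eq_mul]; push_cast; ring
      rw [h3, mul_comm c' c, hc, ZMod.natCast_self, smul_zero]
    intro z hza hzb
    have h1 := addOrderOf_dvd_of_nsmul_eq_zero (hkill a a' ha'.symm z hza)
    have h2 := addOrderOf_dvd_of_nsmul_eq_zero (hkill b b' hb'.symm z hzb)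
    have h3 : addOrderOf z ∣ 1 := hcop ▸ Nat.dvd_gcd h1 h2
    have h4 := addOrderOf_dvd_iff_nsmul_eq_zero.1 h3
    simpa using h4
  obtain ⟨W, hW⟩ : ∃ W : AddSubgroup (ZMod s × ZMod s),
      W = (AddSubgroup.zmultiples ((a : ℕ) : ZMod s)).prod
        (AddSubgroup.zmultiples ((b : ℕ) : ZMod s)) := ⟨_, rfl⟩
  have hWmem : ∀ p : ZMod s × ZMod s, p ∈ W ↔
      p.1 ∈ AddSubgroup.zmultiples ((a : ℕ) : ZMod s) ∧
      p.2 ∈ AddSubgroup.zmultiples ((b : ℕ) : ZMod s) := by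
    intro p; rw [hW]; exact AddSubgroup.mem_prod
  have hWa : (((a : ℕ) : ZMod s), (0 : ZMod s)) ∈ W := by
    rw [hWmem]
    exact ⟨AddSubgroup.mem_zmultiples _, zero_mem _⟩
  have hWb : ((0 : ZMod s), ((b : ℕ) : ZMod s)) ∈ W := by
    rw [hWmem]
    exact ⟨zero_mem _, AddSubgroup.mem_zmultiples _⟩
  have fua : f (((a : ℕ) : ZMod s), 0) = u ^ a := by
    have h := fzz ((a : ℕ) : ℤ) 0 (((a : ℕ) : ZMod s), 0) (by push_cast; rfl) (by simp)
    rw [zpow_natCast, zpow_zero, mul_one] at h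
    exact h.symm
  have fvb : f (0, ((b : ℕ) : ZMod s)) = v ^ b := by
    have h := fzz 0 ((b : ℕ) : ℤ) (0, ((b : ℕ) : ZMod s)) (by simp) (by push_cast; rfl)
    rw [zpow_natCast, zpow_zero, one_mul] at h
    exact h.symm
  -- membership characterization of H
  have hmemf : ∀ p : ZMod s × ZMod s, p ∈ W →
      f p ∈ Subgroup.closure {u ^ a, v ^ b, ρ0 * ρ2} := by
    intro p hp
    obtain ⟨h1, h2⟩ := (hWmem p).1 hp
    obtain ⟨k, hk⟩ := AddSubgroup.mem_zmultiples_iff.1 h1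
    obtain ⟨m, hm⟩ := AddSubgroup.mem_zmultiples_iff.1 h2
    have hsplit : f p = f (p.1, 0) * f (0, p.2) := by
      rw [← fadd, Prod.mk_add_mk, add_zero, zero_add]
    have hfz1 : f (p.1, 0) = (u ^ a) ^ k := by
      have h := fzz (k * (a : ℕ)) 0 (p.1, 0)
        (by rw [← hk, zsmul_eq_mul]; push_cast; try ring) (by simp)
      rw [zpow_zero, mul_one] at h
      rw [← h, mul_comm k ((a : ℕ) : ℤ), zpow_mul, zpow_natCast]
    have hfz2 : f (0, p.2) = (v ^ b) ^ m := by
      have h := fzz 0 (m * (b : ℕ)) (0, p.2)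
        (by simp) (by rw [← hm, zsmul_eq_mul]; push_cast; try ring)
      rw [zpow_zero, one_mul] at h
      rw [← h, mul_comm m ((b : ℕ) : ℤ), zpow_mul, zpow_natCast]
    rw [hsplit, hfz1, hfz2]
    have hua : (u ^ a) ∈ ({u ^ a, v ^ b, ρ0 * ρ2} : Set G) := by simp
    have hvb : (v ^ b) ∈ ({u ^ a, v ^ b, ρ0 * ρ2} : Set G) := by simp
    exact mul_mem (zpow_mem (Subgroup.subset_closure hua) k)
      (zpow_mem (Subgroup.subset_closure hvb) m)
  have hmemr : (ρ0 * ρ2) ∈ Subgroup.closure {u ^ a, v ^ b, ρ0 * ρ2} :=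
    Subgroup.subset_closure (by simp)
  have hHsub : ∀ g ∈ Subgroup.closure {u ^ a, v ^ b, ρ0 * ρ2},
      ∃ p ∈ W, g = f p ∨ g = f p * (ρ0 * ρ2) := by
    intro g hg
    induction hg using Subgroup.closure_induction with
    | mem x hx =>
      rcases hx with rfl | rfl | rfl
      · exact ⟨(((a : ℕ) : ZMod s), 0), hWa, Or.inl fua.symm⟩
      · exact ⟨(0, ((b : ℕ) : ZMod s)), hWb, Or.inl fvb.symm⟩
      · exact ⟨0, zero_mem W, Or.inr (by rw [f0, one_mul])⟩
    | one => exact ⟨0, zero_mem W, Or.inl f0.symm⟩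
    | mul x y hx hy ihx ihy =>
      obtain ⟨p, hp, hpc⟩ := ihx
      obtain ⟨q, hq, hqc⟩ := ihy
      rcases hpc with rfl | rfl <;> rcases hqc with rfl | rfl
      · exact ⟨p + q, add_mem hp hq, Or.inl (fadd p q).symm⟩
      · refine ⟨p + q, add_mem hp hq, Or.inr ?_⟩
        rw [fadd]; simp only [mul_assoc]
      · refine ⟨p + -q, add_mem hp (neg_mem hq), Or.inr ?_⟩
        calc (f p * (ρ0 * ρ2)) * f q = f p * ((ρ0 * ρ2) * f q) := by simp only [mul_assoc]
          _ = f p * (f (-q) * (ρ0 * ρ2)) := by rw [fcmr]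
          _ = (f p * f (-q)) * (ρ0 * ρ2) := by rw [mul_assoc]
          _ = f (p + -q) * (ρ0 * ρ2) := by rw [fadd]
      · refine ⟨p + -q, add_mem hp (neg_mem hq), Or.inl ?_⟩
        calc (f p * (ρ0 * ρ2)) * (f q * (ρ0 * ρ2))
            = f p * (((ρ0 * ρ2) * f q) * (ρ0 * ρ2)) := by simp only [mul_assoc]
          _ = f p * ((f (-q) * (ρ0 * ρ2)) * (ρ0 * ρ2)) := by rw [fcmr]
          _ = f p * f (-q) := by rw [mul_assoc, rr, mul_one]
          _ = f (p + -q) := (fadd _ _).symm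
    | inv x hx ihx =>
      obtain ⟨p, hp, hpc⟩ := ihx
      rcases hpc with rfl | rfl
      · exact ⟨-p, neg_mem hp, Or.inl (fneg p).symm⟩
      · refine ⟨p, hp, Or.inr ?_⟩
        rw [mul_inv_rev, ir, ← fneg, fcmr (-p), neg_neg]
  -- cardinality of H
  have hrne : ∀ p q : ZMod s × ZMod s, f p ≠ f q * (ρ0 * ρ2) := by
    intro p q hpq
    have : f (-q + p) = ρ0 * ρ2 := by
      rw [fadd, fneg, hpq]
      simp only [mul_assoc, inv_mul_cancel_left]
    exact hrnf _ this
  have hcardH : Nat.card (Subgroup.closure {u ^ a, v ^ b, ρ0 * ρ2} : Subgroup G)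
      = Nat.card W * 2 := by
    symm
    have hbool2 : Nat.card Bool = 2 := by simp [Nat.card_eq_fintype_card]
    rw [← hbool2, ← Nat.card_prod]
    apply Nat.card_eq_of_bijective
      (f := fun x : ↥W × Bool =>
        (⟨f x.1 * (cond x.2 (ρ0 * ρ2) 1), by
          cases hx : x.2 with
          | false => simpa using hmemf x.1 x.1.2
          | true => exact mul_mem (hmemf x.1 x.1.2) hmemr⟩ :
          (Subgroup.closure {u ^ a, v ^ b, ρ0 * ρ2} : Subgroup G)))
    constructor
    · rintro ⟨⟨p, hp⟩, i⟩ ⟨⟨q, hq⟩, j⟩ hij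
      have hval := congrArg Subtype.val hij
      simp only at hval
      cases i <;> cases j
      · simp only [cond_false, mul_one] at hval
        simp [finj hval]
      · simp only [cond_false, cond_true, mul_one] at hval
        exact absurd hval (hrne p q)
      · simp only [cond_false, cond_true, mul_one] at hval
        exact absurd hval.symm (hrne q p)
      · simp only [cond_true] at hval
        have := mul_right_cancel hval
        simp [finj this]
    · rintro ⟨g, hg⟩
      obtain ⟨p, hp, hc⟩ := hHsub g hg
      rcases hc with rfl | rfl
      · exact ⟨(⟨p, hp⟩, false), by simp⟩
      · exact ⟨(⟨p, hp⟩, true), by simp⟩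
  have hcardW : Nat.card W = a' * b' := by
    rw [hW]
    rw [Nat.card_congr (AddSubgroup.prodEquiv _ _).toEquiv, Nat.card_prod]
    rw [Nat.card_zmultiples, Nat.card_zmultiples]
    rw [ZMod.addOrderOf_coe a (NeZero.ne s), ZMod.addOrderOf_coe b (NeZero.ne s)]
    rw [Nat.gcd_eq_right ⟨a', ha'⟩, Nat.gcd_eq_right ⟨b', hb'⟩, hsdiva, hsdivb]
  have hindex : (Subgroup.closure {u ^ a, v ^ b, ρ0 * ρ2}).index = 6 * a * b := by
    have hmi := Subgroup.card_mul_index (Subgroup.closure {u ^ a, v ^ b, ρ0 * ρ2})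
    rw [hcardH, hcardW, hG] at hmi
    have h12 : 12 * s ^ 2 = (a' * b' * 2) * (6 * a * b) := by
      rw [pow_two]
      nth_rewrite 1 [ha']
      nth_rewrite 1 [hb']
      ring
    rw [h12] at hmi
    exact Nat.eq_of_mul_eq_mul_left (by positivity) hmi
  
  -- the normal core is trivial
  have hNnormal : (Subgroup.closure {u ^ a, v ^ b, ρ0 * ρ2}).normalCore.Normal :=
    Subgroup.normalCore_normal _
  have hNle := Subgroup.normalCore_le (Subgroup.closure {u ^ a, v ^ b, ρ0 * ρ2})
  have hinW : ∀ q : ZMod s × ZMod s,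
      f q ∈ (Subgroup.closure {u ^ a, v ^ b, ρ0 * ρ2}).normalCore → q ∈ W := by
    intro q hq
    obtain ⟨w, hw, hc⟩ := hHsub (f q) (hNle hq)
    rcases hc with hc | hc
    · exact (finj hc) ▸ hw
    · exact absurd hc (hrne q w)
  have caseT : ∀ p : ZMod s × ZMod s,
      f p ∈ (Subgroup.closure {u ^ a, v ^ b, ρ0 * ρ2}).normalCore → p = 0 := by
    intro p hp
    have h1 := hinW p hp
    have hc1 : f (p.2, p.1) ∈ (Subgroup.closure {u ^ a, v ^ b, ρ0 * ρ2}).normalCore := by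
      have hmem := hNnormal.conj_mem (f p) hp ρ1
      have h2 : ρ1 * f p * ρ1⁻¹ = f (p.2, p.1) := by rw [i1]; exact fc1 p
      exact h2 ▸ hmem
    have h2 := hinW _ hc1
    obtain ⟨ha1, hb1⟩ := (hWmem p).1 h1
    obtain ⟨ha2, hb2⟩ := (hWmem (p.2, p.1)).1 h2
    have hz1 : p.1 = 0 := hzero p.1 ha1 hb2
    have hz2 : p.2 = 0 := hzero p.2 ha2 hb1
    have hp00 : p = ((0 : ZMod s), (0 : ZMod s)) := Prod.ext_iff.2 ⟨hz1, hz2⟩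
    exact hp00.trans Prod.mk_zero_zero
  have hNbot : (Subgroup.closure {u ^ a, v ^ b, ρ0 * ρ2}).normalCore = ⊥ := by
    rw [Subgroup.eq_bot_iff_forall]
    intro g hg
    obtain ⟨p, hpW, hc⟩ := hHsub g (hNle hg)
    rcases hc with rfl | rfl
    · rw [caseT p hg, f0]
    · exfalso
      have hu1 : u = f (1, 0) := f10.symm
      have hui : u⁻¹ = f (-(1, 0)) := by rw [fneg, f10]
      have hq1 := hNnormal.conj_mem _ hg u
      have hq2 : u * (f p * (ρ0*ρ2)) * u⁻¹ = f ((1,0) + p + (1,0)) * (ρ0*ρ2) := by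
        rw [hui, hu1]
        calc f (1,0) * (f p * (ρ0*ρ2)) * f (-(1,0))
            = f ((1,0) + p) * ((ρ0*ρ2) * f (-(1,0))) := by
              simp only [← mul_assoc]; rw [← fadd]
          _ = f ((1,0) + p) * (f (1,0) * (ρ0*ρ2)) := by rw [fcmr, neg_neg]
          _ = f ((1,0) + p + (1,0)) * (ρ0*ρ2) := by rw [← mul_assoc, ← fadd]
      rw [hq2] at hq1
      have hdiff := mul_mem hq1 (inv_mem hg)
      have rr' : ∀ g : G, (ρ0*ρ2) * ((ρ0*ρ2) * g) = g := fun g => by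
        rw [← mul_assoc, rr, one_mul]
      have hdval : (f ((1,0) + p + (1,0)) * (ρ0*ρ2)) * (f p * (ρ0*ρ2))⁻¹
          = f (((1:ZMod s),(0:ZMod s)) + (1,0)) := by
        rw [mul_inv_rev, ir, ← fneg]
        calc f ((1,0) + p + (1,0)) * (ρ0*ρ2) * ((ρ0*ρ2) * f (-p))
            = f ((1,0) + p + (1,0)) * f (-p) := by
              rw [mul_assoc, rr']
          _ = f ((1,0) + p + (1,0) + -p) := (fadd _ _).symm
          _ = f (((1:ZMod s),(0:ZMod s)) + (1,0)) := congrArg f (by abel)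
      rw [hdval] at hdiff
      have h20 := caseT _ hdiff
      have h2z : (1 : ZMod s) + 1 = 0 := by
        have := congrArg Prod.fst h20
        simpa using this
      have hcast2 : ((2:ℕ) : ZMod s) = 0 := by push_cast; rw [one_add_one_eq_two] at h2z; exact h2z
      have hdvd2 := (ZMod.natCast_eq_zero_iff 2 s).1 hcast2
      have hs2 : s = 2 := by
        have := Nat.le_of_dvd (by norm_num) hdvd2
        omega
      have h2a : a ∣ 2 := ⟨a', by rw [← hs2]; exact ha'⟩
      have h2b : b ∣ 2 := ⟨b', by rw [← hs2]; exact hb'⟩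
      have hab2 : a = 2 ∧ b = 2 := by
        rcases (Nat.dvd_prime Nat.prime_two).1 h2a with rfl | rfl <;>
          rcases (Nat.dvd_prime Nat.prime_two).1 h2b with rfl | rfl
        · rw [hs2] at hlcm; norm_num at hlcm
        · exact absurd (by rw [one_mul, hs2]) hab
        · exact absurd (by rw [mul_one, hs2]) hab
        · exact ⟨rfl, rfl⟩
      have hcasta : ((a:ℕ) : ZMod s) = 0 := by
        rw [hab2.1]; exact hcast2
      have hcastb : ((b:ℕ) : ZMod s) = 0 := by
        rw [hab2.2]; exact hcast2
      have hWzero : ∀ q : ZMod s × ZMod s, q ∈ W → q = 0 := by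
        intro q hq
        obtain ⟨h1, h2⟩ := (hWmem q).1 hq
        rw [hcasta] at h1
        rw [hcastb] at h2
        obtain ⟨k, hk⟩ := AddSubgroup.mem_zmultiples_iff.1 h1
        obtain ⟨m, hm⟩ := AddSubgroup.mem_zmultiples_iff.1 h2
        have hq1 : q.1 = 0 := by rw [← hk, smul_zero]
        have hq2 : q.2 = 0 := by rw [← hm, smul_zero]
        exact (Prod.ext_iff.2 ⟨hq1, hq2⟩).trans Prod.mk_zero_zero
      have hp0 : p = 0 := hWzero p hpW
      rw [hp0, f0, one_mul] at hg
      -- now (ρ0 * ρ2) ∈ the normal core; conjugate by ρ1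
      have e3inv : (e^3)⁻¹ = e^3 := inv_eq_of_mul_eq_one_right
        (by rw [← pow_add, show 3+3 = 6 from rfl]; exact e6)
      have hf11 : f (-1, 1) = u⁻¹ * v := by
        have h := fzz (-1) 1 (-1, 1) (by push_cast; ring) (by push_cast; ring)
        rw [zpow_neg_one, zpow_one] at h
        exact h.symm
      have hcj : ρ1 * (ρ0*ρ2) * ρ1⁻¹ = f (-1, 1) * (ρ0*ρ2) := by
        rw [i1, hre, hf11]
        calc ρ1 * (u * e^3) * ρ1 = (ρ1 * u * ρ1) * ((ρ1 * e^3) * ρ1) := by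
              simp only [mul_assoc, m1']
          _ = v * ((e^3)⁻¹ * (ρ1 * ρ1)) := by rw [cju1, cjek 3]; simp only [mul_assoc]
          _ = v * (e^3) := by rw [m1, mul_one, e3inv]
          _ = v * (u⁻¹ * (u * e^3)) := by rw [inv_mul_cancel_left]
          _ = (v * u⁻¹) * (u * e^3) := by rw [mul_assoc]
          _ = (u⁻¹ * v) * (u * e^3) := by rw [(cc.inv_left.symm).eq]
      have hccore := hNnormal.conj_mem _ hg ρ1
      rw [hcj] at hccore
      obtain ⟨w, hw, hcase⟩ := hHsub _ (hNle hccore)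
      rcases hcase with hcase | hcase
      · have hneg : f ((1 : ZMod s), (-1 : ZMod s)) = (f (-1, 1))⁻¹ := by
          rw [← fneg]
          exact congrArg f (by rw [Prod.neg_mk, neg_neg])
        have h5 : (ρ0*ρ2) = f (((1 : ZMod s), (-1 : ZMod s)) + w) := by
          rw [fadd, hneg, ← hcase]
          simp only [mul_assoc, inv_mul_cancel_left]
        exact hrnf _ h5.symm
      · have h5 : f (-1, 1) = f w := mul_right_cancel hcase
        have h6 := finj h5
        have h7 : ((-1, 1) : ZMod s × ZMod s) = 0 := hWzero _ (h6 ▸ hw)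
        have h8 : (1 : ZMod s) = 0 := by
          have := congrArg Prod.snd h7
          simpa using this
        have h9 : ((1:ℕ) : ZMod s) = 0 := by push_cast; exact h8
        have hdvd1 := (ZMod.natCast_eq_zero_iff 1 s).1 h9
        have := Nat.le_of_dvd one_pos hdvd1
        omega
  exact ⟨hNbot, hindex⟩
end

section
/- Let s ≥ 2 and suppose G acts faithfully and transitively on a finite set X of size n. If the translation subgroup T has exactly three orbits on X, then there is a positive divisor a of s such that every T-orbit has size a·s (hence n = 3as). -/
/-!
The translation subgroup `T = ⟨u, v⟩` is abelian and normal, `u ^ s = v ^ s = 1`, and `G / T` is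
a quotient of the dihedral group of order 12, so `|T| = s²` and `T` has rank two. Let `K` be the
stabilizer in `T` of a point of `X`. For a prime `p`, the elements of order dividing `p` in `K`
form a `p`-group inside `T[p]`, which has at most `p²` elements; if this `p`-group had more than
`p` elements it would be all of `T[p]`, a normal subgroup of `G` fixing a point, hence trivial by
faithfulness and transitivity. So `K` has at most `p` elements of order dividing `p` for every
`p`, which forces `K` to be cyclic; its order then divides `s`, and every `T`-orbit, having
`s² / |K|` points, has size `a * s` with `a = s / |K|`.
-/

open Subgroup MulAction

section Group

variable {G : Type*} [Group G]

theorem exists_lt_pow_eq_zpow {x : G} {n : ℕ} (hn : 0 < n) (hx : x ^ n = 1) (i : ℤ) :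
    ∃ k < n, x ^ k = x ^ i := by
  have hn' : (0 : ℤ) < n := by exact_mod_cast hn
  refine ⟨(i % n).toNat, by have := Int.emod_lt_of_pos i hn'; omega, ?_⟩
  rw [← zpow_natCast, Int.toNat_of_nonneg (Int.emod_nonneg _ hn'.ne'), ← zpow_eq_zpow_emod' _ hx]

theorem card_le_two_mul_of_dihedral_generators {x y : G} (hgen : closure {x, y} = ⊤) {n : ℕ}
    (hn : 0 < n) (hx : x ^ n = 1) (hy : y ^ 2 = 1) (hyx : y * x * y⁻¹ = x⁻¹) :
    Nat.card G ≤ 2 * n := by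
  have hyxi (i : ℤ) : y * x ^ i = x ^ (-i) * y := by
    rw [zpow_neg, ← inv_zpow, ← hyx, conj_zpow, inv_mul_cancel_right]
  have hform (g : G) : ∃ i e : ℤ, x ^ i * y ^ e = g := by
    induction (hgen ▸ mem_top g : g ∈ closure {x, y}) using closure_induction_left with
    | one => exact ⟨0, 0, by simp⟩
    | mul_left g hg q _ ih =>
      obtain ⟨i, e, rfl⟩ := ih
      rcases hg with rfl | rfl
      · exact ⟨1 + i, e, by rw [zpow_add, zpow_one, mul_assoc]⟩
      · exact ⟨-i, 1 + e, by rw [zpow_add, zpow_one, ← mul_assoc, ← hyxi, mul_assoc]⟩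
    | inv_mul_cancel g hg q _ ih =>
      obtain ⟨i, e, rfl⟩ := ih
      rcases hg with rfl | rfl
      · exact ⟨-1 + i, e, by rw [zpow_add, zpow_neg_one, mul_assoc]⟩
      · rw [inv_eq_of_mul_eq_one_right (by rwa [← sq])]
        exact ⟨-i, 1 + e, by rw [zpow_add, zpow_one, ← mul_assoc, ← hyxi, mul_assoc]⟩
  have hsurj : Function.Surjective fun ke : Fin n × Fin 2 => x ^ (ke.1 : ℕ) * y ^ (ke.2 : ℕ) := by
    intro g
    obtain ⟨i, e, rfl⟩ := hform g
    obtain ⟨k, hk, hxk⟩ := exists_lt_pow_eq_zpow hn hx i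
    obtain ⟨l, hl, hyl⟩ := exists_lt_pow_eq_zpow two_pos hy e
    exact ⟨(⟨k, hk⟩, ⟨l, hl⟩), by simp [hxk, hyl]⟩
  simpa [mul_comm] using Nat.card_le_card_of_surjective _ hsurj

theorem normal_closure_of_conj_mem [Finite G] {R S : Set G} (hR : closure R = ⊤)
    (h : ∀ r ∈ R, ∀ g ∈ S, r * g * r⁻¹ ∈ closure S) : (closure S).Normal := by
  rw [← normalizer_eq_top_iff, eq_top_iff, ← hR, closure_le]
  intro r hr
  have hconj : closure S ≤ (closure S).comap (MulAut.conj r).toMonoidHom :=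
    (closure_le _).mpr fun g hg => h r hr g hg
  exact mem_normalizer_fintype fun g hg => hconj hg

theorem isMulCommutative_closure_pair {a b : G} (hab : Commute a b) :
    IsMulCommutative (closure {a, b}) :=
  isMulCommutative_closure <| by
    rintro _ (rfl | rfl) _ (rfl | rfl)
    exacts [rfl, hab.eq, hab.symm.eq, rfl]

theorem closure_pair_subtype_eq_top (a b : G) :
    closure {(⟨a, subset_closure (by simp)⟩ : closure ({a, b} : Set G)),
      ⟨b, subset_closure (by simp)⟩} = ⊤ := by
  rw [← closure_closure_coe_preimage (k := {a, b})]
  congr 1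
  ext t
  simp [Subtype.ext_iff]

end Group

section CommGroup

variable {A : Type*} [CommGroup A]

theorem card_le_sq_of_closure_pair_eq_top {a b : A} (hgen : closure {a, b} = ⊤) {n : ℕ}
    (hn : 0 < n) (ha : a ^ n = 1) (hb : b ^ n = 1) : Nat.card A ≤ n ^ 2 := by
  have hsurj : Function.Surjective fun ij : Fin n × Fin n => a ^ (ij.1 : ℕ) * b ^ (ij.2 : ℕ) := by
    intro z
    obtain ⟨i, j, rfl⟩ := mem_closure_pair.mp (hgen ▸ mem_top z)
    obtain ⟨k, hk, hak⟩ := exists_lt_pow_eq_zpow hn ha i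
    obtain ⟨l, hl, hbl⟩ := exists_lt_pow_eq_zpow hn hb j
    exact ⟨(⟨k, hk⟩, ⟨l, hl⟩), by simp [hak, hbl]⟩
  simpa [sq] using Nat.card_le_card_of_surjective _ hsurj

variable [Finite A]

/-- The `p`-torsion has the same size as `A ⧸ Aᵖ`, which is generated by two elements of order
dividing `p`. -/
theorem card_ker_powMonoidHom_le_sq {a b : A} (hgen : closure {a, b} = ⊤) {p : ℕ} (hp : 0 < p) :
    Nat.card (powMonoidHom p : A →* A).ker ≤ p ^ 2 := by
  set f : A →* A := powMonoidHom p
  have hquot : closure {(a : A ⧸ f.range), (b : A ⧸ f.range)} = ⊤ := by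
    have := congrArg (map (QuotientGroup.mk' f.range)) hgen
    rwa [MonoidHom.map_closure, map_top_of_surjective _ (QuotientGroup.mk'_surjective _),
      Set.image_pair] at this
  have hpow (c : A) : (c : A ⧸ f.range) ^ p = 1 := (QuotientGroup.eq_one_iff _).mpr ⟨c, rfl⟩
  have hcard : Nat.card f.ker = Nat.card (A ⧸ f.range) := by
    have h := f.ker.card_mul_index
    rw [index_ker, ← f.range.card_mul_index, mul_comm] at h
    exact Nat.eq_of_mul_eq_mul_left Nat.card_pos h
  rw [hcard]
  exact card_le_sq_of_closure_pair_eq_top hquot hp (hpow a) (hpow b)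

/-- For `n = p * m`, the map `x ↦ x ^ m` sends the `n`-torsion to the `p`-torsion, with kernel
the `m`-torsion. -/
theorem card_ker_powMonoidHom_le_of_prime
    (h : ∀ p, p.Prime → Nat.card (powMonoidHom p : A →* A).ker ≤ p) {n : ℕ} (hn : 0 < n) :
    Nat.card (powMonoidHom n : A →* A).ker ≤ n := by
  induction n using Nat.strong_induction_on with
  | _ n ih =>
  rcases Nat.lt_or_ge n 2 with hn1 | hn2
  · obtain rfl : n = 1 := by omega
    simp
  have hp : n.minFac.Prime := Nat.minFac_prime (by omega)
  obtain ⟨m, hnm⟩ := Nat.minFac_dvd n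
  have hm : 0 < m := Nat.pos_of_mul_pos_left (hnm ▸ hn)
  set H := (powMonoidHom n : A →* A).ker
  set g : H →* A := (powMonoidHom m).comp H.subtype
  have hrange : g.range ≤ (powMonoidHom n.minFac : A →* A).ker := by
    rintro _ ⟨⟨x, hx⟩, rfl⟩
    have hx : x ^ n = 1 := hx
    simpa [g, ← pow_mul, mul_comm m, ← hnm] using hx
  have hker : Nat.card g.ker ≤ Nat.card (powMonoidHom m : A →* A).ker := by
    rw [← card_map_of_injective (f := H.subtype) H.subtype_injective]
    exact card_le_of_le fun _ ⟨y, hy, hyx⟩ => hyx ▸ hy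
  calc Nat.card H = Nat.card g.range * Nat.card g.ker := by
        rw [← index_ker, mul_comm, card_mul_index]
    _ ≤ n.minFac * m := Nat.mul_le_mul ((card_le_of_le hrange).trans (h _ hp))
        (hker.trans (ih m (by nlinarith [hp.two_le]) hm))
    _ = n := hnm.symm

theorem card_dvd_of_card_ker_powMonoidHom_le {s : ℕ} (hs : ∀ x : A, x ^ s = 1)
    (h : ∀ p, p.Prime → Nat.card (powMonoidHom p : A →* A).ker ≤ p) : Nat.card A ∣ s := by
  have hexp : 0 < Monoid.exponent A :=
    Monoid.exponent_pos_of_exists _ Nat.card_pos fun _ => pow_card_eq_one'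
  have hker : (powMonoidHom (Monoid.exponent A) : A →* A).ker = ⊤ :=
    eq_top_iff.mpr fun x _ => Monoid.pow_exponent_eq_one x
  have hle : Nat.card A ≤ Monoid.exponent A := by
    simpa [hker] using card_ker_powMonoidHom_le_of_prime h hexp
  rw [Nat.le_antisymm hle (Nat.le_of_dvd Nat.card_pos Group.exponent_dvd_nat_card)]
  exact Monoid.exponent_dvd_of_forall_pow_eq_one hs

end CommGroup

open scoped IsMulCommutative in
theorem card_closure_pair_le_sq {G : Type*} [Group G] {a b : G} (hab : Commute a b) {n : ℕ}
    (hn : 0 < n) (ha : a ^ n = 1) (hb : b ^ n = 1) : Nat.card (closure {a, b}) ≤ n ^ 2 := by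
  have := isMulCommutative_closure_pair hab
  exact card_le_sq_of_closure_pair_eq_top (closure_pair_subtype_eq_top a b) hn
    (Subtype.ext ha) (Subtype.ext hb)

section Action

variable {G X : Type*} [Group G] [MulAction G X]

theorem card_eq_card_orbitRel_quotient_mul {H : Type*} [Group H] [MulAction H X] [Finite X]
    {m : ℕ} (h : ∀ x : X, Nat.card (orbit H x) = m) :
    Nat.card X = Nat.card (orbitRel.Quotient H X) * m := by
  have := Fintype.ofFinite (orbitRel.Quotient H X)
  rw [Nat.card_congr (selfEquivSigmaOrbits' H X), Nat.card_sigma, Finset.sum_congr rfl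
    fun ω _ => (orbitRel.Quotient.orbit_eq_orbit_out ω Quotient.out_eq').symm ▸ h ω.out,
    Finset.sum_const, smul_eq_mul, Finset.card_univ, Nat.card_eq_fintype_card]

theorem card_orbit_smul_of_normal (N : Subgroup G) [N.Normal] (g : G) (x : X) :
    Nat.card (orbit N (g • x)) = Nat.card (orbit N x) := by
  rw [← smul_orbit_eq_orbit_smul, Nat.card_coe_set_eq, Nat.card_coe_set_eq, Set.ncard_smul_set]

theorem eq_one_of_forall_conj_mem_stabilizer [FaithfulSMul G X] [IsPretransitive G X] {x : X}
    {g : G} (h : ∀ k : G, k⁻¹ * g * k ∈ stabilizer G x) : g = 1 := by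
  refine eq_of_smul_eq_smul (α := X) fun y => ?_
  obtain ⟨k, rfl⟩ := exists_smul_eq G x y
  calc g • k • x = k • (k⁻¹ * g * k) • x := by simp [mul_smul]
    _ = (1 : G) • k • x := by rw [mem_stabilizer_iff.mp (h k), one_smul]

open scoped IsMulCommutative

variable [FaithfulSMul G X] [IsPretransitive G X] (A : Subgroup G) [A.Normal] [IsMulCommutative A]

theorem ker_powMonoidHom_eq_bot_of_le_stabilizer {x : X} {p : ℕ}
    (h : (powMonoidHom p : A →* A).ker ≤ stabilizer A x) : (powMonoidHom p : A →* A).ker = ⊥ := by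
  refine (eq_bot_iff_forall _).mpr fun t ht => Subtype.ext <|
    eq_one_of_forall_conj_mem_stabilizer (x := x) fun k => ?_
  have hconj : k⁻¹ * t * k ∈ A := by simpa using ‹A.Normal›.conj_mem t t.2 k⁻¹
  have hpow : (⟨_, hconj⟩ : A) ∈ (powMonoidHom p : A →* A).ker := by
    have ht : (t : G) ^ p = 1 := congrArg Subtype.val ht
    ext
    simpa [ht] using conj_pow (a := k⁻¹) (b := (t : G)) (i := p)
  exact h hpow

theorem card_ker_powMonoidHom_stabilizer_le [Finite A] (x : X) {p : ℕ} (hp : p.Prime)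
    (hA : Nat.card (powMonoidHom p : A →* A).ker ≤ p ^ 2) :
    Nat.card (powMonoidHom p : stabilizer A x →* stabilizer A x).ker ≤ p := by
  have := Fact.mk hp
  set K := stabilizer A x
  set Kp := (powMonoidHom p : K →* K).ker
  set Ap := (powMonoidHom p : A →* A).ker
  have hpgroup : IsPGroup p Kp := fun g => ⟨1, by rw [pow_one]; exact Subtype.ext g.2⟩
  obtain ⟨k, hk⟩ := IsPGroup.iff_card.mp hpgroup
  by_contra! hlt
  have hk2 : p ^ 2 ≤ Nat.card Kp := hk ▸ Nat.pow_le_pow_right hp.pos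
    ((Nat.pow_lt_pow_iff_right hp.one_lt).mp (by rwa [pow_one, ← hk]))
  -- a `p`-group with more than `p` elements inside `A[p]` fills all of it
  set Kp' : Subgroup A := Kp.map K.subtype
  have hcard : Nat.card Kp' = Nat.card Kp := card_map_of_injective K.subtype_injective
  have hle : Kp' ≤ Ap := by
    rintro _ ⟨t, ht, rfl⟩
    rw [MonoidHom.mem_ker]
    simpa using congrArg Subtype.val (ht : (t : K) ^ p = 1)
  have heq : Kp' = Ap := eq_of_le_of_card_ge hle (by omega)
  have hbot : Ap = ⊥ := ker_powMonoidHom_eq_bot_of_le_stabilizer A fun t ht => by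
    obtain ⟨t', _, rfl⟩ : t ∈ Kp' := by rwa [heq]
    exact t'.2
  have : Nat.card Kp = 1 := by rw [← hcard, heq, hbot, card_bot]
  have := hp.two_le
  omega

theorem exists_card_orbit_eq_mul_of_closure_pair [Finite G] {a b : G} (hab : Commute a b)
    [(closure {a, b}).Normal] {s : ℕ} (ha : a ^ s = 1) (hb : b ^ s = 1)
    (hcard : Nat.card (closure {a, b}) = s ^ 2) (x : X) :
    ∃ k, 0 < k ∧ k ∣ s ∧ Nat.card (orbit (closure {a, b}) x) = k * s := by
  set T := closure {a, b}
  have := isMulCommutative_closure_pair hab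
  have hgen := closure_pair_subtype_eq_top a b
  have hexp (t : T) : t ^ s = 1 := by
    have : ⊤ ≤ (powMonoidHom s : T →* T).ker := by
      rw [← hgen, closure_le]
      rintro _ (rfl | rfl) <;> simp [Subtype.ext_iff, ha, hb]
    exact this (mem_top t)
  obtain ⟨k, hk⟩ : Nat.card (stabilizer T x) ∣ s :=
    card_dvd_of_card_ker_powMonoidHom_le (fun t => Subtype.ext (by simp [hexp]))
      fun p hp => card_ker_powMonoidHom_stabilizer_le T x hp
        (card_ker_powMonoidHom_le_sq hgen hp.pos)
  have horbit : Nat.card (orbit T x) * Nat.card (stabilizer T x) = s ^ 2 := by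
    rw [Nat.card_coe_set_eq, ← index_stabilizer, mul_comm, card_mul_index, hcard]
  refine ⟨k, Nat.pos_of_ne_zero ?_, Dvd.intro_left _ hk.symm, ?_⟩
  · rintro rfl
    rw [hk, mul_zero, zero_pow two_ne_zero] at hcard
    exact Nat.card_pos.ne' hcard
  · have hK : 0 < Nat.card (stabilizer T x) := Nat.card_pos
    refine Nat.eq_of_mul_eq_mul_right hK ?_
    rw [horbit, sq]
    nth_rewrite 1 [hk]
    ring

end Action

section ToroidalMap

variable {G : Type*} [Group G] {ρ0 ρ1 ρ2 : G}

theorem toroidal_word_identities (hr0 : ρ0 ^ 2 = 1) (hr1 : ρ1 ^ 2 = 1) (hr2 : ρ2 ^ 2 = 1)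
    (h01 : (ρ0 * ρ1) ^ 3 = 1) (h12 : (ρ1 * ρ2) ^ 6 = 1) (h02 : (ρ0 * ρ2) ^ 2 = 1)
    {u v : G} (hu : u = ρ0 * (ρ1 * ρ2) ^ 2 * ρ1) (hv : v = (ρ0 * ρ1 * ρ2) ^ 2) :
    Commute u v ∧ ρ0 * u * ρ0⁻¹ = u⁻¹ ∧ ρ0 * v * ρ0⁻¹ = u⁻¹ * v ∧ ρ1 * u * ρ1⁻¹ = v ∧
      ρ1 * v * ρ1⁻¹ = u ∧ ρ2 * u * ρ2⁻¹ = u ∧ ρ2 * v * ρ2⁻¹ = u * v⁻¹ ∧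
      ρ2 * (ρ1 * ρ2) * ρ2⁻¹ = (ρ1 * ρ2)⁻¹ ∧ ρ0 = u * (ρ1 * ρ2) ^ 3 * ρ2 := by
  have e0 : ρ0 * ρ0 = 1 := by rwa [← sq]
  have e1 : ρ1 * ρ1 = 1 := by rwa [← sq]
  have e2 : ρ2 * ρ2 = 1 := by rwa [← sq]
  have i0 : ρ0⁻¹ = ρ0 := inv_eq_of_mul_eq_one_right e0
  have i1 : ρ1⁻¹ = ρ1 := inv_eq_of_mul_eq_one_right e1
  have i2 : ρ2⁻¹ = ρ2 := inv_eq_of_mul_eq_one_right e2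
  -- the relations as rewrite rules on right-associated words, so that `simp` normalizes words
  have t0 (x : G) : ρ0 * (ρ0 * x) = x := by rw [← mul_assoc, e0, one_mul]
  have t1 (x : G) : ρ1 * (ρ1 * x) = x := by rw [← mul_assoc, e1, one_mul]
  have t2 (x : G) : ρ2 * (ρ2 * x) = x := by rw [← mul_assoc, e2, one_mul]
  have c02 : ρ2 * ρ0 = ρ0 * ρ2 :=
    calc ρ2 * ρ0 = ρ2 * ρ0 * (ρ0 * ρ2) ^ 2 := by rw [h02, mul_one]
      _ = ρ0 * ρ2 := by simp only [sq, mul_assoc, t0, t2]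
  have c01 : ρ1 * (ρ0 * ρ1) = ρ0 * (ρ1 * ρ0) :=
    calc ρ1 * (ρ0 * ρ1) = ρ1 * ρ0 * (ρ0 * ρ1) ^ 3 * ρ1 := by rw [h01, mul_one, mul_assoc]
      _ = ρ0 * (ρ1 * ρ0) := by
          simp only [pow_succ, pow_zero, one_mul, mul_assoc, t0, t1, e1, mul_one]
  have c12 : ρ2 * (ρ1 * (ρ2 * (ρ1 * (ρ2 * ρ1)))) = ρ1 * (ρ2 * (ρ1 * (ρ2 * (ρ1 * ρ2)))) :=
    calc ρ2 * (ρ1 * (ρ2 * (ρ1 * (ρ2 * ρ1))))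
        = ρ2 * (ρ1 * (ρ2 * (ρ1 * (ρ2 * ρ1)))) * (ρ1 * ρ2) ^ 6 := by rw [h12, mul_one]
      _ = ρ1 * (ρ2 * (ρ1 * (ρ2 * (ρ1 * ρ2)))) := by
          simp only [pow_succ, pow_zero, one_mul, mul_assoc, t1, t2]
  have t02 (x : G) : ρ2 * (ρ0 * x) = ρ0 * (ρ2 * x) := by rw [← mul_assoc, c02, mul_assoc]
  have t01 (x : G) : ρ1 * (ρ0 * (ρ1 * x)) = ρ0 * (ρ1 * (ρ0 * x)) := by
    simp only [← mul_assoc] at c01 ⊢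
    rw [c01]
  have t12 (x : G) : ρ2 * (ρ1 * (ρ2 * (ρ1 * (ρ2 * (ρ1 * x))))) =
      ρ1 * (ρ2 * (ρ1 * (ρ2 * (ρ1 * (ρ2 * x))))) := by
    simp only [← mul_assoc] at c12 ⊢
    rw [c12]
  subst hu hv
  refine ⟨?_, ?_, ?_, ?_, ?_, ?_, ?_, ?_, ?_⟩ <;>
  simp only [Commute, SemiconjBy, pow_succ, pow_zero, one_mul, mul_assoc, mul_inv_rev, i0, i1, i2,
    t0, t1, t2, e0, e1, e2, t02, c02, t01, t12, c12, mul_one]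

theorem card_quotient_le_twelve_of_toroidal_generators {T : Subgroup G} [T.Normal] {u : G}
    (hgen : closure {ρ0, ρ1, ρ2} = ⊤) (hr2 : ρ2 ^ 2 = 1) (h12 : (ρ1 * ρ2) ^ 6 = 1)
    (hdih : ρ2 * (ρ1 * ρ2) * ρ2⁻¹ = (ρ1 * ρ2)⁻¹) (huT : u ∈ T)
    (hρ0 : ρ0 = u * (ρ1 * ρ2) ^ 3 * ρ2) : Nat.card (G ⧸ T) ≤ 12 := by
  set x : G ⧸ T := ↑(ρ1 * ρ2)
  set y : G ⧸ T := ↑ρ2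
  have hgen' : closure {x, y} = ⊤ := by
    have := congrArg (map (QuotientGroup.mk' T)) hgen
    rw [MonoidHom.map_closure, map_top_of_surjective _ (QuotientGroup.mk'_surjective _),
      Set.image_insert_eq, Set.image_pair] at this
    rw [eq_top_iff, ← this, closure_le]
    have hx : x ∈ closure {x, y} := subset_closure (by simp)
    have hy : y ∈ closure {x, y} := subset_closure (by simp)
    rintro _ (rfl | rfl | rfl)
    · have : (ρ0 : G ⧸ T) = x ^ 3 * y := by
        rw [hρ0, QuotientGroup.mk_mul, QuotientGroup.mk_mul, (QuotientGroup.eq_one_iff u).mpr huT,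
          one_mul, QuotientGroup.mk_pow]
      exact (this ▸ mul_mem (pow_mem hx 3) hy :)
    · have : (ρ1 : G ⧸ T) = x * y := by
        rw [← QuotientGroup.mk_mul, mul_assoc, ← sq, hr2, mul_one]
      exact (this ▸ mul_mem hx hy :)
    · exact hy
  simpa using card_le_two_mul_of_dihedral_generators hgen' (n := 6) (by norm_num)
    (by rw [← QuotientGroup.mk_pow, h12, QuotientGroup.mk_one])
    (by rw [← QuotientGroup.mk_pow, hr2, QuotientGroup.mk_one])
    (by rw [← QuotientGroup.mk_inv, ← QuotientGroup.mk_mul, ← QuotientGroup.mk_mul, hdih,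
      QuotientGroup.mk_inv])

theorem toroidal_translation_subgroup [Finite G] {s : ℕ} (hgen : closure {ρ0, ρ1, ρ2} = ⊤)
    (hr0 : ρ0 ^ 2 = 1) (hr1 : ρ1 ^ 2 = 1) (hr2 : ρ2 ^ 2 = 1)
    (h01 : (ρ0 * ρ1) ^ 3 = 1) (h12 : (ρ1 * ρ2) ^ 6 = 1) (h02 : (ρ0 * ρ2) ^ 2 = 1)
    (hmap : (ρ0 * ρ1 * ρ2) ^ (2 * s) = 1) (hG : Nat.card G = 12 * s ^ 2)
    {u v : G} (hu : u = ρ0 * (ρ1 * ρ2) ^ 2 * ρ1) (hv : v = (ρ0 * ρ1 * ρ2) ^ 2) :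
    Commute u v ∧ (closure {u, v}).Normal ∧ u ^ s = 1 ∧ v ^ s = 1 ∧
      Nat.card (closure {u, v}) = s ^ 2 := by
  obtain ⟨huv, h0u, h0v, h1u, h1v, h2u, h2v, hdih, hρ0⟩ :=
    toroidal_word_identities hr0 hr1 hr2 h01 h12 h02 hu hv
  have huT : u ∈ closure {u, v} := subset_closure (by simp)
  have hvT : v ∈ closure {u, v} := subset_closure (by simp)
  have hnormal : (closure {u, v}).Normal := normal_closure_of_conj_mem hgen <| by
    simp only [Set.mem_insert_iff, Set.mem_singleton_iff, forall_eq_or_imp, forall_eq,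
      h0u, h0v, h1u, h1v, h2u, h2v]
    exact ⟨⟨inv_mem huT, mul_mem (inv_mem huT) hvT⟩, ⟨hvT, huT⟩, huT, mul_mem huT (inv_mem hvT)⟩
  have hvs : v ^ s = 1 := by rw [hv, ← pow_mul, hmap]
  have hus : u ^ s = 1 := by rw [← h1v, conj_pow, hvs, mul_one, mul_inv_cancel]
  refine ⟨huv, hnormal, hus, hvs, le_antisymm (card_closure_pair_le_sq huv ?_ hus hvs) ?_⟩
  · exact Nat.pos_of_ne_zero fun h => by simp [h, Nat.card_pos.ne'] at hG
  · have := card_quotient_le_twelve_of_toroidal_generators hgen hr2 h12 hdih huT hρ0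
    have := card_eq_card_quotient_mul_card_subgroup (closure {u, v})
    nlinarith

end ToroidalMap

theorem stmt16_general (s : ℕ)
    (G : Type*) [Group G] [Finite G] (ρ0 ρ1 ρ2 : G)
    (hgen : Subgroup.closure {ρ0, ρ1, ρ2} = ⊤)
    (hr0 : ρ0 ^ 2 = 1) (hr1 : ρ1 ^ 2 = 1) (hr2 : ρ2 ^ 2 = 1)
    (h01 : (ρ0 * ρ1) ^ 3 = 1) (h12 : (ρ1 * ρ2) ^ 6 = 1) (h02 : (ρ0 * ρ2) ^ 2 = 1)
    (hmap : (ρ0 * ρ1 * ρ2) ^ (2 * s) = 1)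
    (hG : Nat.card G = 12 * s ^ 2)
    (u v : G) (hu : u = ρ0 * (ρ1 * ρ2) ^ 2 * ρ1) (hv : v = (ρ0 * ρ1 * ρ2) ^ 2)
    (T : Subgroup G) (hT : T = Subgroup.closure {u, v})
    (X : Type*) [Finite X] [MulAction G X]
    (hfaith : ∀ a : G, (∀ x : X, a • x = x) → a = 1)
    (htrans : ∀ x y : X, ∃ a : G, a • x = y)
    (n : ℕ) (hn : Nat.card X = n)
    (horb : Nat.card (MulAction.orbitRel.Quotient T X) = 3) :
    ∃ a : ℕ, 0 < a ∧ a ∣ s ∧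
      (∀ x : X, Nat.card (MulAction.orbit T x) = a * s) ∧ n = 3 * (a * s) := by
  obtain ⟨huv, hnormal, hus, hvs, hcard⟩ :=
    toroidal_translation_subgroup hgen hr0 hr1 hr2 h01 h12 h02 hmap hG hu hv
  subst hT hn
  have : IsPretransitive G X := ⟨htrans⟩
  have : FaithfulSMul G X := ⟨fun h => (inv_mul_eq_one.mp <| hfaith _ fun x => by
    rw [mul_smul, h, inv_smul_smul]).symm⟩
  obtain ⟨q⟩ := (Nat.card_pos_iff.mp (horb ▸ three_pos)).1
  obtain ⟨k, hk, hks, hk₀⟩ := exists_card_orbit_eq_mul_of_closure_pair huv hus hvs hcard q.out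
  have horbit (x : X) : Nat.card (orbit (closure {u, v}) x) = k * s := by
    obtain ⟨g, rfl⟩ := htrans q.out x
    rw [card_orbit_smul_of_normal, hk₀]
  exact ⟨k, hk, hks, horbit, by rw [card_eq_card_orbitRel_quotient_mul horbit, horb]⟩

theorem stmt16 (s : ℕ) (hs : 2 ≤ s)
    (G : Type*) [Group G] [Finite G] (ρ0 ρ1 ρ2 : G)
    (hgen : Subgroup.closure {ρ0, ρ1, ρ2} = ⊤)
    (hr0 : ρ0 ^ 2 = 1) (hr1 : ρ1 ^ 2 = 1) (hr2 : ρ2 ^ 2 = 1)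
    (h01 : (ρ0 * ρ1) ^ 3 = 1) (h12 : (ρ1 * ρ2) ^ 6 = 1) (h02 : (ρ0 * ρ2) ^ 2 = 1)
    (hmap : (ρ0 * ρ1 * ρ2) ^ (2 * s) = 1)
    (hG : Nat.card G = 12 * s ^ 2)
    (u v : G) (hu : u = ρ0 * (ρ1 * ρ2) ^ 2 * ρ1) (hv : v = (ρ0 * ρ1 * ρ2) ^ 2)
    (T : Subgroup G) (hT : T = Subgroup.closure {u, v})
    (X : Type*) [Finite X] [MulAction G X]
    (hfaith : ∀ a : G, (∀ x : X, a • x = x) → a = 1)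
    (htrans : ∀ x y : X, ∃ a : G, a • x = y)
    (n : ℕ) (hn : Nat.card X = n)
    (horb : Nat.card (MulAction.orbitRel.Quotient T X) = 3) :
    ∃ a : ℕ, 0 < a ∧ a ∣ s ∧
      (∀ x : X, Nat.card (MulAction.orbit T x) = a * s) ∧ n = 3 * (a * s) :=
  stmt16_general s G ρ0 ρ1 ρ2 hgen hr0 hr1 hr2 h01 h12 h02 hmap hG u v hu hv T hT X hfaith htrans n
    hn horb
end
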